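/- arXiv:2011.03865 — 7 statements merged into one kernel-verified Lean document; each statement's English description precedes it below -/
import Mathlib

section
/- Assume ℋ is generic. Then for every x ∈ 𝒫 = [0,1]^n ∩ ℋ, the vector identity ∑_{π ∈ 𝒰} P_π(x)·(v^π − x) = 0 holds in ℝ^n. -/
open Finset
open scoped Classical

/-- The `k × k` submatrix of `W` formed by the columns indexed by `S`
(taken in increasing index order), for `S` of cardinality `k`. -/
noncomputable def colMat {k n : ℕ} (W : Matrix (Fin k) (Fin n) ℝ) (S : Finset (Fin n))
    (h : S.card = k) : Matrix (Fin k) (Fin k) ℝ :=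
  Matrix.of fun a l => W a ((S.orderIsoOfFin h l : Fin n))

/-- `det W_S` for `S` of cardinality `k` (and `0` otherwise). -/
noncomputable def subDet {k n : ℕ} (W : Matrix (Fin k) (Fin n) ℝ)
    (S : Finset (Fin n)) : ℝ :=
  if h : S.card = k then (colMat W S h).det else 0

/-- `W_S⁻¹ c` for `S` of cardinality `k` (and `0` otherwise). -/
noncomputable def solveS {k n : ℕ} (W : Matrix (Fin k) (Fin n) ℝ) (S : Finset (Fin n))
    (c : Fin k → ℝ) : Fin k → ℝ :=
  if h : S.card = k then (colMat W S h)⁻¹.mulVec c else 0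

/-- The affine subspace `{x : W x = b}` is *generic*: for every `S ⊆ [n]` with
`|S| = k` and `det W_S ≠ 0` and every `B ⊆ [n] ∖ S`, the vector
`W_S⁻¹ (b − ∑_{i ∈ B} wⁱ)` has no coordinate equal to `0` or `1`. -/
def IsGeneric {k n : ℕ} (W : Matrix (Fin k) (Fin n) ℝ) (b : Fin k → ℝ) : Prop :=
  ∀ S : Finset (Fin n), S.card = k → subDet W S ≠ 0 →
    ∀ B : Finset (Fin n), Disjoint S B →
      ∀ l : Fin k, solveS W S (fun a => b a - ∑ i ∈ B, W a i) l ≠ 0 ∧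
        solveS W S (fun a => b a - ∑ i ∈ B, W a i) l ≠ 1

/-- `π = (A, S, B)` is a valid partition: `(A, S, B)` is an ordered partition of
`[n]` with `|S| = k`, `det W_S ≠ 0` and `W_S⁻¹ (b − ∑_{i ∈ B} wⁱ) ∈ (0,1)^k`. -/
def IsValidPartition {k n : ℕ} (W : Matrix (Fin k) (Fin n) ℝ) (b : Fin k → ℝ)
    (π : Finset (Fin n) × Finset (Fin n) × Finset (Fin n)) : Prop :=
  Disjoint π.1 π.2.1 ∧ Disjoint π.1 π.2.2 ∧ Disjoint π.2.1 π.2.2 ∧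
  π.1 ∪ π.2.1 ∪ π.2.2 = Finset.univ ∧ π.2.1.card = k ∧ subDet W π.2.1 ≠ 0 ∧
  ∀ l : Fin k, solveS W π.2.1 (fun a => b a - ∑ i ∈ π.2.2, W a i) l ∈ Set.Ioo (0 : ℝ) 1

/-- The Bernstein polynomial of the partition `π = (A, S, B)`:
`P_π(x) = |det W_S| · ∏_{i∈A} (1 − x i) · ∏_{i∈B} x i · ∏_{i∈S} x i (1 − x i)`. -/
noncomputable def Ppart {k n : ℕ} (W : Matrix (Fin k) (Fin n) ℝ)
    (π : Finset (Fin n) × Finset (Fin n) × Finset (Fin n)) (x : Fin n → ℝ) : ℝ :=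
  |subDet W π.2.1| * (∏ i ∈ π.1, (1 - x i)) * (∏ i ∈ π.2.2, x i) *
    ∏ i ∈ π.2.1, x i * (1 - x i)

namespace Factory
open Matrix

variable {k n : ℕ}

lemma sum_over (S : Finset (Fin n)) (hS : S.card = k) (f : Fin n → ℝ) :
    ∑ i ∈ S, f i = ∑ l : Fin k, f (S.orderIsoOfFin hS l) := by
  rw [← Finset.sum_coe_sort S f]
  exact (Equiv.sum_comp (S.orderIsoOfFin hS).toEquiv (fun i => f (i : Fin n))).symm

lemma mulVec_supported (W : Matrix (Fin k) (Fin n) ℝ) (S : Finset (Fin n))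
    (hS : S.card = k) (y : Fin n → ℝ) (hy : ∀ i, i ∉ S → y i = 0) :
    W.mulVec y = (colMat W S hS).mulVec (fun l => y (S.orderIsoOfFin hS l)) := by
  funext a
  simp only [Matrix.mulVec, dotProduct, colMat, Matrix.of_apply]
  rw [← Finset.sum_subset (Finset.subset_univ S) (by
    intro i _ hi; rw [hy i hi, mul_zero])]
  rw [sum_over S hS (fun i => W a i * y i)]

lemma det_ne_of_subDet {W : Matrix (Fin k) (Fin n) ℝ} {S : Finset (Fin n)}
    (hS : S.card = k) (hd : subDet W S ≠ 0) : (colMat W S hS).det ≠ 0 := by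
  rwa [subDet, dif_pos hS] at hd

lemma colMat_mulVec_solveS (W : Matrix (Fin k) (Fin n) ℝ) (S : Finset (Fin n))
    (hS : S.card = k) (hd : subDet W S ≠ 0) (c : Fin k → ℝ) :
    (colMat W S hS).mulVec (solveS W S c) = c := by
  rw [solveS, dif_pos hS, Matrix.mulVec_mulVec,
    Matrix.mul_nonsing_inv _ (isUnit_iff_ne_zero.2 (det_ne_of_subDet hS hd)), Matrix.one_mulVec]

/-- A kernel vector supported on `S` (with `det W_S ≠ 0`) is zero. -/
lemma uniq_zero (W : Matrix (Fin k) (Fin n) ℝ) (S : Finset (Fin n))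
    (hS : S.card = k) (hd : subDet W S ≠ 0) (y : Fin n → ℝ)
    (hker : W.mulVec y = 0) (hy : ∀ i, i ∉ S → y i = 0) : y = 0 := by
  have h1 := (mulVec_supported W S hS y hy).symm.trans hker
  have h2 : (fun l => y (S.orderIsoOfFin hS l)) = 0 := by
    have := congrArg ((colMat W S hS)⁻¹.mulVec) h1
    rwa [Matrix.mulVec_mulVec,
      Matrix.nonsing_inv_mul _ (isUnit_iff_ne_zero.2 (det_ne_of_subDet hS hd)),
      Matrix.one_mulVec, Matrix.mulVec_zero] at this
  funext i
  by_cases hi : i ∈ S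
  · have : y ((S.orderIsoOfFin hS) ((S.orderIsoOfFin hS).symm ⟨i, hi⟩)) = 0 :=
      congrFun h2 _
    simpa using this
  · exact hy i hi

lemma solve_coord (W : Matrix (Fin k) (Fin n) ℝ) (S : Finset (Fin n))
    (hS : S.card = k) (hd : subDet W S ≠ 0) (y : Fin n → ℝ) (c : Fin k → ℝ)
    (hyc : W.mulVec y = c) (hy : ∀ i, i ∉ S → y i = 0) :
    ∀ l, solveS W S c l = y (S.orderIsoOfFin hS l) := by
  intro l
  have h1 := (mulVec_supported W S hS y hy).symm.trans hyc
  rw [solveS, dif_pos hS, ← h1, Matrix.mulVec_mulVec,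
    Matrix.nonsing_inv_mul _ (isUnit_iff_ne_zero.2 (det_ne_of_subDet hS hd)),
    Matrix.one_mulVec]


/-- elementary kernel vector: value 1 at `t`, solves on `S`, zero elsewhere. -/
noncomputable def kvec (W : Matrix (Fin k) (Fin n) ℝ) (S : Finset (Fin n)) (t : Fin n) :
    Fin n → ℝ := fun i =>
  if i = t then 1
  else if h : S.card = k ∧ i ∈ S then
    solveS W S (fun a => -(W a t)) ((S.orderIsoOfFin h.1).symm ⟨i, h.2⟩)
  else 0

lemma kvec_self (W : Matrix (Fin k) (Fin n) ℝ) (S : Finset (Fin n)) (t : Fin n) :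
    kvec W S t t = 1 := by simp [kvec]

lemma kvec_zero (W : Matrix (Fin k) (Fin n) ℝ) (S : Finset (Fin n)) {t i : Fin n}
    (h1 : i ∉ S) (h2 : i ≠ t) : kvec W S t i = 0 := by
  simp only [kvec, if_neg h2]
  rw [dif_neg (by tauto)]

lemma kvec_mem (W : Matrix (Fin k) (Fin n) ℝ) {S : Finset (Fin n)} (hS : S.card = k)
    {t i : Fin n} (hi : i ∈ S) (hit : i ≠ t) :
    kvec W S t i
      = solveS W S (fun a => -(W a t)) ((S.orderIsoOfFin hS).symm ⟨i, hi⟩) := by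
  simp [kvec, hit, hS, hi]

lemma kvec_ker (W : Matrix (Fin k) (Fin n) ℝ) {S : Finset (Fin n)} (hS : S.card = k)
    (hd : subDet W S ≠ 0) {t : Fin n} (ht : t ∉ S) :
    W.mulVec (kvec W S t) = 0 := by
  have key : kvec W S t = (fun i => if h : S.card = k ∧ i ∈ S then
      solveS W S (fun a => -(W a t)) ((S.orderIsoOfFin h.1).symm ⟨i, h.2⟩) else 0)
      + Pi.single t 1 := by
    funext i
    by_cases hit : i = t
    · subst hit
      rw [kvec_self]
      have : (if h : S.card = k ∧ i ∈ S then
          solveS W S (fun a => -(W a i)) ((S.orderIsoOfFin h.1).symm ⟨i, h.2⟩) else 0) = 0 :=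
        dif_neg (by tauto)
      simp [this]
    · rw [kvec]
      simp [hit, Pi.single_eq_of_ne hit]
  rw [key, Matrix.mulVec_add]
  have h1 : W.mulVec (fun i => if h : S.card = k ∧ i ∈ S then
      solveS W S (fun a => -(W a t)) ((S.orderIsoOfFin h.1).symm ⟨i, h.2⟩) else 0)
      = fun a => -(W a t) := by
    rw [mulVec_supported W S hS _ (by intro i hi; rw [dif_neg (by tauto)])]
    have : (fun l => (fun i => if h : S.card = k ∧ i ∈ S then
        solveS W S (fun a => -(W a t)) ((S.orderIsoOfFin h.1).symm ⟨i, h.2⟩) else 0)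
        ((S.orderIsoOfFin hS l : Fin n))) = solveS W S (fun a => -(W a t)) := by
      funext l
      have hmem : ((S.orderIsoOfFin hS l : Fin n)) ∈ S := (S.orderIsoOfFin hS l).2
      beta_reduce
      rw [dif_pos ⟨hS, hmem⟩]
      have h3 : (⟨((S.orderIsoOfFin hS l : Fin n)), hmem⟩ : {x // x ∈ S})
          = S.orderIsoOfFin hS l := Subtype.ext rfl
      rw [h3, OrderIso.symm_apply_apply]
    rw [this, colMat_mulVec_solveS W S hS hd]
  rw [h1]
  funext a
  have h2 : W.mulVec (Pi.single t 1) a = W a t := by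
    simp [Matrix.mulVec_single]
  simp [h2, Pi.add_apply]

lemma abs_subDet_pos {W : Matrix (Fin k) (Fin n) ℝ} {S : Finset (Fin n)}
    (hd : subDet W S ≠ 0) : 0 < |subDet W S| := abs_pos.2 hd

/-- exchange of kernel vectors along an edge -/
lemma kvec_exchange (W : Matrix (Fin k) (Fin n) ℝ) {S : Finset (Fin n)} (hS : S.card = k)
    (hdS : subDet W S ≠ 0) {t s : Fin n} (ht : t ∉ S) (hs : s ∈ S)
    (hS' : (insert t (S.erase s)).card = k)
    (hdS' : subDet W (insert t (S.erase s)) ≠ 0) :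
    kvec W S t = kvec W S t s • kvec W (insert t (S.erase s)) s := by
  set S' := insert t (S.erase s) with hS'def
  have hst : s ≠ t := fun h => ht (h ▸ hs)
  have hsS' : s ∉ S' := by
    simp [hS'def, hst, Finset.notMem_erase]
  have hker1 := kvec_ker W hS hdS ht
  have hker2 := kvec_ker W hS' hdS' hsS'
  have key : kvec W S t - kvec W S t s • kvec W S' s = 0 := by
    apply uniq_zero W S' hS' hdS'
    · rw [Matrix.mulVec_sub, hker1, Matrix.mulVec_smul, hker2, smul_zero, sub_zero]
    · intro i hi
      by_cases his : i = s
      · subst his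
        simp [kvec_self]
      · have hit : i ≠ t := fun h => hi (h ▸ Finset.mem_insert_self t _)
        have hiS : i ∉ S := fun h => hi (Finset.mem_insert_of_mem (Finset.mem_erase.2 ⟨his, h⟩))
        simp [kvec_zero W S hiS hit, kvec_zero W S' hi his]
  have := sub_eq_zero.1 key
  exact this

/-- the determinant exchange identity `|det W_{S'}| = |kvec_s| * |det W_S|`. -/
lemma det_exchange (W : Matrix (Fin k) (Fin n) ℝ) {S : Finset (Fin n)} (hS : S.card = k)
    (hdS : subDet W S ≠ 0) {t s : Fin n} (ht : t ∉ S) (hs : s ∈ S)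
    (hS' : (insert t (S.erase s)).card = k) :
    |subDet W (insert t (S.erase s))| = |kvec W S t s| * |subDet W S| := by
  set S' := insert t (S.erase s) with hS'def
  set ι : Fin k → Fin n := fun l => ((S.orderIsoOfFin hS l : Fin n)) with hι
  set l₀ : Fin k := (S.orderIsoOfFin hS).symm ⟨s, hs⟩ with hl₀
  have hιl₀ : ι l₀ = s := by
    have h := (S.orderIsoOfFin hS).apply_symm_apply ⟨s, hs⟩
    simp only [hι, hl₀]
    exact congrArg Subtype.val h
  set F : Fin n → Fin n := id with hFid
  clear hFid F
  set F : Fin k → Fin n := Function.update ι l₀ t with hF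
  have hFval : ∀ l, l ≠ l₀ → F l = ι l := by
    intro l hl; simp [hF, Function.update_apply, hl]
  have hFl₀ : F l₀ = t := by simp [hF]
  have hιmem : ∀ l, ι l ∈ S := fun l => (S.orderIsoOfFin hS l).2
  have hιinj : Function.Injective ι := fun a b hab => by
    have : (S.orderIsoOfFin hS a) = (S.orderIsoOfFin hS b) := Subtype.ext hab
    exact (S.orderIsoOfFin hS).injective this
  have hFmem : ∀ l, F l ∈ S' := by
    intro l
    by_cases hl : l = l₀
    · subst hl; rw [hFl₀]; exact Finset.mem_insert_self t _
    · rw [hFval l hl]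
      refine Finset.mem_insert_of_mem (Finset.mem_erase.2 ⟨?_, hιmem l⟩)
      intro h
      exact hl (hιinj (h.trans hιl₀.symm))
  have hFinj : Function.Injective F := by
    intro a b hab
    by_cases ha : a = l₀ <;> by_cases hb : b = l₀
    · rw [ha, hb]
    · exfalso; rw [ha, hFl₀, hFval b hb] at hab; exact ht (hab ▸ hιmem b)
    · exfalso; rw [hb, hFl₀, hFval a ha] at hab; exact ht (hab ▸ hιmem a)
    · rw [hFval a ha, hFval b hb] at hab; exact hιinj hab
  set N : Matrix (Fin k) (Fin k) ℝ := Matrix.of fun a l => W a (F l) with hN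
  -- step 1 : N.det = -(kvec W S t s) * det (colMat W S hS)
  have hker := kvec_ker W hS hdS ht
  have hrow : (fun a => W a t) = ∑ l : Fin k, (-(kvec W S t (ι l))) • (colMat W S hS)ᵀ l := by
    funext a
    have h0 : ∑ i : Fin n, W a i * kvec W S t i = 0 := by
      have := congrFun hker a
      simpa [Matrix.mulVec, dotProduct] using this
    have h1 : ∑ i ∈ insert t S, W a i * kvec W S t i = 0 := by
      rw [Finset.sum_subset (Finset.subset_univ _) (fun i _ hi => by
        rw [kvec_zero W S (fun h => hi (Finset.mem_insert_of_mem h))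
          (fun h => hi (h ▸ Finset.mem_insert_self t S)), mul_zero])]
      exact h0
    rw [Finset.sum_insert ht, kvec_self, mul_one] at h1
    have h2 : W a t = ∑ i ∈ S, -(W a i * kvec W S t i) := by
      rw [Finset.sum_neg_distrib]; linarith
    rw [h2, sum_over S hS (fun i => -(W a i * kvec W S t i))]
    rw [Finset.sum_apply]
    refine Finset.sum_congr rfl (fun l _ => ?_)
    simp [colMat, hι]
    ring
  have hNT : Nᵀ = ((colMat W S hS)ᵀ).updateRow l₀ (fun a => W a t) := by
    funext l a
    by_cases hl : l = l₀
    · subst hl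
      simp [hN, hFl₀]
    · simp [hN, Matrix.updateRow_apply, hl, hFval l hl, colMat, hι]
  have step1 : N.det = -(kvec W S t s) * (colMat W S hS).det := by
    rw [← Matrix.det_transpose N, hNT, hrow, Matrix.det_updateRow_sum]
    rw [hιl₀, Matrix.det_transpose]
    simp
  -- step 2 : |N.det| = |det (colMat W S' hS')|
  have hcard : S'.card = k := by
    have h1 : (S.erase s).card = k - 1 := by rw [Finset.card_erase_of_mem hs, hS]
    have h2 : t ∉ S.erase s := fun h => ht (Finset.mem_of_mem_erase h)
    have hk1 : 1 ≤ k := by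
      rw [← hS]
      exact Finset.card_pos.2 ⟨s, hs⟩
    rw [hS'def, Finset.card_insert_of_notMem h2, h1]
    omega
  set g : Fin k → Fin k := fun l => (S'.orderIsoOfFin hcard).symm ⟨F l, hFmem l⟩ with hg
  have hgval : ∀ l, ((S'.orderIsoOfFin hcard (g l) : Fin n)) = F l := by
    intro l; simp [hg]
  have hginj : Function.Injective g := by
    intro a b hab
    apply hFinj
    rw [← hgval a, ← hgval b, hab]
  have hgbij : Function.Bijective g := Finite.injective_iff_bijective.1 hginj
  set gE : Equiv.Perm (Fin k) := Equiv.ofBijective g hgbij with hgE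
  have hsub : N = (colMat W S' hcard).submatrix id gE := by
    funext a l
    have h1 : gE l = g l := rfl
    have h2 := hgval l
    rw [Finset.coe_orderIsoOfFin_apply] at h2
    simp [hN, colMat, Matrix.submatrix_apply, h1, h2]
  have step2 : |N.det| = |(colMat W S' hcard).det| := by
    rw [hsub, Matrix.det_permute' gE (colMat W S' hcard), abs_mul]
    rcases Int.units_eq_one_or (Equiv.Perm.sign gE) with h | h <;>
      rw [h] <;> norm_num
  have e1 : subDet W S' = (colMat W S' hcard).det := by rw [subDet, dif_pos hcard]
  have e2 : subDet W S = (colMat W S hS).det := by rw [subDet, dif_pos hS]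
  rw [e1, e2, ← step2, step1, abs_mul, abs_neg]

lemma mulVec_indicator (W : Matrix (Fin k) (Fin n) ℝ) (B : Finset (Fin n)) :
    W.mulVec (fun i => if i ∈ B then (1:ℝ) else 0) = fun a => ∑ i ∈ B, W a i := by
  funext a
  simp only [Matrix.mulVec, dotProduct]
  simp only [mul_ite, mul_one, mul_zero]
  rw [Finset.sum_ite_mem, Finset.univ_inter]

/-- coordinates of a point of `ℋ` on `S`, with 0/1 bits off `S`, avoid `{0,1}`
    (genericity). -/
lemma coords_generic {W : Matrix (Fin k) (Fin n) ℝ} {b : Fin k → ℝ}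
    (hgen : IsGeneric W b) {S : Finset (Fin n)} (hS : S.card = k)
    (hdet : subDet W S ≠ 0) (z : Fin n → ℝ) (hz : W.mulVec z = b)
    (hbits : ∀ i, i ∉ S → z i = 0 ∨ z i = 1) :
    ∀ j ∈ S, z j ≠ 0 ∧ z j ≠ 1 := by
  classical
  set B₀ : Finset (Fin n) := Finset.univ.filter (fun i => i ∉ S ∧ z i = 1) with hB₀
  have hdisj : Disjoint S B₀ := by
    rw [Finset.disjoint_left]
    intro i hiS hiB
    exact (Finset.mem_filter.1 hiB).2.1 hiS
  have hsolve := hgen S hS hdet B₀ hdisj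
  set y : Fin n → ℝ := fun i => z i - (if i ∈ B₀ then 1 else 0) with hy
  have hyz : ∀ j ∈ S, y j = z j := by
    intro j hj
    have : j ∉ B₀ := fun h => (Finset.mem_filter.1 h).2.1 hj
    simp [hy, this]
  have hWy : W.mulVec y = fun a => b a - ∑ i ∈ B₀, W a i := by
    have : y = z - (fun i => if i ∈ B₀ then (1:ℝ) else 0) := rfl
    rw [this, Matrix.mulVec_sub, hz, mulVec_indicator]
    rfl
  have hysupp : ∀ i, i ∉ S → y i = 0 := by
    intro i hi
    rcases hbits i hi with h | h
    · have : i ∉ B₀ := by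
        intro hmem
        rw [(Finset.mem_filter.1 hmem).2.2] at h
        norm_num at h
      simp [hy, this, h]
    · have : i ∈ B₀ := Finset.mem_filter.2 ⟨Finset.mem_univ i, hi, h⟩
      simp [hy, this, h]
  have hcoord := solve_coord W S hS hdet y _ hWy hysupp
  intro j hj
  have hl := hsolve ((S.orderIsoOfFin hS).symm ⟨j, hj⟩)
  rw [hcoord ((S.orderIsoOfFin hS).symm ⟨j, hj⟩)] at hl
  have hjj : ((S.orderIsoOfFin hS) ((S.orderIsoOfFin hS).symm ⟨j, hj⟩) : Fin n) = j := by
    rw [(S.orderIsoOfFin hS).apply_symm_apply ⟨j, hj⟩]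
  rw [hjj] at hl
  rw [← hyz j hj]
  exact hl

/-- interior coordinates of the vertex of a valid partition. -/
lemma vertex_coords {W : Matrix (Fin k) (Fin n) ℝ} {b : Fin k → ℝ}
    {π : Finset (Fin n) × Finset (Fin n) × Finset (Fin n)}
    (hπ : IsValidPartition W b π) {vv : Fin n → ℝ}
    (h0 : ∀ i ∈ π.1, vv i = 0) (h1 : ∀ i ∈ π.2.2, vv i = 1)
    (hWv : W.mulVec vv = b) :
    ∀ j ∈ π.2.1, vv j ∈ Set.Ioo (0:ℝ) 1 := by
  obtain ⟨d1, d2, d3, huniv, hcard, hdet, hIoo⟩ := hπ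
  set A := π.1; set S := π.2.1; set B := π.2.2
  set y : Fin n → ℝ := fun i => vv i - (if i ∈ B then 1 else 0) with hy
  have hWy : W.mulVec y = fun a => b a - ∑ i ∈ B, W a i := by
    have : y = vv - (fun i => if i ∈ B then (1:ℝ) else 0) := rfl
    rw [this, Matrix.mulVec_sub, hWv, mulVec_indicator]
    rfl
  have hmem_split : ∀ i : Fin n, i ∈ A ∨ i ∈ S ∨ i ∈ B := by
    intro i
    have : i ∈ A ∪ S ∪ B := huniv ▸ Finset.mem_univ i
    rcases Finset.mem_union.1 this with h | h
    · rcases Finset.mem_union.1 h with h | h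
      · exact Or.inl h
      · exact Or.inr (Or.inl h)
    · exact Or.inr (Or.inr h)
  have hysupp : ∀ i, i ∉ S → y i = 0 := by
    intro i hi
    rcases hmem_split i with h | h | h
    · have hiB : i ∉ B := Finset.disjoint_left.1 d2 h
      simp [hy, h0 i h, hiB]
    · exact absurd h hi
    · simp [hy, h1 i h, h]
  have hcoord := solve_coord W S hcard hdet y _ hWy hysupp
  intro j hj
  have hl := hIoo ((S.orderIsoOfFin hcard).symm ⟨j, hj⟩)
  rw [hcoord ((S.orderIsoOfFin hcard).symm ⟨j, hj⟩)] at hl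
  have hjj : ((S.orderIsoOfFin hcard) ((S.orderIsoOfFin hcard).symm ⟨j, hj⟩) : Fin n) = j := by
    rw [(S.orderIsoOfFin hcard).apply_symm_apply ⟨j, hj⟩]
  rw [hjj] at hl
  have hjB : j ∉ B := Finset.disjoint_left.1 d3 hj
  simpa [hy, hjB] using hl

/-- decomposition of `v - x` into elementary kernel directions. -/
lemma vertex_decomp {W : Matrix (Fin k) (Fin n) ℝ} {S : Finset (Fin n)}
    (hS : S.card = k) (hdet : subDet W S ≠ 0) {vv x : Fin n → ℝ}
    (hker : W.mulVec (vv - x) = 0) :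
    vv - x = ∑ t ∈ Sᶜ, (vv t - x t) • kvec W S t := by
  have hsum : W.mulVec (∑ t ∈ Sᶜ, (vv t - x t) • kvec W S t) = 0 := by
    have hlin : W.mulVec (∑ t ∈ Sᶜ, (vv t - x t) • kvec W S t)
        = ∑ t ∈ Sᶜ, (vv t - x t) • W.mulVec (kvec W S t) := by
      simp only [← Matrix.mulVecLin_apply, map_sum, _root_.map_smul]
    rw [hlin]
    refine Finset.sum_eq_zero (fun t ht => ?_)
    rw [kvec_ker W hS hdet (Finset.mem_compl.1 ht), smul_zero]
  have hsupp : ∀ i, i ∉ S → ((vv - x) - ∑ t ∈ Sᶜ, (vv t - x t) • kvec W S t) i = 0 := by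
    intro i hi
    have hsum_i : (∑ t ∈ Sᶜ, (vv t - x t) • kvec W S t) i = vv i - x i := by
      rw [Finset.sum_apply]
      rw [Finset.sum_eq_single i]
      · simp [kvec_self]
      · intro t ht hne
        simp [kvec_zero W S hi (Ne.symm hne)]
      · intro h; exact absurd (Finset.mem_compl.2 hi) h
    simp [hsum_i]
  have h := uniq_zero W S hS hdet _ (by rw [Matrix.mulVec_sub, hker, hsum, sub_zero]) hsupp
  exact sub_eq_zero.1 h

/-- direction of the edge walk -/
noncomputable def wdir (W : Matrix (Fin k) (Fin n) ℝ) (vv : Fin n → ℝ)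
    (S : Finset (Fin n)) (t : Fin n) : Fin n → ℝ :=
  (1 - 2 * vv t) • kvec W S t

noncomputable def wtimes (W : Matrix (Fin k) (Fin n) ℝ) (vv : Fin n → ℝ)
    (S : Finset (Fin n)) (t : Fin n) : Finset ℝ :=
  ((insert t S).filter (fun j => wdir W vv S t j ≠ 0)).image
    (fun j => if 0 < wdir W vv S t j then (1 - vv j) / wdir W vv S t j
      else vv j / (-(wdir W vv S t j)))

noncomputable def wlam (W : Matrix (Fin k) (Fin n) ℝ) (vv : Fin n → ℝ)
    (S : Finset (Fin n)) (t : Fin n) : ℝ :=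
  (wtimes W vv S t).min.getD 1

noncomputable def wz (W : Matrix (Fin k) (Fin n) ℝ) (vv : Fin n → ℝ)
    (S : Finset (Fin n)) (t : Fin n) : Fin n → ℝ :=
  fun i => vv i + wlam W vv S t * wdir W vv S t i

noncomputable def wexit (W : Matrix (Fin k) (Fin n) ℝ) (vv : Fin n → ℝ)
    (S : Finset (Fin n)) (t : Fin n) : Fin n :=
  (((insert t S).filter (fun j => wz W vv S t j = 0 ∨ wz W vv S t j = 1)).min).getD t

noncomputable def wpartner (W : Matrix (Fin k) (Fin n) ℝ) (vv : Fin n → ℝ)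
    (S : Finset (Fin n)) (t : Fin n) :
    (Finset (Fin n) × Finset (Fin n) × Finset (Fin n)) × Fin n :=
  ((Finset.univ.filter (fun i => i ∉ (insert t S).erase (wexit W vv S t) ∧ wz W vv S t i ≠ 1),
    (insert t S).erase (wexit W vv S t),
    Finset.univ.filter (fun i => i ∉ (insert t S).erase (wexit W vv S t) ∧ wz W vv S t i = 1)),
   wexit W vv S t)

lemma min_getD {α : Type*} [LinearOrder α] (s : Finset α) (hne : s.Nonempty) (c : α) :
    (s.min).getD c = s.min' hne := by
  rw [← Finset.coe_min' hne]
  rfl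

set_option maxHeartbeats 1200000 in
lemma walk_spec {W : Matrix (Fin k) (Fin n) ℝ} {b : Fin k → ℝ}
    (hgen : IsGeneric W b)
    {A S B : Finset (Fin n)} (hπ : IsValidPartition W b (A, S, B))
    {vv : Fin n → ℝ} (h0 : ∀ i ∈ A, vv i = 0) (h1 : ∀ i ∈ B, vv i = 1)
    (hWv : W.mulVec vv = b) {t : Fin n} (ht : t ∉ S) :
    IsValidPartition W b (wpartner W vv S t).1 ∧
    (wexit W vv S t ∈ insert t S ∧ kvec W S t (wexit W vv S t) ≠ 0) ∧
    (∀ u : Fin n → ℝ, (∀ i ∈ (wpartner W vv S t).1.1, u i = 0) →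
      (∀ i ∈ (wpartner W vv S t).1.2.2, u i = 1) → W.mulVec u = b →
      u = wz W vv S t) ∧
    0 < wlam W vv S t ∧
    wz W vv S t (wexit W vv S t)
      = (if 0 < (1 - 2 * vv t) * kvec W S t (wexit W vv S t) then 1 else 0) ∧
    (∀ lam' : ℝ, 0 < lam' →
      (∀ j, vv j + lam' * wdir W vv S t j ∈ Set.Icc (0:ℝ) 1) →
      (∃ j, wdir W vv S t j ≠ 0 ∧
        (vv j + lam' * wdir W vv S t j = 0 ∨ vv j + lam' * wdir W vv S t j = 1)) →
      lam' = wlam W vv S t) := by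
  obtain ⟨d1, d2, d3, huniv, hS, hdS, hIoo⟩ := hπ
  have hmem_split : ∀ i : Fin n, i ∈ A ∨ i ∈ S ∨ i ∈ B := by
    intro i
    have h : i ∈ A ∪ S ∪ B := huniv ▸ Finset.mem_univ i
    rcases Finset.mem_union.1 h with h | h
    · rcases Finset.mem_union.1 h with h | h
      · exact Or.inl h
      · exact Or.inr (Or.inl h)
    · exact Or.inr (Or.inr h)
  have hbits : ∀ i, i ∉ S → vv i = 0 ∨ vv i = 1 := by
    intro i hi
    rcases hmem_split i with h | h | h
    · exact Or.inl (h0 i h)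
    · exact absurd h hi
    · exact Or.inr (h1 i h)
  have hvIoo : ∀ j ∈ S, vv j ∈ Set.Ioo (0:ℝ) 1 :=
    vertex_coords ⟨d1, d2, d3, huniv, hS, hdS, hIoo⟩ h0 h1 hWv
  have hcube : ∀ i, (0:ℝ) ≤ vv i ∧ vv i ≤ 1 := by
    intro i
    by_cases hi : i ∈ S
    · exact ⟨le_of_lt (hvIoo i hi).1, le_of_lt (hvIoo i hi).2⟩
    · rcases hbits i hi with h | h <;> rw [h] <;> norm_num
  set ε : ℝ := 1 - 2 * vv t with hεdef
  have hvt : vv t = 0 ∨ vv t = 1 := hbits t ht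
  have hε : ε = 1 ∨ ε = -1 := by
    rcases hvt with h | h
    · left; rw [hεdef, h]; ring
    · right; rw [hεdef, h]; ring
  have hεne : ε ≠ 0 := by rcases hε with h | h <;> rw [h] <;> norm_num
  have hdeq : ∀ i, wdir W vv S t i = ε * kvec W S t i := fun i => rfl
  have hdt : wdir W vv S t t = ε := by rw [hdeq, kvec_self, mul_one]
  have hdoff : ∀ i, i ∉ insert t S → wdir W vv S t i = 0 := by
    intro i hi
    rw [hdeq, kvec_zero W S (fun h => hi (Finset.mem_insert_of_mem h))
      (fun h => hi (h ▸ Finset.mem_insert_self t S)), mul_zero]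
  set timeF : Fin n → ℝ :=
    fun j => if 0 < wdir W vv S t j then (1 - vv j) / wdir W vv S t j
      else vv j / (-(wdir W vv S t j)) with htimeF
  have hTF : ∀ j, timeF j = if 0 < wdir W vv S t j then (1 - vv j) / wdir W vv S t j
      else vv j / (-(wdir W vv S t j)) := fun _ => rfl
  set Mov : Finset (Fin n) := (insert t S).filter (fun j => wdir W vv S t j ≠ 0) with hMov
  have htMov : t ∈ Mov :=
    Finset.mem_filter.2 ⟨Finset.mem_insert_self t S, by rw [hdt]; exact hεne⟩
  have hwtimes : wtimes W vv S t = Mov.image timeF := rfl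
  have hTne : (wtimes W vv S t).Nonempty :=
    ⟨timeF t, by rw [hwtimes]; exact Finset.mem_image.2 ⟨t, htMov, rfl⟩⟩
  have hlam : wlam W vv S t = (wtimes W vv S t).min' hTne := by
    rw [wlam, min_getD]
  set lam : ℝ := wlam W vv S t with hlamdef
  have hTpos : ∀ j ∈ Mov, 0 < timeF j := by
    intro j hj
    obtain ⟨hjD, hdj⟩ := Finset.mem_filter.1 hj
    rcases Finset.mem_insert.1 hjD with hjt | hjS
    · rw [hTF j, hjt]
      rcases hvt with h | h
      · have he1 : ε = 1 := by rw [hεdef, h]; ring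
        simp only [hdt, he1, h]
        norm_num
      · have he1 : ε = -1 := by rw [hεdef, h]; ring
        simp only [hdt, he1, h]
        norm_num
    · have hvj := hvIoo j hjS
      rw [hTF j]
      by_cases hdj0 : 0 < wdir W vv S t j
      · rw [if_pos hdj0]
        exact div_pos (by linarith [hvj.2]) hdj0
      · rw [if_neg hdj0]
        have : wdir W vv S t j < 0 := lt_of_le_of_ne (not_lt.1 hdj0) hdj
        exact div_pos hvj.1 (by linarith)
  have hlam_le : ∀ j ∈ Mov, lam ≤ timeF j := by
    intro j hj
    rw [hlam]
    exact Finset.min'_le _ _ (by rw [hwtimes]; exact Finset.mem_image_of_mem timeF hj)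
  obtain ⟨j₀, hj₀Mov, hj₀⟩ : ∃ j₀ ∈ Mov, timeF j₀ = lam := by
    have hmem := Finset.min'_mem _ hTne
    rw [← hlam, hwtimes] at hmem
    obtain ⟨j, hj, he⟩ := Finset.mem_image.1 hmem
    exact ⟨j, hj, he⟩
  have hlampos : 0 < lam := hj₀ ▸ hTpos j₀ hj₀Mov
  have hzdef : ∀ i, wz W vv S t i = vv i + lam * wdir W vv S t i := fun i => rfl
  have hzIcc : ∀ j, 0 ≤ wz W vv S t j ∧ wz W vv S t j ≤ 1 := by
    intro j
    by_cases hdj : wdir W vv S t j = 0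
    · rw [hzdef, hdj, mul_zero, add_zero]; exact hcube j
    · have hjD : j ∈ insert t S := by
        by_contra hc; exact hdj (hdoff j hc)
      have hjMov : j ∈ Mov := Finset.mem_filter.2 ⟨hjD, hdj⟩
      have hle := hlam_le j hjMov
      rw [hTF j] at hle
      rw [hzdef]
      rcases hcube j with ⟨hj0, hj1⟩
      by_cases hdj0 : 0 < wdir W vv S t j
      · rw [if_pos hdj0] at hle
        have h2 : lam * wdir W vv S t j ≤ 1 - vv j := by
          rw [← le_div_iff₀ hdj0] at *
          exact hle
        constructor
        · nlinarith
        · linarith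
      · rw [if_neg hdj0] at hle
        have hneg : wdir W vv S t j < 0 := lt_of_le_of_ne (not_lt.1 hdj0) hdj
        have h2 : lam * (-(wdir W vv S t j)) ≤ vv j := by
          rw [← le_div_iff₀ (by linarith : (0:ℝ) < -(wdir W vv S t j))] at *
          exact hle
        constructor
        · nlinarith
        · nlinarith
  have hzj₀ : wz W vv S t j₀ = 0 ∨ wz W vv S t j₀ = 1 := by
    obtain ⟨hjD, hdj⟩ := Finset.mem_filter.1 hj₀Mov
    rw [hTF j₀] at hj₀
    rw [hzdef]
    by_cases hdj0 : 0 < wdir W vv S t j₀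
    · rw [if_pos hdj0] at hj₀
      right
      rw [← hj₀, div_mul_cancel₀ _ (ne_of_gt hdj0)]
      ring
    · rw [if_neg hdj0] at hj₀
      left
      have hneg : wdir W vv S t j₀ < 0 := lt_of_le_of_ne (not_lt.1 hdj0) hdj
      rw [← hj₀, div_mul_eq_mul_div, mul_div_assoc, div_neg, div_self hdj]
      ring
  set Exiters : Finset (Fin n) :=
    (insert t S).filter (fun j => wz W vv S t j = 0 ∨ wz W vv S t j = 1) with hExdef
  have hEne : Exiters.Nonempty :=
    ⟨j₀, Finset.mem_filter.2 ⟨(Finset.mem_filter.1 hj₀Mov).1, hzj₀⟩⟩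
  have hsdef : wexit W vv S t = Exiters.min' hEne := by
    rw [wexit, min_getD]
  set s : Fin n := wexit W vv S t with hsdef2
  have hsE : s ∈ Exiters := by rw [hsdef]; exact Finset.min'_mem _ _
  obtain ⟨hsD, hzs⟩ := Finset.mem_filter.1 hsE
  have hds : wdir W vv S t s ≠ 0 := by
    rcases Finset.mem_insert.1 hsD with hst | hsS
    · rw [hst, hdt]; exact hεne
    · intro hzero
      have : wz W vv S t s = vv s := by rw [hzdef, hzero, mul_zero, add_zero]
      have hIs := hvIoo s hsS
      rcases hzs with h | h <;> rw [this] at h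
      · exact absurd h (ne_of_gt hIs.1)
      · exact absurd h (ne_of_lt hIs.2)
  have hkvs : kvec W S t s ≠ 0 := by
    intro h; exact hds (by rw [hdeq, h, mul_zero])
  set S' : Finset (Fin n) := (insert t S).erase s with hS'def
  have hcardD : (insert t S).card = k + 1 := by
    rw [Finset.card_insert_of_notMem ht, hS]
  have hS' : S'.card = k := by
    rw [hS'def, Finset.card_erase_of_mem hsD, hcardD]
    omega
  have hdS' : subDet W S' ≠ 0 := by
    by_cases hst : s = t
    · have : S' = S := by rw [hS'def, hst, Finset.erase_insert ht]
      rw [this]; exact hdS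
    · have hsS : s ∈ S := (Finset.mem_insert.1 hsD).resolve_left hst
      have hform : S' = insert t (S.erase s) := by
        rw [hS'def]
        ext i
        simp only [Finset.mem_erase, Finset.mem_insert]
        constructor
        · rintro ⟨his, (hit | hiS)⟩
          · exact Or.inl hit
          · exact Or.inr ⟨his, hiS⟩
        · rintro (hit | ⟨his, hiS⟩)
          · exact ⟨by rw [hit]; exact fun h => hst h.symm, Or.inl hit⟩
          · exact ⟨his, Or.inr hiS⟩
      intro hzero
      have hdex := det_exchange W hS hdS ht hsS (hform ▸ hS')
      rw [← hform, hzero, abs_zero] at hdex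
      have h1 : 0 < |kvec W S t s| := abs_pos.2 hkvs
      have h2 : 0 < |subDet W S| := abs_pos.2 hdS
      nlinarith
  have hzb : W.mulVec (wz W vv S t) = b := by
    have heq : wz W vv S t = vv + lam • wdir W vv S t := by
      funext i; rw [hzdef]; rfl
    have hWd : W.mulVec (wdir W vv S t) = 0 := by
      have : wdir W vv S t = ε • kvec W S t := rfl
      rw [this, Matrix.mulVec_smul, kvec_ker W hS hdS ht, smul_zero]
    rw [heq, Matrix.mulVec_add, Matrix.mulVec_smul, hWd, smul_zero, add_zero, hWv]
  have hbitsz : ∀ i, i ∉ S' → wz W vv S t i = 0 ∨ wz W vv S t i = 1 := by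
    intro i hi
    by_cases his : i = s
    · rw [his]; exact hzs
    · have hiD : i ∉ insert t S := by
        intro hmem
        exact hi (Finset.mem_erase.2 ⟨his, hmem⟩)
      have : wz W vv S t i = vv i := by rw [hzdef, hdoff i hiD, mul_zero, add_zero]
      rw [this]
      exact hbits i (fun h => hiD (Finset.mem_insert_of_mem h))
  have hgenS' := coords_generic hgen hS' hdS' (wz W vv S t) hzb hbitsz
  have hzIoo : ∀ j ∈ S', wz W vv S t j ∈ Set.Ioo (0:ℝ) 1 := by
    intro j hj
    obtain ⟨hne0, hne1⟩ := hgenS' j hj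
    obtain ⟨hge, hle⟩ := hzIcc j
    exact ⟨lt_of_le_of_ne hge (Ne.symm hne0), lt_of_le_of_ne hle hne1⟩
  -- the two filter sets
  set A' : Finset (Fin n) :=
    Finset.univ.filter (fun i => i ∉ S' ∧ wz W vv S t i ≠ 1) with hA'def
  set B' : Finset (Fin n) :=
    Finset.univ.filter (fun i => i ∉ S' ∧ wz W vv S t i = 1) with hB'def
  have hwp : wpartner W vv S t = ((A', S', B'), s) := rfl
  -- validity of the new partition
  have hvalid : IsValidPartition W b (A', S', B') := by
    refine ⟨?_, ?_, ?_, ?_, hS', hdS', ?_⟩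
    · rw [Finset.disjoint_left]
      intro i hiA hiS
      exact (Finset.mem_filter.1 hiA).2.1 hiS
    · rw [Finset.disjoint_left]
      intro i hiA hiB
      exact (Finset.mem_filter.1 hiA).2.2 (Finset.mem_filter.1 hiB).2.2
    · rw [Finset.disjoint_left]
      intro i hiS hiB
      exact (Finset.mem_filter.1 hiB).2.1 hiS
    · ext i
      simp only [Finset.mem_univ, iff_true]
      by_cases hiS : i ∈ S'
      · exact Finset.mem_union_left _ (Finset.mem_union_right _ hiS)
      · by_cases hz1 : wz W vv S t i = 1
        · exact Finset.mem_union_right _ (Finset.mem_filter.2 ⟨Finset.mem_univ i, hiS, hz1⟩)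
        · exact Finset.mem_union_left _ (Finset.mem_union_left _
            (Finset.mem_filter.2 ⟨Finset.mem_univ i, hiS, hz1⟩))
    · -- solveS in Ioo
      set y : Fin n → ℝ := fun i => wz W vv S t i - (if i ∈ B' then 1 else 0) with hydef
      have hyS' : ∀ j ∈ S', y j = wz W vv S t j := by
        intro j hj
        have : j ∉ B' := fun h => (Finset.mem_filter.1 h).2.1 hj
        simp [hydef, this]
      have hWy : W.mulVec y = fun a => b a - ∑ i ∈ B', W a i := by
        have : y = wz W vv S t - (fun i => if i ∈ B' then (1:ℝ) else 0) := rfl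
        rw [this, Matrix.mulVec_sub, hzb, mulVec_indicator]
        rfl
      have hysupp : ∀ i, i ∉ S' → y i = 0 := by
        intro i hi
        rcases hbitsz i hi with h | h
        · have hiB : i ∉ B' := by
            intro hmem
            rw [(Finset.mem_filter.1 hmem).2.2] at h
            norm_num at h
          simp [hydef, hiB, h]
        · have hiB : i ∈ B' := Finset.mem_filter.2 ⟨Finset.mem_univ i, hi, h⟩
          simp [hydef, hiB, h]
      intro l
      have hcoord := solve_coord W S' hS' hdS' y _ hWy hysupp l
      rw [hcoord]
      have hmem : ((S'.orderIsoOfFin hS' l : Fin n)) ∈ S' := (S'.orderIsoOfFin hS' l).2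
      rw [hyS' _ hmem]
      exact hzIoo _ hmem
  -- uniqueness of the vertex
  have huniq : ∀ u : Fin n → ℝ, (∀ i ∈ A', u i = 0) → (∀ i ∈ B', u i = 1) →
      W.mulVec u = b → u = wz W vv S t := by
    intro u hu0 hu1 hWu
    have hkery : W.mulVec (u - wz W vv S t) = 0 := by
      rw [Matrix.mulVec_sub, hWu, hzb, sub_self]
    have hsupp : ∀ i, i ∉ S' → (u - wz W vv S t) i = 0 := by
      intro i hi
      by_cases hz1 : wz W vv S t i = 1
      · have hiB : i ∈ B' := Finset.mem_filter.2 ⟨Finset.mem_univ i, hi, hz1⟩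
        simp [hu1 i hiB, hz1]
      · have hiA : i ∈ A' := Finset.mem_filter.2 ⟨Finset.mem_univ i, hi, hz1⟩
        have hz0 : wz W vv S t i = 0 := (hbitsz i hi).resolve_right hz1
        simp [hu0 i hiA, hz0]
    have := uniq_zero W S' hS' hdS' _ hkery hsupp
    exact sub_eq_zero.1 this
  -- the sign fact
  have hsign : wz W vv S t s = (if 0 < ε * kvec W S t s then 1 else 0) := by
    have hdseq : wdir W vv S t s = ε * kvec W S t s := hdeq s
    by_cases hpos : 0 < ε * kvec W S t s
    · rw [if_pos hpos]
      have : vv s < wz W vv S t s := by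
        rw [hzdef, hdseq]
        nlinarith
      rcases hzs with h | h
      · exfalso
        rcases hcube s with ⟨hc0, _⟩
        rw [h] at this
        linarith
      · exact h
    · rw [if_neg hpos]
      have hneg : ε * kvec W S t s < 0 :=
        lt_of_le_of_ne (not_lt.1 hpos) (by rw [← hdseq]; exact hds)
      have : wz W vv S t s < vv s := by
        rw [hzdef, hdseq]
        nlinarith
      rcases hzs with h | h
      · exact h
      · exfalso
        rcases hcube s with ⟨_, hc1⟩
        rw [h] at this
        linarith
  -- the characterization of lam
  have hchar : ∀ lam' : ℝ, 0 < lam' →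
      (∀ j, vv j + lam' * wdir W vv S t j ∈ Set.Icc (0:ℝ) 1) →
      (∃ j, wdir W vv S t j ≠ 0 ∧
        (vv j + lam' * wdir W vv S t j = 0 ∨ vv j + lam' * wdir W vv S t j = 1)) →
      lam' = lam := by
    intro lam' hpos hIcc ⟨j, hdj, hbound⟩
    by_contra hne'
    rcases lt_or_gt_of_ne hne' with hlt | hgt
    · -- lam' < lam : strict interior, contradiction with hbound
      have hjD : j ∈ insert t S := by by_contra hc; exact hdj (hdoff j hc)
      have hjMov : j ∈ Mov := Finset.mem_filter.2 ⟨hjD, hdj⟩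
      rcases hcube j with ⟨hj0, hj1⟩
      obtain ⟨hz0, hz1⟩ := hzIcc j
      rw [hzdef] at hz0 hz1
      by_cases hdj0 : 0 < wdir W vv S t j
      · have hlt1 : vv j + lam' * wdir W vv S t j < vv j + lam * wdir W vv S t j := by
          nlinarith
        have hgt0 : 0 < vv j + lam' * wdir W vv S t j := by nlinarith
        rcases hbound with h | h <;> linarith
      · have hneg : wdir W vv S t j < 0 := lt_of_le_of_ne (not_lt.1 hdj0) hdj
        have hgt0 : vv j + lam * wdir W vv S t j < vv j + lam' * wdir W vv S t j := by
          nlinarith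
        have hlt1 : vv j + lam' * wdir W vv S t j < 1 := by nlinarith
        rcases hbound with h | h <;> linarith
    · -- lam < lam' : coordinate s exits the cube
      have hIs := hIcc s
      rw [Set.mem_Icc] at hIs
      by_cases hdj0 : 0 < wdir W vv S t s
      · have hz1 : wz W vv S t s = 1 := by
          rw [hsign, if_pos (by rw [← hdeq]; exact hdj0)]
        rw [hzdef] at hz1
        have : 1 < vv s + lam' * wdir W vv S t s := by nlinarith
        linarith [hIs.2]
      · have hneg : wdir W vv S t s < 0 := lt_of_le_of_ne (not_lt.1 hdj0) hds
        have hz0 : wz W vv S t s = 0 := by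
          rw [hsign, if_neg (by rw [← hdeq]; exact hdj0)]
        rw [hzdef] at hz0
        have : vv s + lam' * wdir W vv S t s < 0 := by nlinarith
        linarith [hIs.1]
  refine ⟨by rw [hwp]; exact hvalid, ⟨hsD, hkvs⟩, ?_, hlampos, hsign, hchar⟩
  intro u hu0 hu1 hWu
  rw [hwp] at hu0 hu1
  exact huniq u hu0 hu1 hWu

lemma wpartner_snd (W : Matrix (Fin k) (Fin n) ℝ) (vv : Fin n → ℝ) (S : Finset (Fin n))
    (t : Fin n) : (wpartner W vv S t).2 = wexit W vv S t := rfl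

lemma wpartner_S (W : Matrix (Fin k) (Fin n) ℝ) (vv : Fin n → ℝ) (S : Finset (Fin n))
    (t : Fin n) :
    (wpartner W vv S t).1.2.1 = (insert t S).erase (wexit W vv S t) := rfl

lemma wpartner_A (W : Matrix (Fin k) (Fin n) ℝ) (vv : Fin n → ℝ) (S : Finset (Fin n))
    (t : Fin n) :
    (wpartner W vv S t).1.1 = Finset.univ.filter
      (fun i => i ∉ (insert t S).erase (wexit W vv S t) ∧ wz W vv S t i ≠ 1) := rfl

lemma wpartner_B (W : Matrix (Fin k) (Fin n) ℝ) (vv : Fin n → ℝ) (S : Finset (Fin n))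
    (t : Fin n) :
    (wpartner W vv S t).1.2.2 = Finset.univ.filter
      (fun i => i ∉ (insert t S).erase (wexit W vv S t) ∧ wz W vv S t i = 1) := rfl

lemma wz_off (W : Matrix (Fin k) (Fin n) ℝ) (vv : Fin n → ℝ) (S : Finset (Fin n))
    (t : Fin n) {i : Fin n} (hi : i ∉ insert t S) : wz W vv S t i = vv i := by
  have h1 : kvec W S t i = 0 := kvec_zero W S
    (fun h => hi (Finset.mem_insert_of_mem h)) (fun h => hi (h ▸ Finset.mem_insert_self t S))
  show vv i + wlam W vv S t * wdir W vv S t i = vv i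
  have h2 : wdir W vv S t i = (1 - 2 * vv t) * kvec W S t i := rfl
  rw [h2, h1, mul_zero, mul_zero, add_zero]

lemma erase_insert_ne {S : Finset (Fin n)} {t s : Fin n} (hst : s ≠ t) :
    (insert t S).erase s = insert t (S.erase s) := by
  ext i
  simp only [Finset.mem_erase, Finset.mem_insert]
  constructor
  · rintro ⟨his, (hit | hiS)⟩
    · exact Or.inl hit
    · exact Or.inr ⟨his, hiS⟩
  · rintro (hit | ⟨his, hiS⟩)
    · exact ⟨by rw [hit]; exact fun h => hst h.symm, Or.inl hit⟩
    · exact ⟨his, Or.inr hiS⟩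

lemma ppart_factor (W : Matrix (Fin k) (Fin n) ℝ) (x : Fin n → ℝ)
    {A₀ S₀ B₀ : Finset (Fin n)} {τ : Fin n} {w : ℝ}
    (hAB : Disjoint A₀ B₀) (hτS : τ ∉ S₀)
    (hcase : (τ ∈ A₀ ∧ w = 0) ∨ (τ ∈ B₀ ∧ w = 1)) :
    Ppart W (A₀, S₀, B₀) x * (w - x τ)
      = -(1 - 2*w) * |subDet W S₀| *
        ((∏ i ∈ A₀.erase τ, (1 - x i)) * (∏ i ∈ B₀.erase τ, x i)
          * ∏ i ∈ insert τ S₀, x i * (1 - x i)) := by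
  show |subDet W S₀| * (∏ i ∈ A₀, (1 - x i)) * (∏ i ∈ B₀, x i) *
      (∏ i ∈ S₀, x i * (1 - x i)) * (w - x τ) = _
  rw [Finset.prod_insert hτS]
  rcases hcase with ⟨hτA, hw⟩ | ⟨hτB, hw⟩
  · have hτB : τ ∉ B₀ := Finset.disjoint_left.1 hAB hτA
    rw [← Finset.mul_prod_erase A₀ _ hτA, Finset.erase_eq_of_notMem hτB, hw]
    ring
  · have hτA : τ ∉ A₀ := Finset.disjoint_right.1 hAB hτB
    rw [← Finset.mul_prod_erase B₀ _ hτB, Finset.erase_eq_of_notMem hτA, hw]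
    ring

lemma cancel_pair {W : Matrix (Fin k) (Fin n) ℝ} {b : Fin k → ℝ}
    (hgen : IsGeneric W b)
    {A S B : Finset (Fin n)} (hπ : IsValidPartition W b (A, S, B))
    {vv : Fin n → ℝ} (h0 : ∀ i ∈ A, vv i = 0) (h1 : ∀ i ∈ B, vv i = 1)
    (hWv : W.mulVec vv = b) {t : Fin n} (ht : t ∉ S) {uu : Fin n → ℝ}
    (hu0 : ∀ i ∈ (wpartner W vv S t).1.1, uu i = 0)
    (hu1 : ∀ i ∈ (wpartner W vv S t).1.2.2, uu i = 1)
    (hWu : W.mulVec uu = b) (x : Fin n → ℝ) :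
    (Ppart W (A, S, B) x * (vv t - x t)) • kvec W S t
      + (Ppart W (wpartner W vv S t).1 x *
          (uu (wpartner W vv S t).2 - x (wpartner W vv S t).2))
          • kvec W (wpartner W vv S t).1.2.1 (wpartner W vv S t).2 = 0 := by
  obtain ⟨hvalidσ, ⟨hsD, hkvs⟩, huniqσ, hlampos, hsign, hchar⟩ :=
    walk_spec hgen hπ h0 h1 hWv ht
  obtain ⟨d1, d2, d3, huniv, hS, hdS, hIoo⟩ := hπ
  have hmem_split : ∀ i : Fin n, i ∈ A ∨ i ∈ S ∨ i ∈ B := by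
    intro i
    have h : i ∈ A ∪ S ∪ B := huniv ▸ Finset.mem_univ i
    rcases Finset.mem_union.1 h with h | h
    · rcases Finset.mem_union.1 h with h | h
      · exact Or.inl h
      · exact Or.inr (Or.inl h)
    · exact Or.inr (Or.inr h)
  have huu : uu = wz W vv S t := huniqσ uu hu0 hu1 hWu
  have htAB : t ∈ A ∨ t ∈ B := by
    rcases hmem_split t with h | h | h
    · exact Or.inl h
    · exact absurd h ht
    · exact Or.inr h
  have hvt : vv t = 0 ∨ vv t = 1 := by
    rcases htAB with h | h
    · exact Or.inl (h0 t h)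
    · exact Or.inr (h1 t h)
  have hε1 : (1 - 2 * vv t) = 1 ∨ (1 - 2 * vv t) = -1 := by
    rcases hvt with h | h <;> rw [h] <;> norm_num
  have hεne : (1 - 2 * vv t) ≠ 0 := by
    rcases hε1 with h | h <;> rw [h] <;> norm_num
  -- abbreviations
  have hsS' : wexit W vv S t ∉ (insert t S).erase (wexit W vv S t) :=
    Finset.notMem_erase _ _
  have hzsbits : wz W vv S t (wexit W vv S t) = 0 ∨ wz W vv S t (wexit W vv S t) = 1 := by
    rw [hsign]
    by_cases hp : 0 < (1 - 2 * vv t) * kvec W S t (wexit W vv S t)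
    · rw [if_pos hp]; right; rfl
    · rw [if_neg hp]; left; rfl
  obtain ⟨dA'S', dA'B', dS'B', huniv', hS', hdS', hIoo'⟩ := hvalidσ
  -- Claim 1
  have e1 := ppart_factor W x d2 ht (by
    rcases htAB with h | h
    · exact Or.inl ⟨h, h0 t h⟩
    · exact Or.inr ⟨h, h1 t h⟩)
  rw [show vv t - x t = vv t - x t from rfl] at e1
  -- Claim 2
  have hAmem : ∀ i, i ∈ (wpartner W vv S t).1.1 ↔
      (i ∉ (insert t S).erase (wexit W vv S t) ∧ wz W vv S t i ≠ 1) := by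
    intro i
    rw [wpartner_A]
    simp [Finset.mem_filter]
  have hBmem : ∀ i, i ∈ (wpartner W vv S t).1.2.2 ↔
      (i ∉ (insert t S).erase (wexit W vv S t) ∧ wz W vv S t i = 1) := by
    intro i
    rw [wpartner_B]
    simp [Finset.mem_filter]
  have hcase2 : (wexit W vv S t ∈ (wpartner W vv S t).1.1 ∧ wz W vv S t (wexit W vv S t) = 0)
      ∨ (wexit W vv S t ∈ (wpartner W vv S t).1.2.2 ∧ wz W vv S t (wexit W vv S t) = 1) := by
    rcases hzsbits with h | h
    · left
      refine ⟨(hAmem _).2 ⟨hsS', ?_⟩, h⟩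
      rw [h]; norm_num
    · right
      exact ⟨(hBmem _).2 ⟨hsS', h⟩, h⟩
  have e2 := ppart_factor W x (dA'B') (by
      rw [wpartner_S]; exact hsS' : (wpartner W vv S t).2 ∉ (wpartner W vv S t).1.2.1)
    (w := wz W vv S t (wexit W vv S t)) (by
      rcases hcase2 with ⟨hm, hv'⟩ | ⟨hm, hv'⟩
      · exact Or.inl ⟨hm, hv'⟩
      · exact Or.inr ⟨hm, hv'⟩)
  have e2' : Ppart W (wpartner W vv S t).1 x *
      (wz W vv S t (wexit W vv S t) - x (wexit W vv S t))
      = -(1 - 2 * wz W vv S t (wexit W vv S t)) *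
        |subDet W ((insert t S).erase (wexit W vv S t))| *
        ((∏ i ∈ (wpartner W vv S t).1.1.erase (wexit W vv S t), (1 - x i)) *
          (∏ i ∈ (wpartner W vv S t).1.2.2.erase (wexit W vv S t), x i) *
          ∏ i ∈ insert (wexit W vv S t) ((insert t S).erase (wexit W vv S t)),
            x i * (1 - x i)) := e2
  have hbits : ∀ i, i ∉ S → vv i = 0 ∨ vv i = 1 := by
    intro i hi
    rcases hmem_split i with h | h | h
    · exact Or.inl (h0 i h)
    · exact absurd h hi
    · exact Or.inr (h1 i h)
  -- product identifications
  have q1 : insert (wexit W vv S t) ((insert t S).erase (wexit W vv S t)) = insert t S :=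
    Finset.insert_erase hsD
  have hoff : ∀ i, i ∉ (insert t S).erase (wexit W vv S t) → i ≠ wexit W vv S t →
      i ∉ insert t S := by
    intro i hi his hmem
    exact hi (Finset.mem_erase.2 ⟨his, hmem⟩)
  have q2 : (wpartner W vv S t).1.1.erase (wexit W vv S t) = A.erase t := by
    ext i
    simp only [Finset.mem_erase]
    rw [hAmem i]
    constructor
    · rintro ⟨his, hiS', hz1⟩
      have hiD : i ∉ insert t S := hoff i hiS' his
      have hzv : wz W vv S t i = vv i := wz_off W vv S t hiD
      have hiS : i ∉ S := fun h => hiD (Finset.mem_insert_of_mem h)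
      have hit : i ≠ t := fun h => hiD (h ▸ Finset.mem_insert_self t S)
      rcases hmem_split i with h | h | h
      · exact ⟨hit, h⟩
      · exact absurd h hiS
      · exact absurd (hzv.trans (h1 i h)) hz1
    · rintro ⟨hit, hiA⟩
      have hiS : i ∉ S := Finset.disjoint_left.1 d1 hiA
      have hiD : i ∉ insert t S := by
        intro hmem
        rcases Finset.mem_insert.1 hmem with h | h
        · exact hit h
        · exact hiS h
      have his : i ≠ wexit W vv S t := by
        intro h
        exact hiD (h ▸ hsD)
      have hzv : wz W vv S t i = vv i := wz_off W vv S t hiD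
      refine ⟨his, fun h => hiD (Finset.mem_of_mem_erase h), ?_⟩
      rw [hzv, h0 i hiA]
      norm_num
  have q3 : (wpartner W vv S t).1.2.2.erase (wexit W vv S t) = B.erase t := by
    ext i
    simp only [Finset.mem_erase]
    rw [hBmem i]
    constructor
    · rintro ⟨his, hiS', hz1⟩
      have hiD : i ∉ insert t S := hoff i hiS' his
      have hzv : wz W vv S t i = vv i := wz_off W vv S t hiD
      have hiS : i ∉ S := fun h => hiD (Finset.mem_insert_of_mem h)
      have hit : i ≠ t := fun h => hiD (h ▸ Finset.mem_insert_self t S)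
      rcases hmem_split i with h | h | h
      · exfalso
        rw [hzv, h0 i h] at hz1
        norm_num at hz1
      · exact absurd h hiS
      · exact ⟨hit, h⟩
    · rintro ⟨hit, hiB⟩
      have hiS : i ∉ S := Finset.disjoint_left.1 (Finset.disjoint_left.2
        (fun {a} ha hb => Finset.disjoint_left.1 d3 hb ha)) hiB
      have hiD : i ∉ insert t S := by
        intro hmem
        rcases Finset.mem_insert.1 hmem with h | h
        · exact hit h
        · exact hiS h
      have his : i ≠ wexit W vv S t := by
        intro h
        exact hiD (h ▸ hsD)
      have hzv : wz W vv S t i = vv i := wz_off W vv S t hiD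
      exact ⟨his, fun h => hiD (Finset.mem_of_mem_erase h), hzv.trans (h1 i hiB)⟩
  -- kvec and determinant relations
  have hS'card : ((insert t S).erase (wexit W vv S t)).card = k := by
    have := hS'
    rwa [wpartner_S] at this
  have hdS'' : subDet W ((insert t S).erase (wexit W vv S t)) ≠ 0 := by
    have := hdS'
    rwa [wpartner_S] at this
  have hkrel : kvec W S t = kvec W S t (wexit W vv S t) •
      kvec W ((insert t S).erase (wexit W vv S t)) (wexit W vv S t) := by
    by_cases hst : wexit W vv S t = t
    · rw [hst, kvec_self, Finset.erase_insert ht, one_smul]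
    · have hsS : wexit W vv S t ∈ S := (Finset.mem_insert.1 hsD).resolve_left hst
      rw [erase_insert_ne hst]
      exact kvec_exchange W hS hdS ht hsS
        ((erase_insert_ne hst) ▸ hS'card) ((erase_insert_ne hst) ▸ hdS'')
  have hdrel : |subDet W ((insert t S).erase (wexit W vv S t))|
      = |kvec W S t (wexit W vv S t)| * |subDet W S| := by
    by_cases hst : wexit W vv S t = t
    · rw [hst, kvec_self, Finset.erase_insert ht, abs_one, one_mul]
    · have hsS : wexit W vv S t ∈ S := (Finset.mem_insert.1 hsD).resolve_left hst
      rw [erase_insert_ne hst]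
      exact det_exchange W hS hdS ht hsS ((erase_insert_ne hst) ▸ hS'card)
  -- the sign identity
  have hkey : (1 - 2 * vv t) * kvec W S t (wexit W vv S t)
      = -((1 - 2 * wz W vv S t (wexit W vv S t)) * |kvec W S t (wexit W vv S t)|) := by
    by_cases hp : 0 < (1 - 2 * vv t) * kvec W S t (wexit W vv S t)
    · rw [hsign, if_pos hp]
      have habs : |(1 - 2 * vv t) * kvec W S t (wexit W vv S t)|
          = |kvec W S t (wexit W vv S t)| := by
        rw [abs_mul]
        rcases hε1 with h | h <;> rw [h] <;> norm_num
      rw [← habs, abs_of_pos hp]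
      ring
    · have hn : (1 - 2 * vv t) * kvec W S t (wexit W vv S t) < 0 :=
        lt_of_le_of_ne (not_lt.1 hp) (mul_ne_zero hεne hkvs)
      rw [hsign, if_neg hp]
      have habs : |(1 - 2 * vv t) * kvec W S t (wexit W vv S t)|
          = |kvec W S t (wexit W vv S t)| := by
        rw [abs_mul]
        rcases hε1 with h | h <;> rw [h] <;> norm_num
      rw [← habs, abs_of_neg hn]
      ring
  -- final assembly
  rw [wpartner_S, wpartner_snd, huu, hkrel, smul_smul, ← add_smul]
  rw [e1, e2', q1, q2, q3, hdrel]
  have hz : -(1 - 2 * vv t) * |subDet W S| *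
        ((∏ i ∈ A.erase t, (1 - x i)) * (∏ i ∈ B.erase t, x i) *
          ∏ i ∈ insert t S, x i * (1 - x i)) * kvec W S t (wexit W vv S t) +
      -(1 - 2 * wz W vv S t (wexit W vv S t)) *
        (|kvec W S t (wexit W vv S t)| * |subDet W S|) *
        ((∏ i ∈ A.erase t, (1 - x i)) * (∏ i ∈ B.erase t, x i) *
          ∏ i ∈ insert t S, x i * (1 - x i)) = 0 := by
    linear_combination (-(|subDet W S| * ((∏ i ∈ A.erase t, (1 - x i)) *
      (∏ i ∈ B.erase t, x i) * ∏ i ∈ insert t S, x i * (1 - x i)))) * hkey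
  rw [hz, zero_smul]

lemma partner_ne {W : Matrix (Fin k) (Fin n) ℝ} {b : Fin k → ℝ}
    (hgen : IsGeneric W b)
    {A S B : Finset (Fin n)} (hπ : IsValidPartition W b (A, S, B))
    {vv : Fin n → ℝ} (h0 : ∀ i ∈ A, vv i = 0) (h1 : ∀ i ∈ B, vv i = 1)
    (hWv : W.mulVec vv = b) {t : Fin n} (ht : t ∉ S) :
    wpartner W vv S t ≠ ((A, S, B), t) := by
  obtain ⟨hvalidσ, ⟨hsD, hkvs⟩, huniqσ, hlampos, hsign, hchar⟩ :=
    walk_spec hgen hπ h0 h1 hWv ht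
  obtain ⟨d1, d2, d3, huniv, hS, hdS, hIoo⟩ := hπ
  have hmem_split : ∀ i : Fin n, i ∈ A ∨ i ∈ S ∨ i ∈ B := by
    intro i
    have h : i ∈ A ∪ S ∪ B := huniv ▸ Finset.mem_univ i
    rcases Finset.mem_union.1 h with h | h
    · rcases Finset.mem_union.1 h with h | h
      · exact Or.inl h
      · exact Or.inr (Or.inl h)
    · exact Or.inr (Or.inr h)
  intro heq
  have hs : wexit W vv S t = t := by
    have := congrArg Prod.snd heq
    simpa [wpartner_snd] using this
  have hB : (wpartner W vv S t).1.2.2 = B := by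
    have := congrArg (fun p => p.1.2.2) heq
    simpa using this
  rw [hs, kvec_self, mul_one] at hsign
  have htS' : t ∉ (insert t S).erase (wexit W vv S t) := by
    rw [hs]; exact Finset.notMem_erase t _
  rcases hmem_split t with hA | hSS | hBB
  · -- vv t = 0, so z t = 1, so t ∈ B' = B, contradiction
    have hv0 : vv t = 0 := h0 t hA
    have hz1 : wz W vv S t t = 1 := by
      rw [hsign, if_pos (by rw [hv0]; norm_num)]
    have htB' : t ∈ (wpartner W vv S t).1.2.2 := by
      rw [wpartner_B]
      exact Finset.mem_filter.2 ⟨Finset.mem_univ t, htS', hz1⟩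
    rw [hB] at htB'
    have := h1 t htB'
    rw [hv0] at this
    norm_num at this
  · exact ht hSS
  · -- vv t = 1, so z t = 0, so t ∉ B' = B, contradiction
    have hv1 : vv t = 1 := h1 t hBB
    have hz0 : wz W vv S t t = 0 := by
      rw [hsign, if_neg (by rw [hv1]; norm_num)]
    have htB' : t ∈ (wpartner W vv S t).1.2.2 := hB ▸ hBB
    rw [wpartner_B] at htB'
    have := (Finset.mem_filter.1 htB').2.2
    rw [hz0] at this
    norm_num at this

set_option maxHeartbeats 1200000 in
lemma partner_invol {W : Matrix (Fin k) (Fin n) ℝ} {b : Fin k → ℝ}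
    (hgen : IsGeneric W b)
    {A S B : Finset (Fin n)} (hπ : IsValidPartition W b (A, S, B))
    {vv : Fin n → ℝ} (h0 : ∀ i ∈ A, vv i = 0) (h1 : ∀ i ∈ B, vv i = 1)
    (hWv : W.mulVec vv = b) {t : Fin n} (ht : t ∉ S) {uu : Fin n → ℝ}
    (hu0 : ∀ i ∈ (wpartner W vv S t).1.1, uu i = 0)
    (hu1 : ∀ i ∈ (wpartner W vv S t).1.2.2, uu i = 1)
    (hWu : W.mulVec uu = b) :
    wpartner W uu (wpartner W vv S t).1.2.1 (wpartner W vv S t).2 = ((A, S, B), t) := by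
  obtain ⟨hvalidσ, ⟨hsD, hkvs⟩, huniqσ, hlampos, hsign, hchar⟩ :=
    walk_spec hgen hπ h0 h1 hWv ht
  have hπ' : IsValidPartition W b (A, S, B) := hπ
  obtain ⟨d1, d2, d3, huniv, hS, hdS, hIoo⟩ := hπ
  have hmem_split : ∀ i : Fin n, i ∈ A ∨ i ∈ S ∨ i ∈ B := by
    intro i
    have h : i ∈ A ∪ S ∪ B := huniv ▸ Finset.mem_univ i
    rcases Finset.mem_union.1 h with h | h
    · rcases Finset.mem_union.1 h with h | h
      · exact Or.inl h
      · exact Or.inr (Or.inl h)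
    · exact Or.inr (Or.inr h)
  have huu : uu = wz W vv S t := huniqσ uu hu0 hu1 hWu
  have htAB : t ∈ A ∨ t ∈ B := by
    rcases hmem_split t with h | h | h
    · exact Or.inl h
    · exact absurd h ht
    · exact Or.inr h
  have hvt : vv t = 0 ∨ vv t = 1 := by
    rcases htAB with h | h
    · exact Or.inl (h0 t h)
    · exact Or.inr (h1 t h)
  have hε1 : (1 - 2 * vv t) = 1 ∨ (1 - 2 * vv t) = -1 := by
    rcases hvt with h | h <;> rw [h] <;> norm_num
  have hεne : (1 - 2 * vv t) ≠ 0 := by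
    rcases hε1 with h | h <;> rw [h] <;> norm_num
  have hvIoo : ∀ j ∈ S, vv j ∈ Set.Ioo (0:ℝ) 1 :=
    vertex_coords hπ' h0 h1 hWv
  have hcube : ∀ i, (0:ℝ) ≤ vv i ∧ vv i ≤ 1 := by
    intro i
    by_cases hi : i ∈ S
    · exact ⟨le_of_lt (hvIoo i hi).1, le_of_lt (hvIoo i hi).2⟩
    · rcases hmem_split i with h | h | h
      · rw [h0 i h]; norm_num
      · exact absurd h hi
      · rw [h1 i h]; norm_num
  -- second walk
  have hvalidσ' : IsValidPartition W b
      ((wpartner W vv S t).1.1, (wpartner W vv S t).1.2.1, (wpartner W vv S t).1.2.2) :=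
    hvalidσ
  have ht2 : (wpartner W vv S t).2 ∉ (wpartner W vv S t).1.2.1 := by
    rw [wpartner_S, wpartner_snd]
    exact Finset.notMem_erase _ _
  obtain ⟨hvalid2, ⟨hsD2, hkvs2⟩, huniq2, hlampos2, hsign2, hchar2⟩ :=
    walk_spec hgen hvalidσ' hu0 hu1 hWu ht2
  rw [wpartner_S, wpartner_snd] at hchar2
  -- kvec relations (as in cancel_pair)
  obtain ⟨dA'S', dA'B', dS'B', huniv', hS', hdS', hIoo'⟩ := hvalidσ
  have hS'card : ((insert t S).erase (wexit W vv S t)).card = k := by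
    have := hS'
    rwa [wpartner_S] at this
  have hdS'' : subDet W ((insert t S).erase (wexit W vv S t)) ≠ 0 := by
    have := hdS'
    rwa [wpartner_S] at this
  have hkrel : kvec W S t = kvec W S t (wexit W vv S t) •
      kvec W ((insert t S).erase (wexit W vv S t)) (wexit W vv S t) := by
    by_cases hst : wexit W vv S t = t
    · rw [hst, kvec_self, Finset.erase_insert ht, one_smul]
    · have hsS : wexit W vv S t ∈ S := (Finset.mem_insert.1 hsD).resolve_left hst
      rw [erase_insert_ne hst]
      exact kvec_exchange W hS hdS ht hsS
        ((erase_insert_ne hst) ▸ hS'card) ((erase_insert_ne hst) ▸ hdS'')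
  have hkrel2 : kvec W ((insert t S).erase (wexit W vv S t)) (wexit W vv S t)
      = (kvec W S t (wexit W vv S t))⁻¹ • kvec W S t := by
    have h := congrArg (fun w => (kvec W S t (wexit W vv S t))⁻¹ • w) hkrel
    simp only [smul_smul, inv_mul_cancel₀ hkvs, one_smul] at h
    exact h.symm
  have habs : |kvec W S t (wexit W vv S t)| ≠ 0 := abs_ne_zero.2 hkvs
  have habspos : 0 < |kvec W S t (wexit W vv S t)| := abs_pos.2 hkvs
  -- the sign identity again
  have hkey : (1 - 2 * vv t) * kvec W S t (wexit W vv S t)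
      = -((1 - 2 * wz W vv S t (wexit W vv S t)) * |kvec W S t (wexit W vv S t)|) := by
    by_cases hp : 0 < (1 - 2 * vv t) * kvec W S t (wexit W vv S t)
    · rw [hsign, if_pos hp]
      have habs2 : |(1 - 2 * vv t) * kvec W S t (wexit W vv S t)|
          = |kvec W S t (wexit W vv S t)| := by
        rw [abs_mul]
        rcases hε1 with h | h <;> rw [h] <;> norm_num
      rw [← habs2, abs_of_pos hp]
      ring
    · have hn : (1 - 2 * vv t) * kvec W S t (wexit W vv S t) < 0 :=
        lt_of_le_of_ne (not_lt.1 hp) (mul_ne_zero hεne hkvs)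
      rw [hsign, if_neg hp]
      have habs2 : |(1 - 2 * vv t) * kvec W S t (wexit W vv S t)|
          = |kvec W S t (wexit W vv S t)| := by
        rw [abs_mul]
        rcases hε1 with h | h <;> rw [h] <;> norm_num
      rw [← habs2, abs_of_neg hn]
      ring
  -- direction of the reverse walk
  have hdir2 : wdir W uu ((insert t S).erase (wexit W vv S t)) (wexit W vv S t)
      = (-(|kvec W S t (wexit W vv S t)|)⁻¹) • wdir W vv S t := by
    have hd1 : wdir W uu ((insert t S).erase (wexit W vv S t)) (wexit W vv S t)
        = (1 - 2 * uu (wexit W vv S t)) •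
          kvec W ((insert t S).erase (wexit W vv S t)) (wexit W vv S t) := rfl
    have hd2 : wdir W vv S t = (1 - 2 * vv t) • kvec W S t := rfl
    rw [hd1, hd2, hkrel2, smul_smul, smul_smul]
    congr 1
    have huus : uu (wexit W vv S t) = wz W vv S t (wexit W vv S t) := by rw [huu]
    rw [huus]
    have h2 : (1 - 2 * wz W vv S t (wexit W vv S t))
        = -((1 - 2 * vv t) * kvec W S t (wexit W vv S t)) /
            |kvec W S t (wexit W vv S t)| := by
      rw [eq_div_iff habs]
      linarith [hkey]
    rw [h2]
    field_simp
  -- candidate lambda for reverse walk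
  have hpoint : ∀ j, uu j + (wlam W vv S t * |kvec W S t (wexit W vv S t)|) *
      wdir W uu ((insert t S).erase (wexit W vv S t)) (wexit W vv S t) j = vv j := by
    intro j
    have h1' : uu j = vv j + wlam W vv S t * wdir W vv S t j := by rw [huu]; rfl
    have h2' : wdir W uu ((insert t S).erase (wexit W vv S t)) (wexit W vv S t) j
        = (-(|kvec W S t (wexit W vv S t)|)⁻¹) * wdir W vv S t j := by
      rw [hdir2]; rfl
    rw [h1', h2']
    field_simp
    ring
  have hlam2pos : 0 < wlam W vv S t * |kvec W S t (wexit W vv S t)| :=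
    mul_pos hlampos habspos
  have hlam2 : wlam W vv S t * |kvec W S t (wexit W vv S t)|
      = wlam W uu ((insert t S).erase (wexit W vv S t)) (wexit W vv S t) := by
    apply hchar2 _ hlam2pos
    · intro j
      rw [hpoint j]
      exact Set.mem_Icc.2 (hcube j)
    · refine ⟨t, ?_, ?_⟩
      · rw [hdir2]
        have : wdir W vv S t t = (1 - 2 * vv t) := by
          have : wdir W vv S t t = (1 - 2 * vv t) * kvec W S t t := rfl
          rw [this, kvec_self, mul_one]
        show (-(|kvec W S t (wexit W vv S t)|)⁻¹) * wdir W vv S t t ≠ 0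
        rw [this]
        exact mul_ne_zero (neg_ne_zero.2 (inv_ne_zero habs)) hεne
      · rw [hpoint t]
        rcases hvt with h | h
        · exact Or.inl h
        · exact Or.inr h
  have hwz2 : wz W uu ((insert t S).erase (wexit W vv S t)) (wexit W vv S t) = vv := by
    funext j
    have : wz W uu ((insert t S).erase (wexit W vv S t)) (wexit W vv S t) j
        = uu j + wlam W uu ((insert t S).erase (wexit W vv S t)) (wexit W vv S t) *
          wdir W uu ((insert t S).erase (wexit W vv S t)) (wexit W vv S t) j := rfl
    rw [this, ← hlam2]
    exact hpoint j
  -- the exit of the reverse walk is t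
  have hq1 : insert (wexit W vv S t) ((insert t S).erase (wexit W vv S t)) = insert t S :=
    Finset.insert_erase hsD
  have hfilt : (insert (wexit W vv S t) ((insert t S).erase (wexit W vv S t))).filter
      (fun j => wz W uu ((insert t S).erase (wexit W vv S t)) (wexit W vv S t) j = 0 ∨
        wz W uu ((insert t S).erase (wexit W vv S t)) (wexit W vv S t) j = 1) = {t} := by
    rw [hwz2, hq1]
    ext j
    simp only [Finset.mem_filter, Finset.mem_insert, Finset.mem_singleton]
    constructor
    · rintro ⟨hjD, hbits⟩
      rcases hjD with h | h
      · exact h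
      · exfalso
        have hIj := hvIoo j h
        rcases hbits with hb | hb
        · exact absurd hb (ne_of_gt hIj.1)
        · exact absurd hb (ne_of_lt hIj.2)
    · intro h
      exact ⟨Or.inl h, h ▸ hvt⟩
  have hwexit2 : wexit W uu ((insert t S).erase (wexit W vv S t)) (wexit W vv S t) = t := by
    rw [wexit, hfilt, Finset.min_singleton]
    rfl
  -- assemble the partition equality
  rw [wpartner_S, wpartner_snd]
  have hS'' : (insert (wexit W vv S t) ((insert t S).erase (wexit W vv S t))).erase
      (wexit W uu ((insert t S).erase (wexit W vv S t)) (wexit W vv S t)) = S := by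
    rw [hwexit2, hq1, Finset.erase_insert ht]
  have hAeq : Finset.univ.filter (fun i =>
      i ∉ (insert (wexit W vv S t) ((insert t S).erase (wexit W vv S t))).erase
        (wexit W uu ((insert t S).erase (wexit W vv S t)) (wexit W vv S t)) ∧
      wz W uu ((insert t S).erase (wexit W vv S t)) (wexit W vv S t) i ≠ 1) = A := by
    rw [hS'', hwz2]
    ext i
    simp only [Finset.mem_filter, Finset.mem_univ, true_and]
    constructor
    · rintro ⟨hiS, hv1⟩
      rcases hmem_split i with h | h | h
      · exact h
      · exact absurd h hiS
      · exact absurd (h1 i h) hv1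
    · intro hiA
      refine ⟨Finset.disjoint_left.1 d1 hiA, ?_⟩
      rw [h0 i hiA]
      norm_num
  have hBeq : Finset.univ.filter (fun i =>
      i ∉ (insert (wexit W vv S t) ((insert t S).erase (wexit W vv S t))).erase
        (wexit W uu ((insert t S).erase (wexit W vv S t)) (wexit W vv S t)) ∧
      wz W uu ((insert t S).erase (wexit W vv S t)) (wexit W vv S t) i = 1) = B := by
    rw [hS'', hwz2]
    ext i
    simp only [Finset.mem_filter, Finset.mem_univ, true_and]
    constructor
    · rintro ⟨hiS, hv1⟩
      rcases hmem_split i with h | h | h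
      · rw [h0 i h] at hv1; norm_num at hv1
      · exact absurd h hiS
      · exact h
    · intro hiB
      have hiS : i ∉ S := fun h => Finset.disjoint_left.1 d3 h hiB
      exact ⟨hiS, h1 i hiB⟩
  show ((_, _, _), _) = ((A, S, B), t)
  rw [Prod.mk.injEq, Prod.mk.injEq, Prod.mk.injEq]
  exact ⟨⟨hAeq, hS'', hBeq⟩, hwexit2⟩

end Factory

open Factory

/-- **The factory identity for generic subspaces.** Assume `ℋ = {x : W x = b}` is
generic. For each valid partition `π = (A,S,B)` let `v π` be the associated vertex
of `𝒫 = [0,1]ⁿ ∩ ℋ` (zero on `A`, one on `B`, solving `W (v π) = b`, i.e.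
`(v π)_S = W_S⁻¹(b − ∑_{i∈B} wⁱ)`). Then for every `x ∈ 𝒫` the vector identity
`∑_{π ∈ 𝒰} P_π(x) · (v π − x) = 0` holds in `ℝⁿ`. -/
theorem generic_factory_identity (k n : ℕ) (hk : 1 ≤ k) (hkn : k ≤ n)
    (W : Matrix (Fin k) (Fin n) ℝ) (hrank : W.rank = k) (b : Fin k → ℝ)
    (hgen : IsGeneric W b)
    (v : Finset (Fin n) × Finset (Fin n) × Finset (Fin n) → (Fin n → ℝ))
    (hv : ∀ π, IsValidPartition W b π →
      (∀ i ∈ π.1, v π i = 0) ∧ (∀ i ∈ π.2.2, v π i = 1) ∧ W.mulVec (v π) = b)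
    (x : Fin n → ℝ) (hx01 : ∀ i, x i ∈ Set.Icc (0 : ℝ) 1) (hxH : W.mulVec x = b) :
    ∑ π ∈ Finset.univ.filter (fun π => IsValidPartition W b π),
        Ppart W π x • (v π - x) = (0 : Fin n → ℝ) := by
  classical
  have step1 : ∑ π ∈ Finset.univ.filter (fun π => IsValidPartition W b π),
      Ppart W π x • (v π - x)
      = ∑ a ∈ (Finset.univ.filter (fun π => IsValidPartition W b π)) ×ˢ
          (Finset.univ : Finset (Fin n)),
        (if a.2 ∈ a.1.2.1 then 0 else
          (Ppart W a.1 x * (v a.1 a.2 - x a.2)) • kvec W a.1.2.1 a.2) := by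
    rw [Finset.sum_product]
    refine Finset.sum_congr rfl (fun π hπm => ?_)
    have hπ : IsValidPartition W b π := (Finset.mem_filter.1 hπm).2
    obtain ⟨hv0, hv1, hWvπ⟩ := hv π hπ
    have hS : π.2.1.card = k := hπ.2.2.2.2.1
    have hdS : subDet W π.2.1 ≠ 0 := hπ.2.2.2.2.2.1
    have hker : W.mulVec (v π - x) = 0 := by
      rw [Matrix.mulVec_sub, hWvπ, hxH, sub_self]
    have hdec := vertex_decomp hS hdS hker
    rw [Finset.sum_ite, Finset.sum_const_zero, zero_add]
    have hfil : Finset.univ.filter (fun t => ¬ t ∈ π.2.1) = π.2.1ᶜ := by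
      ext i; simp
    rw [hfil, hdec, Finset.smul_sum]
    refine Finset.sum_congr rfl (fun t ht => ?_)
    rw [smul_smul]
  rw [step1]
  refine Finset.sum_involution
    (fun a _ => if a.2 ∈ a.1.2.1 then a else wpartner W (v a.1) a.1.2.1 a.2)
    ?_ ?_ ?_ ?_
  · -- cancellation
    intro a ha
    beta_reduce
    by_cases hts : a.2 ∈ a.1.2.1
    · simp [if_pos hts]
    · have hπ : IsValidPartition W b a.1 :=
        (Finset.mem_filter.1 (Finset.mem_product.1 ha).1).2
      obtain ⟨hv0, hv1, hWvπ⟩ := hv a.1 hπ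
      have hπ' : IsValidPartition W b (a.1.1, a.1.2.1, a.1.2.2) := hπ
      have hvalidσ : IsValidPartition W b (wpartner W (v a.1) a.1.2.1 a.2).1 :=
        (walk_spec hgen hπ' hv0 hv1 hWvπ hts).1
      obtain ⟨hu0, hu1, hWu⟩ := hv _ hvalidσ
      have ht2 : (wpartner W (v a.1) a.1.2.1 a.2).2 ∉
          (wpartner W (v a.1) a.1.2.1 a.2).1.2.1 := by
        rw [wpartner_S, wpartner_snd]
        exact Finset.notMem_erase _ _
      simp only [if_neg hts, if_neg ht2]
      exact cancel_pair hgen hπ' hv0 hv1 hWvπ hts hu0 hu1 hWu x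
  · -- g_ne
    intro a ha hFa
    beta_reduce
    by_cases hts : a.2 ∈ a.1.2.1
    · exact absurd (if_pos hts) hFa
    · rw [if_neg hts]
      have hπ : IsValidPartition W b a.1 :=
        (Finset.mem_filter.1 (Finset.mem_product.1 ha).1).2
      obtain ⟨hv0, hv1, hWvπ⟩ := hv a.1 hπ
      have hπ' : IsValidPartition W b (a.1.1, a.1.2.1, a.1.2.2) := hπ
      exact partner_ne hgen hπ' hv0 hv1 hWvπ hts
  · -- g_mem
    intro a ha
    beta_reduce
    by_cases hts : a.2 ∈ a.1.2.1
    · rw [if_pos hts]; exact ha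
    · rw [if_neg hts]
      have hπ : IsValidPartition W b a.1 :=
        (Finset.mem_filter.1 (Finset.mem_product.1 ha).1).2
      obtain ⟨hv0, hv1, hWvπ⟩ := hv a.1 hπ
      have hπ' : IsValidPartition W b (a.1.1, a.1.2.1, a.1.2.2) := hπ
      have hvalidσ : IsValidPartition W b (wpartner W (v a.1) a.1.2.1 a.2).1 :=
        (walk_spec hgen hπ' hv0 hv1 hWvπ hts).1
      exact Finset.mem_product.2 ⟨Finset.mem_filter.2 ⟨Finset.mem_univ _, hvalidσ⟩,
        Finset.mem_univ _⟩
  · -- involution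
    intro a ha
    beta_reduce
    by_cases hts : a.2 ∈ a.1.2.1
    · simp only [if_pos hts]
    · simp only [if_neg hts]
      have hπ : IsValidPartition W b a.1 :=
        (Finset.mem_filter.1 (Finset.mem_product.1 ha).1).2
      obtain ⟨hv0, hv1, hWvπ⟩ := hv a.1 hπ
      have hπ' : IsValidPartition W b (a.1.1, a.1.2.1, a.1.2.2) := hπ
      have hvalidσ : IsValidPartition W b (wpartner W (v a.1) a.1.2.1 a.2).1 :=
        (walk_spec hgen hπ' hv0 hv1 hWvπ hts).1
      obtain ⟨hu0, hu1, hWu⟩ := hv _ hvalidσ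
      have ht2 : (wpartner W (v a.1) a.1.2.1 a.2).2 ∉
          (wpartner W (v a.1) a.1.2.1 a.2).1.2.1 := by
        rw [wpartner_S, wpartner_snd]
        exact Finset.notMem_erase _ _
      rw [if_neg ht2]
      exact partner_invol hgen hπ' hv0 hv1 hWvπ hts hu0 hu1 hWu
end

section
/- Assume ℋ is generic. Then for every x ∈ 𝒫 = [0,1]^n ∩ ℋ, the sum ∑_{π ∈ 𝒰} P_π(x) is strictly positive. -/
open Finset
open scoped Classical

/-- Columns indexed by `F` are linearly independent, phrased concretely. -/
def goodCols {k n : ℕ} (W : Matrix (Fin k) (Fin n) ℝ) (F : Finset (Fin n)) : Prop :=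
  ∀ g : Fin n → ℝ, (∀ i, i ∉ F → g i = 0) → (∀ a, ∑ i, g i * W a i = 0) → ∀ i, g i = 0

lemma goodCols_card_le {k n : ℕ} {W : Matrix (Fin k) (Fin n) ℝ} {F : Finset (Fin n)}
    (hF : goodCols W F) : F.card ≤ k := by
  have hli : LinearIndependent ℝ (fun i : ↥F => (fun a => W a i.1)) := by
    rw [Fintype.linearIndependent_iff]
    intro g hg
    have hG : ∀ i, (fun i : Fin n => if h : i ∈ F then g ⟨i, h⟩ else 0) i = 0 := by
      apply hF
      · intro i hi; simp [hi]
      · intro a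
        have h1 : ∑ i, (if h : i ∈ F then g ⟨i, h⟩ else 0) * W a i
            = ∑ i ∈ F, (if h : i ∈ F then g ⟨i, h⟩ else 0) * W a i := by
          refine (Finset.sum_subset (Finset.subset_univ F) ?_).symm
          intro i _ hi; simp [hi]
        rw [h1, ← Finset.sum_attach F (fun i => (if h : i ∈ F then g ⟨i, h⟩ else 0) * W a i)]
        have := congrFun hg a
        simpa [Finset.sum_apply] using this
    intro i
    have := hG i.1
    simpa [i.2] using this
  have := hli.fintype_card_le_finrank
  simpa [Module.finrank_fintype_fun_eq_card] using this

lemma span_cols_top {k n : ℕ} {W : Matrix (Fin k) (Fin n) ℝ} (h : W.rank = k) :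
    Submodule.span ℝ (Set.range W.transpose) = ⊤ := by
  show Submodule.span ℝ (Set.range W.col) = ⊤
  rw [← Matrix.range_mulVecLin]
  apply Submodule.eq_top_of_finrank_eq
  rw [← Matrix.rank, h, Module.finrank_fintype_fun_eq_card, Fintype.card_fin]

lemma exists_vertex {k n : ℕ} (W : Matrix (Fin k) (Fin n) ℝ) (b : Fin k → ℝ) :
    ∀ N : ℕ, ∀ y : Fin n → ℝ,
      (Finset.univ.filter fun i => y i ≠ 0 ∧ y i ≠ 1).card ≤ N →
      (∀ i, y i ∈ Set.Icc (0:ℝ) 1) → W.mulVec y = b →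
      ∃ v : Fin n → ℝ, (∀ i, v i ∈ Set.Icc (0:ℝ) 1) ∧ W.mulVec v = b ∧
        (∀ i, y i = 0 → v i = 0) ∧ (∀ i, y i = 1 → v i = 1) ∧
        goodCols W (Finset.univ.filter fun i => v i ≠ 0 ∧ v i ≠ 1) := by
  intro N
  induction N with
  | zero =>
    intro y hcard hy01 hyb
    refine ⟨y, hy01, hyb, fun _ h => h, fun _ h => h, ?_⟩
    have hF : (Finset.univ.filter fun i => y i ≠ 0 ∧ y i ≠ 1) = ∅ :=
      Finset.card_eq_zero.mp (Nat.le_zero.mp hcard)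
    intro g hsupp _ i
    exact hsupp i (by simp [hF])
  | succ N ih =>
    intro y hcard hy01 hyb
    set F := (Finset.univ.filter fun i => y i ≠ 0 ∧ y i ≠ 1) with hFdef
    by_cases hgood : goodCols W F
    · exact ⟨y, hy01, hyb, fun _ h => h, fun _ h => h, hgood⟩
    · simp only [goodCols, not_forall] at hgood
      obtain ⟨g, hsupp, hsum, i0, hi0⟩ := hgood
      -- support of g lies in the fractional set
      have hfrac : ∀ i, g i ≠ 0 → (0 < y i ∧ y i < 1) := by
        intro i hgi
        have hiF : i ∈ F := by
          by_contra h; exact hgi (hsupp i h)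
        rw [hFdef, Finset.mem_filter] at hiF
        obtain ⟨hne0, hne1⟩ := hiF.2
        exact ⟨lt_of_le_of_ne (hy01 i).1 (Ne.symm hne0), lt_of_le_of_ne (hy01 i).2 hne1⟩
      set T := (Finset.univ.filter fun i => g i ≠ 0) with hTdef
      have hTne : T.Nonempty := ⟨i0, by simp [hTdef, hi0]⟩
      set r : Fin n → ℝ := fun i => if 0 < g i then (1 - y i) / g i else (0 - y i) / g i
        with hrdef
      have hrpos : ∀ i ∈ T, 0 < r i := by
        intro i hiT
        rw [hTdef, Finset.mem_filter] at hiT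
        have hgi := hiT.2
        obtain ⟨h0, h1⟩ := hfrac i hgi
        rcases lt_or_gt_of_ne hgi with hneg | hpos
        · have : ¬ (0 < g i) := not_lt.mpr hneg.le
          rw [hrdef]; simp only [this, if_false]
          exact div_pos_of_neg_of_neg (by linarith) hneg
        · rw [hrdef]; simp only [hpos, if_true]
          exact div_pos (by linarith) hpos
      set t := T.inf' hTne r with htdef
      have htpos : 0 < t := by
        rw [htdef, Finset.lt_inf'_iff]
        exact hrpos
      have htle : ∀ i ∈ T, t ≤ r i := fun i hi => Finset.inf'_le r hi
      obtain ⟨i1, hi1T, hti1⟩ := Finset.exists_mem_eq_inf' hTne r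
      set v : Fin n → ℝ := fun i => y i + t * g i with hvdef
      -- key bounds
      have hub : ∀ i, 0 < g i → y i + t * g i ≤ 1 := by
        intro i hgi
        have hiT : i ∈ T := by simp [hTdef, ne_of_gt hgi]
        have := htle i hiT
        rw [hrdef] at this
        simp only [hgi, if_true] at this
        have := (le_div_iff₀ hgi).mp this
        linarith
      have hlb : ∀ i, g i < 0 → 0 ≤ y i + t * g i := by
        intro i hgi
        have hiT : i ∈ T := by simp [hTdef, ne_of_lt hgi]
        have h1 := htle i hiT
        rw [hrdef] at h1
        simp only [not_lt.mpr hgi.le, if_false] at h1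
        have h2 : (0 - y i) / g i * g i ≤ t * g i :=
          mul_le_mul_of_nonpos_right h1 hgi.le
        rw [div_mul_cancel₀ _ (ne_of_lt hgi)] at h2
        linarith
      have hv01 : ∀ i, v i ∈ Set.Icc (0:ℝ) 1 := by
        intro i
        rcases lt_trichotomy (g i) 0 with hneg | hzero | hpos
        · constructor
          · exact hlb i hneg
          · have := (hfrac i (ne_of_lt hneg)).2
            have : t * g i < 0 := mul_neg_of_pos_of_neg htpos hneg
            rw [hvdef]; simp only
            have := (hfrac i (by exact ne_of_lt hneg)).2
            nlinarith [(hfrac i (ne_of_lt hneg)).2]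
        · rw [hvdef]; simp only [hzero, mul_zero, add_zero]; exact hy01 i
        · constructor
          · have h0 := (hfrac i (ne_of_gt hpos)).1
            have : 0 < t * g i := mul_pos htpos hpos
            rw [hvdef]; simp only; linarith
          · exact hub i hpos
      have hvb : W.mulVec v = b := by
        funext a
        have h1 : W.mulVec v a = W.mulVec y a + t * ∑ i, g i * W a i := by
          simp only [Matrix.mulVec, dotProduct, hvdef]
          rw [Finset.mul_sum, ← Finset.sum_add_distrib]
          congr 1; funext i; ring
        rw [h1, hsum a, hyb]; simp
      have hpres0 : ∀ i, y i = 0 → v i = 0 := by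
        intro i hyi
        have hgi : g i = 0 := by
          by_contra h
          exact absurd hyi (ne_of_gt (hfrac i h).1)
        rw [hvdef]; simp [hgi, hyi]
      have hpres1 : ∀ i, y i = 1 → v i = 1 := by
        intro i hyi
        have hgi : g i = 0 := by
          by_contra h
          exact absurd hyi (ne_of_lt (hfrac i h).2)
        rw [hvdef]; simp [hgi, hyi]
      -- v i1 is 0 or 1
      have hi1g : g i1 ≠ 0 := by
        rw [hTdef, Finset.mem_filter] at hi1T; exact hi1T.2
      have hvi1 : v i1 = 0 ∨ v i1 = 1 := by
        rw [hvdef]; simp only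
        rcases lt_or_gt_of_ne hi1g with hneg | hpos
        · left
          rw [htdef, hti1, hrdef]
          simp only [not_lt.mpr hneg.le, if_false]
          rw [div_mul_cancel₀ _ (ne_of_lt hneg)]
          ring
        · right
          rw [htdef, hti1, hrdef]
          simp only [hpos, if_true]
          rw [div_mul_cancel₀ _ (ne_of_gt hpos)]
          ring
      -- fractional set strictly decreases
      have hsub : (Finset.univ.filter fun i => v i ≠ 0 ∧ v i ≠ 1) ⊆ F := by
        intro i hi
        rw [Finset.mem_filter] at hi
        rw [hFdef, Finset.mem_filter]
        refine ⟨Finset.mem_univ i, ?_⟩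
        by_cases hgi : g i = 0
        · have : v i = y i := by rw [hvdef]; simp [hgi]
          rw [this] at hi; exact hi.2
        · obtain ⟨h0, h1⟩ := hfrac i hgi
          exact ⟨ne_of_gt h0, ne_of_lt h1⟩
      have hi1F : i1 ∈ F := by
        rw [hFdef, Finset.mem_filter]
        obtain ⟨h0, h1⟩ := hfrac i1 hi1g
        exact ⟨Finset.mem_univ i1, ne_of_gt h0, ne_of_lt h1⟩
      have hi1not : i1 ∉ (Finset.univ.filter fun i => v i ≠ 0 ∧ v i ≠ 1) := by
        rw [Finset.mem_filter]
        rintro ⟨_, h0, h1⟩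
        rcases hvi1 with h | h
        · exact h0 h
        · exact h1 h
      have hcard' : (Finset.univ.filter fun i => v i ≠ 0 ∧ v i ≠ 1).card ≤ N := by
        have hss : (Finset.univ.filter fun i => v i ≠ 0 ∧ v i ≠ 1) ⊂ F :=
          Finset.ssubset_iff_of_subset hsub |>.mpr ⟨i1, hi1F, hi1not⟩
        have := Finset.card_lt_card hss
        omega
      obtain ⟨v', hv'01, hv'b, hv'0, hv'1, hv'good⟩ := ih v hcard' hv01 hvb
      refine ⟨v', hv'01, hv'b, ?_, ?_, hv'good⟩
      · intro i h; exact hv'0 i (hpres0 i h)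
      · intro i h; exact hv'1 i (hpres1 i h)

lemma exists_extend {k n : ℕ} {W : Matrix (Fin k) (Fin n) ℝ}
    (hspan : Submodule.span ℝ (Set.range W.transpose) = ⊤) :
    ∀ d : ℕ, ∀ F : Finset (Fin n), goodCols W F → k - F.card ≤ d →
      ∃ S : Finset (Fin n), F ⊆ S ∧ S.card = k ∧ goodCols W S := by
  intro d
  induction d with
  | zero =>
    intro F hF hd
    have h1 : F.card ≤ k := goodCols_card_le hF
    have : F.card = k := by omega
    exact ⟨F, Finset.Subset.refl F, this, hF⟩
  | succ d ih =>
    intro F hF hd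
    have hle : F.card ≤ k := goodCols_card_le hF
    by_cases hcard : F.card = k
    · exact ⟨F, Finset.Subset.refl F, hcard, hF⟩
    · have hlt : F.card < k := lt_of_le_of_ne hle hcard
      -- find a column outside span of F-columns
      have hex : ∃ j : Fin n, (fun a => W a j) ∉
          Submodule.span ℝ ((fun i => fun a => W a i) '' (F : Set (Fin n))) := by
        by_contra hall
        push_neg at hall
        set V := Submodule.span ℝ ((fun i => fun a => W a i) '' (F : Set (Fin n))) with hV
        have htop : V = ⊤ := by
          apply top_le_iff.mp
          rw [← hspan]
          apply Submodule.span_le.mpr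
          rintro u ⟨j, rfl⟩
          exact hall j
        have hrankV : Module.finrank ℝ ↥V = k := by
          rw [htop, finrank_top, Module.finrank_fintype_fun_eq_card, Fintype.card_fin]
        have himg : ((fun i => fun a => W a i) '' (F : Set (Fin n)))
            = ((F.image (fun i => fun a => W a i) : Finset (Fin k → ℝ)) : Set (Fin k → ℝ)) := by
          rw [Finset.coe_image]
        have hsmall : Module.finrank ℝ ↥V ≤ F.card := by
          rw [hV, himg]
          calc Module.finrank ℝ ↥(Submodule.span ℝ
                ((F.image (fun i => fun a => W a i) : Finset (Fin k → ℝ)) : Set (Fin k → ℝ)))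
              ≤ (F.image (fun i => fun a => W a i)).card :=
                finrank_span_finset_le_card _
            _ ≤ F.card := Finset.card_image_le
        omega
      obtain ⟨j, hj⟩ := hex
      have hjF : j ∉ F := by
        intro hjmem
        exact hj (Submodule.subset_span ⟨j, hjmem, rfl⟩)
      have hgood' : goodCols W (insert j F) := by
        intro g hsupp hsum
        have hgj : g j = 0 := by
          by_contra hgj
          apply hj
          have key : ∀ a, W a j = ∑ i ∈ F, (-(g i) / g j) * W a i := by
            intro a
            have hsplit : ∑ i, g i * W a i
                = g j * W a j + ∑ i ∈ F, g i * W a i := by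
              rw [show (Finset.univ : Finset (Fin n)) = Finset.univ from rfl]
              have h1 : ∑ i, g i * W a i = ∑ i ∈ insert j F, g i * W a i := by
                refine (Finset.sum_subset (Finset.subset_univ _) ?_).symm
                intro i _ hi
                rw [hsupp i hi, zero_mul]
              rw [h1, Finset.sum_insert hjF]
            have h0 := hsum a
            rw [hsplit] at h0
            have h2 : ∑ i ∈ F, (-(g i) / g j) * W a i
                = -(g j)⁻¹ * ∑ i ∈ F, g i * W a i := by
              rw [Finset.mul_sum]
              apply Finset.sum_congr rfl
              intro i _
              field_simp
            have h3 : ∑ i ∈ F, g i * W a i = -(g j * W a j) := by linarith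
            rw [h2, h3, neg_mul_neg, inv_mul_eq_div, mul_comm (g j) (W a j),
              mul_div_assoc, div_self hgj, mul_one]
          have : (fun a => W a j) = ∑ i ∈ F, (-(g i) / g j) • (fun a => W a i) := by
            funext a
            rw [key a]
            simp [Finset.sum_apply]
          rw [this]
          apply Submodule.sum_mem
          intro i hi
          exact Submodule.smul_mem _ _ (Submodule.subset_span ⟨i, hi, rfl⟩)
        have hsupp' : ∀ i, i ∉ F → g i = 0 := by
          intro i hi
          by_cases hij : i = j
          · rw [hij]; exact hgj
          · exact hsupp i (by simp [Finset.mem_insert, hij, hi])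
        exact hF g hsupp' hsum
      have hcard' : (insert j F).card = F.card + 1 := Finset.card_insert_of_notMem hjF
      obtain ⟨S, hsub, hScard, hSgood⟩ := ih (insert j F) hgood' (by omega)
      exact ⟨S, Finset.Subset.trans (Finset.subset_insert j F) hsub, hScard, hSgood⟩

lemma goodCols_det_ne {k n : ℕ} {W : Matrix (Fin k) (Fin n) ℝ} {S : Finset (Fin n)}
    (hS : S.card = k) (hgood : goodCols W S) : (colMat W S hS).det ≠ 0 := by
  intro hdet
  obtain ⟨c, hc0, hcv⟩ := Matrix.exists_mulVec_eq_zero_iff.mpr hdet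
  set σ := S.orderIsoOfFin hS with hσ
  set g : Fin n → ℝ := fun i => if hi : i ∈ S then c (σ.symm ⟨i, hi⟩) else 0 with hg
  have hgσ : ∀ l : Fin k, g ((σ l : Fin n)) = c l := by
    intro l
    rw [hg]
    simp only [(σ l).2, dif_pos]
    congr 1
    rw [show (⟨((σ l : Fin n)), (σ l).2⟩ : {i // i ∈ S}) = σ l from Subtype.ext rfl]
    exact σ.symm_apply_apply l
  have hgsupp : ∀ i, i ∉ S → g i = 0 := by
    intro i hi; rw [hg]; simp [hi]
  have hgsum : ∀ a, ∑ i, g i * W a i = 0 := by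
    intro a
    have h1 : ∑ i, g i * W a i = ∑ i ∈ S, g i * W a i := by
      refine (Finset.sum_subset (Finset.subset_univ S) ?_).symm
      intro i _ hi; rw [hgsupp i hi, zero_mul]
    have h2 : ∑ i ∈ S, g i * W a i = ∑ i : {i // i ∈ S}, g i.1 * W a i.1 :=
      (Finset.sum_coe_sort S (fun i => g i * W a i)).symm
    have h3 : ∑ i : {i // i ∈ S}, g i.1 * W a i.1
        = ∑ l : Fin k, g ((σ l : Fin n)) * W a ((σ l : Fin n)) :=
      (Equiv.sum_comp σ.toEquiv (fun i : {i // i ∈ S} => g i.1 * W a i.1)).symm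
    have h4 : ∑ l : Fin k, g ((σ l : Fin n)) * W a ((σ l : Fin n))
        = (colMat W S hS).mulVec c a := by
      simp only [Matrix.mulVec, dotProduct, colMat, Matrix.of_apply]
      apply Finset.sum_congr rfl
      intro l _
      rw [hgσ l, mul_comm]
    rw [h1, h2, h3, h4, hcv]
    rfl
  apply hc0
  funext l
  rw [← hgσ l]
  exact hgood g hgsupp hgsum ((σ l : Fin n))

/-- **Non-vanishing of the factory polynomials for generic subspaces.** Assume
`ℋ = {x : W x = b}` is generic. Then for every `x ∈ 𝒫 = [0,1]ⁿ ∩ ℋ`, the sum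
`∑_{π ∈ 𝒰} P_π(x)` over valid partitions is strictly positive. -/
theorem generic_factory_positive (k n : ℕ) (hk : 1 ≤ k) (hkn : k ≤ n)
    (W : Matrix (Fin k) (Fin n) ℝ) (hrank : W.rank = k) (b : Fin k → ℝ)
    (hgen : IsGeneric W b)
    (x : Fin n → ℝ) (hx01 : ∀ i, x i ∈ Set.Icc (0 : ℝ) 1) (hxH : W.mulVec x = b) :
    0 < ∑ π ∈ Finset.univ.filter (fun π => IsValidPartition W b π), Ppart W π x := by
  classical
  -- span of all columns is everything
  have hspan := span_cols_top hrank
  -- descend to a point v with independent fractional columns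
  obtain ⟨v, hv01, hvb, hv0, hv1, hvgood⟩ :=
    exists_vertex W b (Finset.univ.filter fun i => x i ≠ 0 ∧ x i ≠ 1).card x le_rfl hx01 hxH
  set F := (Finset.univ.filter fun i => v i ≠ 0 ∧ v i ≠ 1) with hFdef
  obtain ⟨S, hFS, hS, hSgood⟩ := exists_extend hspan k F hvgood (Nat.sub_le k F.card)
  have hdet : (colMat W S hS).det ≠ 0 := goodCols_det_ne hS hSgood
  have hsubdet : subDet W S ≠ 0 := by
    rw [subDet, dif_pos hS]; exact hdet
  set σ := S.orderIsoOfFin hS with hσ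
  -- outside S, v is 0 or 1
  have hout : ∀ i, i ∉ S → v i = 0 ∨ v i = 1 := by
    intro i hi
    have hiF : i ∉ F := fun h => hi (hFS h)
    rw [hFdef, Finset.mem_filter] at hiF
    push_neg at hiF
    by_cases h0 : v i = 0
    · exact Or.inl h0
    · exact Or.inr (hiF (Finset.mem_univ i) h0)
  set B := (Finset.univ.filter fun i => i ∉ S ∧ v i = 1) with hBdef
  set A := (Finset.univ.filter fun i => i ∉ S ∧ v i ≠ 1) with hAdef
  have hBS : ∀ i ∈ B, i ∉ S ∧ v i = 1 := by
    intro i hi; rw [hBdef, Finset.mem_filter] at hi; exact hi.2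
  have hAS : ∀ i ∈ A, i ∉ S ∧ v i ≠ 1 := by
    intro i hi; rw [hAdef, Finset.mem_filter] at hi; exact hi.2
  -- the key linear-algebra identity
  have hkey : (colMat W S hS).mulVec (fun l => v ((σ l : Fin n)))
      = fun a => b a - ∑ i ∈ B, W a i := by
    funext a
    have h1 : (colMat W S hS).mulVec (fun l => v ((σ l : Fin n))) a
        = ∑ l : Fin k, W a ((σ l : Fin n)) * v ((σ l : Fin n)) := by
      simp only [Matrix.mulVec, dotProduct, colMat, Matrix.of_apply]
      rfl
    have h2 : ∑ l : Fin k, W a ((σ l : Fin n)) * v ((σ l : Fin n))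
        = ∑ i ∈ S, W a i * v i := by
      rw [← Finset.sum_coe_sort S (fun i => W a i * v i)]
      exact Equiv.sum_comp σ.toEquiv (fun i : {i // i ∈ S} => W a i.1 * v i.1)
    have hb : b a = ∑ i, W a i * v i := by
      rw [← hvb]; rfl
    have hsplit : ∑ i, W a i * v i = ∑ i ∈ S, W a i * v i + ∑ i ∈ Sᶜ, W a i * v i :=
      (Finset.sum_add_sum_compl S _).symm
    have hcompl : ∑ i ∈ Sᶜ, W a i * v i = ∑ i ∈ B, W a i := by
      have hsub : B ⊆ Sᶜ := by
        intro i hi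
        rw [Finset.mem_compl]
        exact (hBS i hi).1
      have e1 : ∑ i ∈ B, W a i * v i = ∑ i ∈ Sᶜ, W a i * v i := by
        apply Finset.sum_subset hsub
        intro i hiSc hiB
        rw [Finset.mem_compl] at hiSc
        rcases hout i hiSc with h | h
        · rw [h, mul_zero]
        · exact absurd (by rw [hBdef, Finset.mem_filter]; exact ⟨Finset.mem_univ i, hiSc, h⟩) hiB
      rw [← e1]
      apply Finset.sum_congr rfl
      intro i hi
      rw [(hBS i hi).2, mul_one]
    rw [h1, h2, hb, hsplit, hcompl]
    ring
  have hsolve : solveS W S (fun a => b a - ∑ i ∈ B, W a i)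
      = fun l => v ((σ l : Fin n)) := by
    rw [solveS, dif_pos hS, ← hkey, Matrix.mulVec_mulVec,
      Matrix.nonsing_inv_mul _ (isUnit_iff_ne_zero.mpr hdet), Matrix.one_mulVec]
  have hdisjSB : Disjoint S B := by
    rw [Finset.disjoint_left]
    intro i hiS hiB
    exact (hBS i hiB).1 hiS
  have hIoo : ∀ l : Fin k, v ((σ l : Fin n)) ∈ Set.Ioo (0:ℝ) 1 := by
    intro l
    obtain ⟨hne0, hne1⟩ := hgen S hS hsubdet B hdisjSB l
    rw [hsolve] at hne0 hne1
    exact ⟨lt_of_le_of_ne (hv01 _).1 (Ne.symm hne0), lt_of_le_of_ne (hv01 _).2 hne1⟩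
  have hSfrac : ∀ i ∈ S, v i ∈ Set.Ioo (0:ℝ) 1 := by
    intro i hi
    have := hIoo (σ.symm ⟨i, hi⟩)
    rwa [σ.apply_symm_apply ⟨i, hi⟩] at this
  -- the valid partition
  set π : Finset (Fin n) × Finset (Fin n) × Finset (Fin n) := (A, S, B) with hπdef
  have hvalid : IsValidPartition W b π := by
    refine ⟨?_, ?_, ?_, ?_, hS, hsubdet, ?_⟩
    · rw [Finset.disjoint_left]
      intro i hiA hiS
      exact (hAS i hiA).1 hiS
    · rw [Finset.disjoint_left]
      intro i hiA hiB
      exact (hAS i hiA).2 (hBS i hiB).2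
    · exact hdisjSB
    · ext i
      simp only [Finset.mem_union, Finset.mem_univ, iff_true]
      by_cases hiS : i ∈ S
      · exact Or.inl (Or.inr hiS)
      · by_cases h1 : v i = 1
        · exact Or.inr (by show i ∈ B; rw [hBdef, Finset.mem_filter]; exact ⟨Finset.mem_univ i, hiS, h1⟩)
        · exact Or.inl (Or.inl (by show i ∈ A; rw [hAdef, Finset.mem_filter]; exact ⟨Finset.mem_univ i, hiS, h1⟩))
    · intro l
      show solveS W S (fun a => b a - ∑ i ∈ B, W a i) l ∈ Set.Ioo (0:ℝ) 1
      rw [hsolve]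
      exact hIoo l
  -- positivity of the term at x
  have hxA : ∀ i ∈ A, 0 < 1 - x i := by
    intro i hi
    have hne : x i ≠ 1 := fun h => (hAS i hi).2 (hv1 i h)
    have := (hx01 i).2
    have := lt_of_le_of_ne (hx01 i).2 hne
    linarith
  have hxB : ∀ i ∈ B, 0 < x i := by
    intro i hi
    have hne : x i ≠ 0 := fun h => by
      have h0 := hv0 i h
      have h1 := (hBS i hi).2
      rw [h0] at h1
      exact one_ne_zero h1.symm
    exact lt_of_le_of_ne (hx01 i).1 (Ne.symm hne)
  have hxS : ∀ i ∈ S, 0 < x i * (1 - x i) := by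
    intro i hi
    have hfr := hSfrac i hi
    have hne0 : x i ≠ 0 := fun h => by
      rw [hv0 i h] at hfr; exact lt_irrefl 0 hfr.1
    have hne1 : x i ≠ 1 := fun h => by
      rw [hv1 i h] at hfr; exact lt_irrefl 1 hfr.2
    have h0 := lt_of_le_of_ne (hx01 i).1 (Ne.symm hne0)
    have h1 := lt_of_le_of_ne (hx01 i).2 hne1
    exact mul_pos h0 (by linarith)
  have hpos : 0 < Ppart W π x := by
    rw [Ppart]
    have hd : 0 < |subDet W π.2.1| := abs_pos.mpr hsubdet
    exact mul_pos (mul_pos (mul_pos hd (Finset.prod_pos hxA)) (Finset.prod_pos hxB))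
      (Finset.prod_pos hxS)
  -- all terms are nonnegative
  have hnonneg : ∀ ρ ∈ Finset.univ.filter (fun ρ => IsValidPartition W b ρ),
      0 ≤ Ppart W ρ x := by
    intro ρ _
    rw [Ppart]
    have h1 : 0 ≤ ∏ i ∈ ρ.1, (1 - x i) :=
      Finset.prod_nonneg fun i _ => by linarith [(hx01 i).2]
    have h2 : 0 ≤ ∏ i ∈ ρ.2.2, x i :=
      Finset.prod_nonneg fun i _ => (hx01 i).1
    have h3 : 0 ≤ ∏ i ∈ ρ.2.1, x i * (1 - x i) :=
      Finset.prod_nonneg fun i _ => mul_nonneg (hx01 i).1 (by linarith [(hx01 i).2])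
    exact mul_nonneg (mul_nonneg (mul_nonneg (abs_nonneg _) h1) h2) h3
  exact Finset.sum_pos' hnonneg
    ⟨π, Finset.mem_filter.mpr ⟨Finset.mem_univ π, hvalid⟩, hpos⟩
end

section
/- In the zonotope setting, let i, t ∈ I with i ≠ t. If σ_i = −σ_t and σ_i ≠ 0, then the regions Z_B^i and Z_A^t are disjoint: Z_B^i ∩ Z_A^t = ∅. -/
open scoped Classical

noncomputable section

/-- The family of `k + 1` vectors `w¹, …, w^k, w^j` indexed by `I = {1,…,k} ∪ {j}`,
realized as `Option (Fin k)` with `none` playing the role of the extra index `j`. -/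
def vecs {k : ℕ} (w : Fin k → (Fin k → ℝ)) (wj : Fin k → ℝ) :
    Option (Fin k) → (Fin k → ℝ) :=
  fun o => o.elim wj w

/-- The signs `σ_i` for `i ∈ I`: for `i ∈ {1,…,k}`,
`σ_i = sign(det W_{[i→j]} / det [w¹ ⋯ w^k])` where `W_{[i→j]}` is `[w¹ ⋯ w^k]` with
its `i`-th column replaced by `w^j`; and `σ_j = −1`. -/
def sigOf {k : ℕ} (w : Fin k → (Fin k → ℝ)) (wj : Fin k → ℝ) : Option (Fin k) → ℝ :=
  fun o => o.elim (-1) fun i =>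
    Real.sign ((Matrix.of fun a l => if l = i then wj a else w l a).det /
      (Matrix.of fun a l => w l a).det)

/-- The open parallelotope `Z_A^i = {∑_{r ∈ I ∖ {i}} λ_r w^r : λ_r ∈ (0,1)}`
if the `k` vectors `{w^r}_{r ∈ I ∖ {i}}` are linearly independent, and `∅`
otherwise. -/
def ZA {k : ℕ} (w : Fin k → (Fin k → ℝ)) (wj : Fin k → ℝ) (i : Option (Fin k)) :
    Set (Fin k → ℝ) :=
  if LinearIndependent ℝ (fun r : {r : Option (Fin k) // r ≠ i} => vecs w wj r.1) then
    {x | ∃ lam : Option (Fin k) → ℝ,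
      (∀ r : Option (Fin k), r ≠ i → lam r ∈ Set.Ioo (0 : ℝ) 1) ∧
      x = ∑ r ∈ Finset.univ.erase i, lam r • vecs w wj r}
  else ∅

/-- The translated open parallelotope `Z_B^i = w^i + Z_A^i`. -/
def ZB {k : ℕ} (w : Fin k → (Fin k → ℝ)) (wj : Fin k → ℝ) (i : Option (Fin k)) :
    Set (Fin k → ℝ) :=
  (fun y => vecs w wj i + y) '' ZA w wj i

end

/-!
Since `w¹, …, w^k` is a basis, the linear relations among the `k + 1` vectors `w^r`, `r ∈ I`,
form a line spanned by the vector `C` with `C_j = -1` and, by Cramer's rule,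
`C_i = det W_{[i→j]} / det W`; thus `σ = sign ∘ C`. A point of `Z_B^i ∩ Z_A^t` has two
representations `∑ λ_r w^r = ∑ μ_r w^r` with `λ_i = 1`, `λ > 0`, `μ_t = 0`, `μ < 1`, so `λ - μ`
is a relation, i.e. a multiple `s C`, with `s C_i > 0` and `s C_t > 0`. Hence `C_i` and `C_t`
have the same nonzero sign, which is incompatible with `σ_i = -σ_t`.
-/

open Finset Matrix

lemma Real.sign_ne_neg_sign_of_mul_pos {s a b : ℝ} (ha : 0 < s * a) (hb : 0 < s * b) :
    Real.sign a ≠ -Real.sign b := by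
  rcases mul_pos_iff.mp ha with ⟨hs, ha⟩ | ⟨hs, ha⟩ <;>
    rcases mul_pos_iff.mp hb with ⟨hs', hb⟩ | ⟨hs', hb⟩
  all_goals first
    | linarith
    | simp only [Real.sign_of_pos, Real.sign_of_neg, ha, hb]; norm_num

lemma Matrix.of_cols_mulVec {m n R : Type*} [Fintype n] [CommSemiring R] (w : n → m → R)
    (e : n → R) :
    (Matrix.of fun a l => w l a) *ᵥ e = ∑ l, e l • w l := by
  change (of w)ᵀ *ᵥ e = _
  rw [mulVec_transpose, vecMul_eq_sum]
  rfl

lemma Finset.sum_update_smul_eq_add_sum_erase {ι R M : Type*} [Fintype ι] [DecidableEq ι]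
    [Semiring R] [AddCommMonoid M] [Module R M] (f : ι → R) (v : ι → M) (i : ι) (c : R) :
    ∑ r, Function.update f i c r • v r = c • v i + ∑ r ∈ univ.erase i, f r • v r := by
  rw [← add_sum_erase _ _ (mem_univ i), Function.update_self]
  congr 1
  exact sum_congr rfl fun r hr => by rw [Function.update_of_ne (ne_of_mem_erase hr)]

section Zonotope

variable {k : ℕ} (w : Fin k → Fin k → ℝ) (wj : Fin k → ℝ)

/-- By Cramer's rule, the coefficients of the linear relation `∑_{r ∈ I} C_r w^r = 0` normalized
by `C_j = -1`. -/
noncomputable def dependencyCoeff : Option (Fin k) → ℝ :=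
  fun o => o.elim (-1) fun i =>
    (Matrix.of fun a l => if l = i then wj a else w l a).det / (Matrix.of fun a l => w l a).det

lemma sigOf_eq_sign_dependencyCoeff (r : Option (Fin k)) :
    sigOf w wj r = Real.sign (dependencyCoeff w wj r) := by
  cases r with
  | none => simp [sigOf, dependencyCoeff, Real.sign_of_neg]
  | some r => rfl

lemma dependencyCoeff_some (i : Fin k) :
    dependencyCoeff w wj (some i) =
      (Matrix.of fun a l => w l a).det⁻¹ * cramer (Matrix.of fun a l => w l a) wj i := by
  have hcol : (Matrix.of fun a l => if l = i then wj a else w l a) =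
      (Matrix.of fun a l => w l a).updateCol i wj := by
    ext a m
    simp [updateCol_apply]
  rw [cramer_apply, inv_mul_eq_div, ← hcol]
  rfl

variable {w wj}

lemma eq_smul_dependencyCoeff_of_sum_smul_vecs_eq_zero
    (hdet : (Matrix.of fun a l => w l a).det ≠ 0) {D : Option (Fin k) → ℝ}
    (hD : ∑ r, D r • vecs w wj r = 0) :
    D = -D none • dependencyCoeff w wj := by
  set M : Matrix (Fin k) (Fin k) ℝ := Matrix.of fun a l => w l a
  have hsome : D ∘ some = -D none • (M.det⁻¹ • M.cramer wj) := by
    refine mulVec_injective_of_det_ne_zero hdet ?_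
    rw [mulVec_smul, mulVec_smul, mulVec_cramer, inv_smul_smul₀ hdet,
      of_cols_mulVec, neg_smul, eq_neg_iff_add_eq_zero, ← hD, Fintype.sum_option, add_comm]
    rfl
  funext r
  cases r with
  | none => simp [dependencyCoeff]
  | some l => simpa [dependencyCoeff_some, mul_comm] using congrFun hsome l

lemma exists_coeffs_of_mem_ZA {t : Option (Fin k)} {x : Fin k → ℝ} (hx : x ∈ ZA w wj t) :
    ∃ lam : Option (Fin k) → ℝ, (∀ r, r ≠ t → lam r ∈ Set.Ioo (0 : ℝ) 1) ∧
      x = ∑ r ∈ univ.erase t, lam r • vecs w wj r := by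
  unfold ZA at hx
  split_ifs at hx
  · exact hx
  · exact hx.elim

lemma exists_sum_smul_vecs_of_mem_ZA {t : Option (Fin k)} {x : Fin k → ℝ}
    (hx : x ∈ ZA w wj t) :
    ∃ mu : Option (Fin k) → ℝ, (∀ r, mu r < 1) ∧ mu t = 0 ∧ x = ∑ r, mu r • vecs w wj r := by
  obtain ⟨lam, hlam, rfl⟩ := exists_coeffs_of_mem_ZA hx
  refine ⟨Function.update lam t 0, fun r => ?_, Function.update_self .., ?_⟩
  · rcases eq_or_ne r t with rfl | hr
    · simp
    · simpa [hr] using (hlam r hr).2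
  · rw [sum_update_smul_eq_add_sum_erase, zero_smul, zero_add]

lemma exists_sum_smul_vecs_of_mem_ZB {i : Option (Fin k)} {x : Fin k → ℝ}
    (hx : x ∈ ZB w wj i) :
    ∃ lam : Option (Fin k) → ℝ, (∀ r, 0 < lam r) ∧ lam i = 1 ∧ x = ∑ r, lam r • vecs w wj r := by
  obtain ⟨y, hy, rfl⟩ := hx
  obtain ⟨lam, hlam, rfl⟩ := exists_coeffs_of_mem_ZA hy
  refine ⟨Function.update lam i 1, fun r => ?_, Function.update_self .., ?_⟩
  · rcases eq_or_ne r i with rfl | hr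
    · simp
    · simpa [hr] using (hlam r hr).1
  · rw [sum_update_smul_eq_add_sum_erase, one_smul]

end Zonotope

theorem ZB_ZA_disjoint_of_opposite_signs_general (k : ℕ)
    (w : Fin k → (Fin k → ℝ)) (wj : Fin k → ℝ)
    (hdet : (Matrix.of fun a l => w l a).det ≠ 0)
    (i t : Option (Fin k))
    (hsig : sigOf w wj i = - sigOf w wj t) :
    ZB w wj i ∩ ZA w wj t = ∅ := by
  refine Set.eq_empty_iff_forall_notMem.mpr fun x ⟨hxB, hxA⟩ => ?_
  obtain ⟨lam, hlam, hlam_i, rfl⟩ := exists_sum_smul_vecs_of_mem_ZB hxB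
  obtain ⟨mu, hmu, hmu_t, hx⟩ := exists_sum_smul_vecs_of_mem_ZA hxA
  have hrel : ∑ r, (lam - mu) r • vecs w wj r = 0 := by
    simp only [Pi.sub_apply, sub_smul, sum_sub_distrib, hx, sub_self]
  have hi : 0 < (lam - mu) i := by simpa [hlam_i] using hmu i
  have ht : 0 < (lam - mu) t := by simpa [hmu_t] using hlam t
  rw [eq_smul_dependencyCoeff_of_sum_smul_vecs_eq_zero hdet hrel] at hi ht
  rw [sigOf_eq_sign_dependencyCoeff, sigOf_eq_sign_dependencyCoeff] at hsig
  exact Real.sign_ne_neg_sign_of_mul_pos hi ht hsig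

/-- If `i ≠ t` in `I`, `σ_i = −σ_t` and `σ_i ≠ 0`, then the regions `Z_B^i` and
`Z_A^t` are disjoint. -/
theorem ZB_ZA_disjoint_of_opposite_signs (k : ℕ) (hk : 1 ≤ k)
    (w : Fin k → (Fin k → ℝ)) (wj : Fin k → ℝ)
    (hdet : (Matrix.of fun a l => w l a).det ≠ 0)
    (i t : Option (Fin k)) (hit : i ≠ t)
    (hsig : sigOf w wj i = - sigOf w wj t) (hne : sigOf w wj i ≠ 0) :
    ZB w wj i ∩ ZA w wj t = ∅ :=
  ZB_ZA_disjoint_of_opposite_signs_general k w wj hdet i t hsig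
end

section
/- In the zonotope setting, the 'positive' regions — namely Z_B^i for those i ∈ I with σ_i = −1 together with Z_A^i for those i ∈ I with σ_i = +1 — are pairwise disjoint, and the union of their topological closures equals the zonotope Zon(w^1,…,w^k,w^j) = {∑_{r∈I} λ_r w^r : λ_r ∈ [0,1] for all r ∈ I}. The same two assertions hold for the 'negative' regions, namely Z_A^i for σ_i = −1 together with Z_B^i for σ_i = +1. -/
open scoped Classical

noncomputable section

/-- The 'positive' region of index `i ∈ I`: `Z_A^i` if `σ_i = +1`, `Z_B^i` if
`σ_i = −1`, and `∅` otherwise. -/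
def posRegion {k : ℕ} (w : Fin k → (Fin k → ℝ)) (wj : Fin k → ℝ)
    (i : Option (Fin k)) : Set (Fin k → ℝ) :=
  if sigOf w wj i = 1 then ZA w wj i
  else if sigOf w wj i = -1 then ZB w wj i else ∅

/-- The 'negative' region of index `i ∈ I`: `Z_A^i` if `σ_i = −1`, `Z_B^i` if
`σ_i = +1`, and `∅` otherwise. -/
def negRegion {k : ℕ} (w : Fin k → (Fin k → ℝ)) (wj : Fin k → ℝ)
    (i : Option (Fin k)) : Set (Fin k → ℝ) :=
  if sigOf w wj i = -1 then ZA w wj i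
  else if sigOf w wj i = 1 then ZB w wj i else ∅

/-- The closed zonotope `Zon(w¹, …, w^k, w^j) = {∑_{r∈I} λ_r w^r : λ_r ∈ [0,1]}`. -/
def zonotope {k : ℕ} (w : Fin k → (Fin k → ℝ)) (wj : Fin k → ℝ) :
    Set (Fin k → ℝ) :=
  {x | ∃ lam : Option (Fin k) → ℝ,
    (∀ r : Option (Fin k), lam r ∈ Set.Icc (0 : ℝ) 1) ∧
    x = ∑ r : Option (Fin k), lam r • vecs w wj r}

end

namespace ZonAux

variable {k : ℕ} (w : Fin k → (Fin k → ℝ)) (wj : Fin k → ℝ)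

noncomputable def M : Matrix (Fin k) (Fin k) ℝ := Matrix.of fun a l => w l a

noncomputable def c : Fin k → ℝ := fun i =>
  (Matrix.of fun a l => if l = i then wj a else w l a).det / (M w).det

lemma sig_none : sigOf w wj none = -1 := rfl

lemma sig_some (i : Fin k) : sigOf w wj (some i) = Real.sign (c w wj i) := rfl

lemma sum_smul_eq_mulVec (a : Fin k → ℝ) : ∑ l, a l • w l = (M w).mulVec a := by
  funext i
  simp [Matrix.mulVec, dotProduct, M, Finset.sum_apply, mul_comm]

lemma uniq (hdet : (M w).det ≠ 0) {a b : Fin k → ℝ} (h : ∑ l, a l • w l = ∑ l, b l • w l) : a = b := by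
  have : Invertible (M w) := (M w).invertibleOfIsUnitDet (isUnit_iff_ne_zero.mpr hdet)
  rw [sum_smul_eq_mulVec, sum_smul_eq_mulVec] at h
  exact Matrix.mulVec_injective_of_invertible (M w) h

lemma wj_eq (hdet : (M w).det ≠ 0) : wj = ∑ l, c w wj l • w l := by
  have hup : (fun i => (Matrix.of fun a l => if l = i then wj a else w l a).det)
      = fun i => ((M w).updateCol i wj).det := by
    funext i; congr 1
    ext a l
    simp [Matrix.updateCol_apply, M]
  have hc : c w wj = ((M w).det)⁻¹ • (M w).cramer wj := by
    funext i
    simp [c, Matrix.cramer_apply, hup, div_eq_inv_mul, congrFun hup i]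
  rw [sum_smul_eq_mulVec, hc, Matrix.mulVec_smul, Matrix.mulVec_cramer]
  rw [smul_smul, inv_mul_cancel₀ hdet, one_smul]


noncomputable def coeffs (lam : Option (Fin k) → ℝ) : Fin k → ℝ :=
  fun r => lam (some r) + lam none * c w wj r

lemma sum_vecs (hdet : (M w).det ≠ 0) (lam : Option (Fin k) → ℝ) :
    ∑ r : Option (Fin k), lam r • vecs w wj r = ∑ r, coeffs w wj lam r • w r := by
  rw [Fintype.sum_option]
  have : (vecs w wj none : Fin k → ℝ) = ∑ l, c w wj l • w l := wj_eq w wj hdet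
  rw [this, Finset.smul_sum]
  have : ∀ r, lam none • c w wj r • w r = (lam none * c w wj r) • w r := by
    intro r; rw [smul_smul]
  simp_rw [this]
  rw [← Finset.sum_add_distrib]
  exact Finset.sum_congr rfl fun r _ => by
    show (lam none * c w wj r) • w r + lam (some r) • w r = (lam (some r) + lam none * c w wj r) • w r
    rw [add_smul]
    exact add_comm _ _

lemma coeffs_uniq (hdet : (M w).det ≠ 0) {x : Fin k → ℝ} {m : Fin k → ℝ}
    (hx : x = ∑ r, m r • w r) {lam : Option (Fin k) → ℝ}
    (hl : x = ∑ r : Option (Fin k), lam r • vecs w wj r) : m = coeffs w wj lam := by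
  apply uniq w hdet
  rw [← hx, hl, sum_vecs w wj hdet]

lemma sum_univ_ite (i : Option (Fin k)) (v : ℝ) (lam : Option (Fin k) → ℝ) :
    ∑ r : Option (Fin k), (if r = i then v else lam r) • vecs w wj r
      = v • vecs w wj i + ∑ r ∈ Finset.univ.erase i, lam r • vecs w wj r := by
  rw [← Finset.add_sum_erase _ _ (Finset.mem_univ i), if_pos rfl]
  congr 1
  exact Finset.sum_congr rfl fun r hr => by rw [if_neg (Finset.ne_of_mem_erase hr)]

lemma li_aux (hdet : (M w).det ≠ 0) (i : Option (Fin k))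
    (hci : ∀ i0, i = some i0 → c w wj i0 ≠ 0) :
    LinearIndependent ℝ (fun r : {r : Option (Fin k) // r ≠ i} => vecs w wj r.1) := by
  rw [Fintype.linearIndependent_iff]
  intro g hg r0
  classical
  set G : Option (Fin k) → ℝ := fun r => if h : r = i then 0 else g ⟨r, h⟩ with hG
  have hGi : G i = 0 := by simp [hG]
  have hGr : ∀ r : {r : Option (Fin k) // r ≠ i}, G r.1 = g r := by
    intro r; simp [hG, r.2]
  have hsum : ∑ r : Option (Fin k), G r • vecs w wj r = 0 := by
    rw [← Finset.add_sum_erase _ _ (Finset.mem_univ i), hGi, zero_smul, zero_add]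
    rw [Finset.sum_subtype (p := fun r => r ≠ i) (Finset.univ.erase i)
      (fun r => by simp [Finset.mem_erase]) (fun r => G r • vecs w wj r)]
    rw [← hg]
    exact Finset.sum_congr rfl fun r _ => by rw [hGr]
  have hcoe : coeffs w wj G = fun _ => 0 := by
    apply uniq w hdet
    rw [← sum_vecs w wj hdet, hsum]
    simp
  have hco : ∀ r : Fin k, G (some r) + G none * c w wj r = 0 :=
    fun r => congrFun hcoe r
  have hnone : G none = 0 := by
    rcases i with _ | i0
    · simp [hG]
    · have h0 : G (some i0) = 0 := by simp [hG]
      have := hco i0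
      rw [h0, zero_add] at this
      rcases mul_eq_zero.mp this with h | h
      · exact h
      · exact absurd h (hci i0 rfl)
  have hsome : ∀ r : Fin k, G (some r) = 0 := by
    intro r
    have := hco r
    rw [hnone, zero_mul, add_zero] at this
    exact this
  rw [← hGr r0]
  rcases hr : r0.1 with _ | r1
  · rw [hnone]
  · rw [hsome]


def Pt (cc m : Fin k → ℝ) (i : Option (Fin k)) (t : ℝ) : Prop :=
  (∀ r : Fin k, some r ≠ i → m r - t * cc r ∈ Set.Ioo (0:ℝ) 1) ∧
  (match i with
   | none => t = 1
   | some i0 => t ∈ Set.Ioo (0:ℝ) 1 ∧ cc i0 ≠ 0 ∧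
       m i0 - t * cc i0 = (if 0 < cc i0 then 0 else 1))

def PtC (cc m : Fin k → ℝ) (i : Option (Fin k)) (t : ℝ) : Prop :=
  (∀ r : Fin k, some r ≠ i → m r - t * cc r ∈ Set.Icc (0:ℝ) 1) ∧
  (match i with
   | none => t = 1
   | some i0 => t ∈ Set.Icc (0:ℝ) 1 ∧ cc i0 ≠ 0 ∧
       m i0 - t * cc i0 = (if 0 < cc i0 then 0 else 1))

lemma Pt_lt {cc m : Fin k → ℝ} {i i' : Option (Fin k)} {t t' : ℝ}
    (h : Pt cc m i t) (h' : Pt cc m i' t') (hne : i ≠ i') (hlt : t < t') : False := by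
  rcases i with _ | i0
  · have ht : t = 1 := h.2
    rcases i' with _ | i0'
    · exact hne rfl
    · have := h'.2.1.2
      linarith
  · obtain ⟨ht, hc0, hbd⟩ := h.2
    have hmem : m i0 - t' * cc i0 ∈ Set.Ioo (0:ℝ) 1 := by
      apply h'.1
      intro hcon
      exact hne (by rw [hcon])
    by_cases hpos : 0 < cc i0
    · rw [if_pos hpos] at hbd
      have : m i0 - t' * cc i0 < 0 := by nlinarith
      linarith [hmem.1]
    · have hneg : cc i0 < 0 := lt_of_le_of_ne (not_lt.mp hpos) hc0
      rw [if_neg hpos] at hbd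
      have : 1 < m i0 - t' * cc i0 := by nlinarith
      linarith [hmem.2]

lemma Pt_eq_aux {cc m : Fin k → ℝ} {i0 : Fin k} {i' : Option (Fin k)} {t : ℝ}
    (h : Pt cc m (some i0) t) (h' : Pt cc m i' t) (hne : (some i0 : Option (Fin k)) ≠ i') :
    False := by
  obtain ⟨ht, hc0, hbd⟩ := h.2
  have hmem : m i0 - t * cc i0 ∈ Set.Ioo (0:ℝ) 1 := h'.1 i0 hne
  by_cases hpos : 0 < cc i0
  · rw [if_pos hpos] at hbd
    rw [hbd] at hmem
    exact lt_irrefl _ hmem.1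
  · rw [if_neg hpos] at hbd
    rw [hbd] at hmem
    exact lt_irrefl _ hmem.2

lemma Pt_disjoint {cc m : Fin k → ℝ} {i i' : Option (Fin k)} {t t' : ℝ}
    (h : Pt cc m i t) (h' : Pt cc m i' t') (hne : i ≠ i') : False := by
  rcases lt_trichotomy t t' with hlt | heq | hgt
  · exact Pt_lt h h' hne hlt
  · subst heq
    rcases i with _ | i0
    · rcases i' with _ | i0'
      · exact hne rfl
      · exact Pt_eq_aux h' h (Ne.symm hne)
    · exact Pt_eq_aux h h' hne
  · exact Pt_lt h' h (Ne.symm hne) hgt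

lemma Pt_cover (hk : 1 ≤ k) (cc m : Fin k → ℝ) {t0 : ℝ} (ht0 : t0 ∈ Set.Icc (0:ℝ) 1)
    (hm : ∀ r, m r - t0 * cc r ∈ Set.Icc (0:ℝ) 1) :
    ∃ (i : Option (Fin k)) (t : ℝ), PtC cc m i t := by
  classical
  set K : Set ℝ := Set.Icc (0:ℝ) 1 ∩ ⋂ r : Fin k, (fun t => m r - t * cc r) ⁻¹' Set.Icc (0:ℝ) 1
    with hK
  have hKne : t0 ∈ K := ⟨ht0, Set.mem_iInter.mpr fun r => hm r⟩
  have hKclosed : IsClosed K := by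
    apply isClosed_Icc.inter
    apply isClosed_iInter
    intro r
    exact IsClosed.preimage (by continuity) isClosed_Icc
  have hKcomp : IsCompact K := isCompact_Icc.of_isClosed_subset hKclosed
    Set.inter_subset_left
  have htmax : sSup K ∈ K := hKcomp.sSup_mem ⟨t0, hKne⟩
  set tm := sSup K with htm
  have htm01 : tm ∈ Set.Icc (0:ℝ) 1 := htmax.1
  have htmK : ∀ r, m r - tm * cc r ∈ Set.Icc (0:ℝ) 1 := fun r =>
    Set.mem_iInter.mp htmax.2 r
  rcases eq_or_lt_of_le htm01.2 with h1 | h1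
  · refine ⟨none, 1, ?_, rfl⟩
    intro r _
    have := htmK r
    rwa [h1] at this
  · have hbind : ∃ i0 : Fin k, (0 < cc i0 ∧ m i0 - tm * cc i0 = 0) ∨
        (cc i0 < 0 ∧ m i0 - tm * cc i0 = 1) := by
      by_contra hno
      push_neg at hno
      set δ : Fin k → ℝ := fun r =>
        if 0 < cc r then (m r - tm * cc r) / cc r
        else if cc r < 0 then (m r - tm * cc r - 1) / cc r else 1 with hδ
      have hδpos : ∀ r, 0 < δ r := by
        intro r
        rcases hno r with ⟨hn1, hn2⟩
        by_cases hp : 0 < cc r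
        · have : 0 < m r - tm * cc r :=
            lt_of_le_of_ne (htmK r).1 (fun hh => hn1 hp hh.symm)
          simp only [hδ, if_pos hp]
          positivity
        · by_cases hg : cc r < 0
          · have : m r - tm * cc r - 1 < 0 := by
              have h2 := (htmK r).2
              rcases eq_or_lt_of_le h2 with he | hl
              · exact absurd he (hn2 hg)
              · linarith
            simp only [hδ, if_neg hp, if_pos hg]
            exact div_pos_of_neg_of_neg this hg
          · simp [hδ, hp, hg]
      have hne : (Finset.univ : Finset (Fin k)).Nonempty :=
        ⟨⟨0, hk⟩, Finset.mem_univ _⟩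
      set ε : ℝ := min (1 - tm) (Finset.univ.inf' hne δ) with hε
      have hεpos : 0 < ε := lt_min (by linarith)
        ((Finset.lt_inf'_iff hne).mpr fun r _ => hδpos r)
      have hεle : ∀ r, ε ≤ δ r := fun r =>
        le_trans (min_le_right _ _) (Finset.inf'_le δ (Finset.mem_univ r))
      have htmK' : tm + ε ∈ K := by
        refine ⟨⟨by linarith [htm01.1], by
          have h2 : ε ≤ 1 - tm := min_le_left _ _
          linarith⟩, ?_⟩
        rw [Set.mem_iInter]
        intro r
        simp only [Set.mem_preimage, Set.mem_Icc]
        have h0 := (htmK r).1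
        have h1' := (htmK r).2
        by_cases hp : 0 < cc r
        · have h := hεle r
          simp only [hδ, if_pos hp] at h
          have hd : ε * cc r ≤ m r - tm * cc r := by
            calc ε * cc r ≤ ((m r - tm * cc r) / cc r) * cc r :=
                  mul_le_mul_of_nonneg_right h (le_of_lt hp)
              _ = m r - tm * cc r := div_mul_cancel₀ _ (ne_of_gt hp)
          constructor
          · nlinarith
          · nlinarith [mul_pos hεpos hp]
        · by_cases hg : cc r < 0
          · have h := hεle r
            simp only [hδ, if_neg hp, if_pos hg] at h
            have hd : m r - tm * cc r - 1 ≤ ε * cc r := by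
              calc m r - tm * cc r - 1
                  = ((m r - tm * cc r - 1) / cc r) * cc r :=
                    (div_mul_cancel₀ _ (ne_of_lt hg)).symm
                _ ≤ ε * cc r := mul_le_mul_of_nonpos_right h (le_of_lt hg)
            constructor
            · nlinarith [mul_neg_of_pos_of_neg hεpos hg]
            · nlinarith
          · have hz : cc r = 0 := le_antisymm (not_lt.mp hp) (not_lt.mp hg)
            rw [hz]
            constructor <;> [nlinarith; nlinarith]
      have hle : tm + ε ≤ tm := le_csSup (hKcomp.bddAbove) htmK'
      linarith
    obtain ⟨i0, hi0⟩ := hbind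
    refine ⟨some i0, tm, fun r _ => htmK r, htm01, ?_, ?_⟩
    · rcases hi0 with ⟨hp, _⟩ | ⟨hg, _⟩
      · exact ne_of_gt hp
      · exact ne_of_lt hg
    · rcases hi0 with ⟨hp, hb⟩ | ⟨hg, hb⟩
      · rw [if_pos hp]; exact hb
      · rw [if_neg (not_lt.mpr (le_of_lt hg))]; exact hb


lemma ZA_eq_of_li (i : Option (Fin k))
    (hLI : LinearIndependent ℝ (fun r : {r : Option (Fin k) // r ≠ i} => vecs w wj r.1)) :
    ZA w wj i = {x | ∃ lam : Option (Fin k) → ℝ,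
      (∀ r : Option (Fin k), r ≠ i → lam r ∈ Set.Ioo (0 : ℝ) 1) ∧
      x = ∑ r ∈ Finset.univ.erase i, lam r • vecs w wj r} := by
  rw [ZA, if_pos hLI]

lemma sign_pos_of {i0 : Fin k} (h : sigOf w wj (some i0) = 1) : 0 < c w wj i0 := by
  rcases lt_trichotomy (c w wj i0) 0 with hl | he | hg
  · rw [sig_some, Real.sign_of_neg hl] at h; norm_num at h
  · rw [sig_some, he, Real.sign_zero] at h; norm_num at h
  · exact hg

lemma sign_neg_of {i0 : Fin k} (h : sigOf w wj (some i0) = -1) : c w wj i0 < 0 := by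
  rcases lt_trichotomy (c w wj i0) 0 with hl | he | hg
  · exact hl
  · rw [sig_some, he, Real.sign_zero] at h; norm_num at h
  · rw [sig_some, Real.sign_of_pos hg] at h; norm_num at h

/-- The canonical coefficient function. -/
noncomputable def base (m : Fin k → ℝ) (t : ℝ) : Option (Fin k) → ℝ :=
  fun r => r.elim t fun r' => m r' - t * c w wj r'

lemma sum_base (hdet : (M w).det ≠ 0) (m : Fin k → ℝ) (t : ℝ) :
    ∑ r : Option (Fin k), base w wj m t r • vecs w wj r = ∑ r, m r • w r := by
  rw [sum_vecs w wj hdet]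
  congr 1
  funext r
  have : coeffs w wj (base w wj m t) r = m r := by
    simp only [coeffs, base, Option.elim]
    ring
  rw [this]

lemma mem_closure_ZA (i : Option (Fin k))
    (hLI : LinearIndependent ℝ (fun r : {r : Option (Fin k) // r ≠ i} => vecs w wj r.1))
    {x : Fin k → ℝ} (lam : Option (Fin k) → ℝ)
    (hlam : ∀ r, r ≠ i → lam r ∈ Set.Icc (0:ℝ) 1)
    (hx : x = ∑ r ∈ Finset.univ.erase i, lam r • vecs w wj r) :
    x ∈ closure (ZA w wj i) := by
  classical
  set f : (Option (Fin k) → ℝ) → (Fin k → ℝ) :=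
    fun l => ∑ r ∈ Finset.univ.erase i, l r • vecs w wj r with hf
  have hcont : Continuous f := by
    apply continuous_finset_sum
    intro r _
    exact (continuous_apply r).smul continuous_const
  have hZA : ZA w wj i = f '' (Set.pi {i}ᶜ fun _ => Set.Ioo (0:ℝ) 1) := by
    rw [ZA_eq_of_li w wj i hLI]
    ext y
    constructor
    · rintro ⟨l, hl, rfl⟩
      exact ⟨l, fun r hr => hl r hr, rfl⟩
    · rintro ⟨l, hl, rfl⟩
      exact ⟨l, fun r hr => hl r hr, rfl⟩
  have hmem : lam ∈ closure (Set.pi {i}ᶜ fun _ => Set.Ioo (0:ℝ) 1) := by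
    rw [closure_pi_set]
    intro r hr
    rw [closure_Ioo (by norm_num : (0:ℝ) ≠ 1)]
    exact hlam r hr
  rw [hZA]
  exact image_closure_subset_closure_image hcont ⟨lam, hmem, hx.symm⟩

lemma mem_closure_ZB (i : Option (Fin k))
    (hLI : LinearIndependent ℝ (fun r : {r : Option (Fin k) // r ≠ i} => vecs w wj r.1))
    {x : Fin k → ℝ} (lam : Option (Fin k) → ℝ)
    (hlam : ∀ r, r ≠ i → lam r ∈ Set.Icc (0:ℝ) 1)
    (hx : x = vecs w wj i + ∑ r ∈ Finset.univ.erase i, lam r • vecs w wj r) :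
    x ∈ closure (ZB w wj i) := by
  have hy : (∑ r ∈ Finset.univ.erase i, lam r • vecs w wj r) ∈ closure (ZA w wj i) :=
    mem_closure_ZA w wj i hLI lam hlam rfl
  rw [ZB]
  have himg : (fun y => vecs w wj i + y) '' ZA w wj i
      = (Homeomorph.addLeft (vecs w wj i)) '' ZA w wj i := rfl
  rw [himg, ← Homeomorph.image_closure]
  exact ⟨_, hy, by rw [hx]; rfl⟩

lemma PtC_mem_closure (hdet : (M w).det ≠ 0) {x m : Fin k → ℝ}
    (hx : x = ∑ r, m r • w r) {i : Option (Fin k)} {t : ℝ}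
    (h : PtC (c w wj) m i t) : x ∈ closure (posRegion w wj i) := by
  classical
  have hbase : ∑ r : Option (Fin k), base w wj m t r • vecs w wj r = x := by
    rw [sum_base w wj hdet, ← hx]
  have hsplit : x = base w wj m t i • vecs w wj i
      + ∑ r ∈ Finset.univ.erase i, base w wj m t r • vecs w wj r := by
    rw [← hbase, ← Finset.add_sum_erase _ _ (Finset.mem_univ i)]
  rcases i with _ | i0
  · -- i = none : σ = -1, region is ZB none ; t = 1
    have ht : t = 1 := h.2
    have hLI := li_aux w wj hdet none (fun i0 h => by cases h)
    have hb : base w wj m t none = 1 := by simp [base, ht]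
    rw [posRegion, if_neg (by rw [sig_none]; norm_num), if_pos (sig_none w wj)]
    apply mem_closure_ZB w wj none hLI (base w wj m t)
    · rintro (_ | r) hr
      · exact absurd rfl hr
      · simpa [base] using h.1 r (by simp)
    · rw [hsplit, hb, one_smul]
  · obtain ⟨ht01, hc0, hbd⟩ := h.2
    have hLI := li_aux w wj hdet (some i0)
      (fun i1 hi1 => by cases hi1; exact hc0)
    have hbnd : ∀ r, r ≠ (some i0 : Option (Fin k)) →
        base w wj m t r ∈ Set.Icc (0:ℝ) 1 := by
      rintro (_ | r) hr
      · simpa [base] using ht01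
      · have : some r ≠ (some i0 : Option (Fin k)) := hr
        simpa [base] using h.1 r this
    by_cases hp : 0 < c w wj i0
    · -- region is ZA (some i0), boundary value 0
      rw [if_pos hp] at hbd
      have hb : base w wj m t (some i0) = 0 := by simpa [base] using hbd
      rw [posRegion, if_pos (by rw [sig_some]; exact Real.sign_of_pos hp)]
      apply mem_closure_ZA w wj (some i0) hLI (base w wj m t) hbnd
      rw [hsplit, hb, zero_smul, zero_add]
    · have hn : c w wj i0 < 0 := lt_of_le_of_ne (not_lt.mp hp) hc0
      rw [if_neg hp] at hbd
      have hb : base w wj m t (some i0) = 1 := by simpa [base] using hbd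
      rw [posRegion, if_neg (by rw [sig_some, Real.sign_of_neg hn]; norm_num),
        if_pos (by rw [sig_some]; exact Real.sign_of_neg hn)]
      apply mem_closure_ZB w wj (some i0) hLI (base w wj m t) hbnd
      rw [hsplit, hb, one_smul]


lemma ZA_mem (i : Option (Fin k)) {x : Fin k → ℝ} (hmem : x ∈ ZA w wj i) :
    ∃ lam : Option (Fin k) → ℝ, (∀ r, r ≠ i → lam r ∈ Set.Ioo (0:ℝ) 1) ∧
      x = ∑ r ∈ Finset.univ.erase i, lam r • vecs w wj r := by
  rw [ZA] at hmem
  split_ifs at hmem with hLI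
  · exact hmem
  · exact absurd hmem (Set.notMem_empty x)

lemma pos_Pt (hdet : (M w).det ≠ 0) {x : Fin k → ℝ} {i : Option (Fin k)}
    (hmem : x ∈ posRegion w wj i) :
    ∃ (m : Fin k → ℝ) (t : ℝ), x = ∑ r, m r • w r ∧ Pt (c w wj) m i t := by
  classical
  rw [posRegion] at hmem
  split_ifs at hmem with h1 h2
  · rcases i with _ | i0
    · rw [sig_none] at h1; norm_num at h1
    · have hp : 0 < c w wj i0 := sign_pos_of w wj h1
      obtain ⟨lam, hlam, hxeq⟩ := ZA_mem w wj _ hmem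
      set Lam : Option (Fin k) → ℝ := fun r => if r = some i0 then 0 else lam r with hLam
      have hxu : x = ∑ r : Option (Fin k), Lam r • vecs w wj r := by
        rw [hLam, sum_univ_ite, zero_smul, zero_add]; exact hxeq
      refine ⟨coeffs w wj Lam, Lam none, by rw [hxu, sum_vecs w wj hdet], ?_, ?_⟩
      · intro r hr
        have h' : coeffs w wj Lam r - Lam none * c w wj r = Lam (some r) := by
          simp [coeffs]
        rw [h', hLam]
        simp only [if_neg hr]
        exact hlam (some r) hr
      · refine ⟨?_, ne_of_gt hp, ?_⟩
        · have h0 : Lam none = lam none := by rw [hLam]; simp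
          rw [h0]; exact hlam none (by simp)
        · have h' : coeffs w wj Lam i0 - Lam none * c w wj i0 = Lam (some i0) := by
            simp [coeffs]
          rw [h', hLam, if_pos hp]
          simp
  · obtain ⟨y, hy, hxy⟩ := hmem
    obtain ⟨lam, hlam, hyeq⟩ := ZA_mem w wj _ hy
    set Lam : Option (Fin k) → ℝ := fun r => if r = i then 1 else lam r with hLam
    have hxu : x = ∑ r : Option (Fin k), Lam r • vecs w wj r := by
      rw [hLam, sum_univ_ite, one_smul, ← hyeq, ← hxy]
    refine ⟨coeffs w wj Lam, Lam none, by rw [hxu, sum_vecs w wj hdet], ?_, ?_⟩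
    · intro r hr
      have h' : coeffs w wj Lam r - Lam none * c w wj r = Lam (some r) := by
        simp [coeffs]
      rw [h', hLam]
      simp only [if_neg hr]
      exact hlam (some r) hr
    · rcases i with _ | i0
      · show Lam none = 1
        rw [hLam]; simp
      · have hn : c w wj i0 < 0 := sign_neg_of w wj h2
        refine ⟨?_, ne_of_lt hn, ?_⟩
        · have h0 : Lam none = lam none := by rw [hLam]; simp
          rw [h0]; exact hlam none (by simp)
        · have h' : coeffs w wj Lam i0 - Lam none * c w wj i0 = Lam (some i0) := by
            simp [coeffs]
          rw [h', hLam, if_neg (not_lt.mpr (le_of_lt hn))]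
          simp
  · exact absurd hmem (Set.notMem_empty x)

lemma pos_subset_zon (i : Option (Fin k)) : posRegion w wj i ⊆ zonotope w wj := by
  classical
  intro x hmem
  rw [posRegion] at hmem
  split_ifs at hmem with h1 h2
  · obtain ⟨lam, hlam, hxeq⟩ := ZA_mem w wj _ hmem
    refine ⟨fun r => if r = i then 0 else lam r, ?_, ?_⟩
    · intro r
      by_cases hr : r = i
      · simp only [if_pos hr, Set.mem_Icc]; exact ⟨le_refl 0, zero_le_one⟩
      · simp only [if_neg hr, Set.mem_Icc]
        exact ⟨le_of_lt (hlam r hr).1, le_of_lt (hlam r hr).2⟩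
    · rw [sum_univ_ite, zero_smul, zero_add]; exact hxeq
  · obtain ⟨y, hy, hxy⟩ := hmem
    obtain ⟨lam, hlam, hyeq⟩ := ZA_mem w wj _ hy
    refine ⟨fun r => if r = i then 1 else lam r, ?_, ?_⟩
    · intro r
      by_cases hr : r = i
      · simp only [if_pos hr, Set.mem_Icc]; exact ⟨zero_le_one, le_refl 1⟩
      · simp only [if_neg hr, Set.mem_Icc]
        exact ⟨le_of_lt (hlam r hr).1, le_of_lt (hlam r hr).2⟩
    · rw [sum_univ_ite, one_smul, ← hyeq, ← hxy]
  · exact absurd hmem (Set.notMem_empty x)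

lemma zon_closed : IsClosed (zonotope w wj) := by
  classical
  have h : zonotope w wj = (fun lam : Option (Fin k) → ℝ =>
      ∑ r : Option (Fin k), lam r • vecs w wj r) ''
      (Set.pi Set.univ fun _ => Set.Icc (0:ℝ) 1) := by
    ext x
    constructor
    · rintro ⟨lam, hlam, rfl⟩; exact ⟨lam, fun r _ => hlam r, rfl⟩
    · rintro ⟨lam, hlam, rfl⟩; exact ⟨lam, fun r => hlam r (Set.mem_univ r), rfl⟩
  rw [h]
  apply IsCompact.isClosed
  apply IsCompact.image
  · exact isCompact_univ_pi fun _ => isCompact_Icc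
  · exact continuous_finset_sum _ fun r _ => (continuous_apply r).smul continuous_const

lemma pos_disjoint (hdet : (M w).det ≠ 0) (i t : Option (Fin k)) (hne : i ≠ t) :
    posRegion w wj i ∩ posRegion w wj t = ∅ := by
  rw [Set.eq_empty_iff_forall_notMem]
  rintro x ⟨h1, h2⟩
  obtain ⟨m1, t1, hx1, hP1⟩ := pos_Pt w wj hdet h1
  obtain ⟨m2, t2, hx2, hP2⟩ := pos_Pt w wj hdet h2
  have hm : m1 = m2 := uniq w hdet (hx1.symm.trans hx2)
  exact Pt_disjoint hP1 (hm ▸ hP2) hne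

lemma pos_union (hk : 1 ≤ k) (hdet : (M w).det ≠ 0) :
    (⋃ i : Option (Fin k), closure (posRegion w wj i)) = zonotope w wj := by
  apply Set.Subset.antisymm
  · exact Set.iUnion_subset fun i =>
      closure_minimal (pos_subset_zon w wj i) (zon_closed w wj)
  · intro x hx
    obtain ⟨lam, hlam, hxeq⟩ := hx
    set m := coeffs w wj lam with hm
    have hxm : x = ∑ r, m r • w r := by rw [hxeq, sum_vecs w wj hdet]
    have hm0 : ∀ r, m r - lam none * c w wj r ∈ Set.Icc (0:ℝ) 1 := by
      intro r
      have h' : m r - lam none * c w wj r = lam (some r) := by simp [hm, coeffs]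
      rw [h']
      exact hlam (some r)
    obtain ⟨i, t, hPtC⟩ := Pt_cover hk (c w wj) m (hlam none) hm0
    exact Set.mem_iUnion.mpr ⟨i, PtC_mem_closure w wj hdet hxm hPtC⟩

noncomputable def ssum : Fin k → ℝ := ∑ r : Option (Fin k), vecs w wj r

lemma refl_ZA (i : Option (Fin k)) :
    (fun x => ssum w wj - x) '' ZA w wj i ⊆ ZB w wj i := by
  classical
  rintro _ ⟨y, hy, rfl⟩
  rw [ZA] at hy
  split_ifs at hy with hLI
  · obtain ⟨lam, hlam, rfl⟩ := hy
    rw [ZB, ZA, if_pos hLI]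
    refine ⟨∑ r ∈ Finset.univ.erase i, (1 - lam r) • vecs w wj r,
      ⟨fun r => 1 - lam r, fun r hr => by
        simp only [Set.mem_Ioo]
        constructor <;> linarith [(hlam r hr).1, (hlam r hr).2], rfl⟩, ?_⟩
    have hs : ssum w wj = vecs w wj i + ∑ r ∈ Finset.univ.erase i, vecs w wj r := by
      rw [ssum, ← Finset.add_sum_erase _ (vecs w wj) (Finset.mem_univ i)]
    rw [hs]
    have hcongr : ∀ r ∈ Finset.univ.erase i, (1 - lam r) • vecs w wj r
        = vecs w wj r - lam r • vecs w wj r := by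
      intro r _; rw [sub_smul, one_smul]
    rw [Finset.sum_congr rfl hcongr, Finset.sum_sub_distrib]
    abel
  · exact absurd hy (Set.notMem_empty y)

lemma refl_ZB (i : Option (Fin k)) :
    (fun x => ssum w wj - x) '' ZB w wj i ⊆ ZA w wj i := by
  classical
  rintro _ ⟨y, ⟨z, hz, rfl⟩, rfl⟩
  rw [ZA] at hz ⊢
  split_ifs at hz ⊢ with hLI
  · obtain ⟨lam, hlam, rfl⟩ := hz
    refine ⟨fun r => 1 - lam r, fun r hr => by
      simp only [Set.mem_Ioo]
      constructor <;> linarith [(hlam r hr).1, (hlam r hr).2], ?_⟩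
    have hs : ssum w wj = vecs w wj i + ∑ r ∈ Finset.univ.erase i, vecs w wj r := by
      rw [ssum, ← Finset.add_sum_erase _ (vecs w wj) (Finset.mem_univ i)]
    rw [hs]
    have hcongr : ∀ r ∈ Finset.univ.erase i, (1 - lam r) • vecs w wj r
        = vecs w wj r - lam r • vecs w wj r := by
      intro r _; rw [sub_smul, one_smul]
    rw [Finset.sum_congr rfl hcongr, Finset.sum_sub_distrib]
    beta_reduce
    abel
  · exact absurd hz (Set.notMem_empty z)

lemma refl_invol (x : Fin k → ℝ) : ssum w wj - (ssum w wj - x) = x := by abel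

lemma refl_ZA_eq (i : Option (Fin k)) :
    (fun x => ssum w wj - x) '' ZA w wj i = ZB w wj i := by
  apply Set.Subset.antisymm (refl_ZA w wj i)
  intro x hx
  exact ⟨ssum w wj - x, refl_ZB w wj i ⟨x, hx, rfl⟩, refl_invol w wj x⟩

lemma refl_ZB_eq (i : Option (Fin k)) :
    (fun x => ssum w wj - x) '' ZB w wj i = ZA w wj i := by
  apply Set.Subset.antisymm (refl_ZB w wj i)
  intro x hx
  exact ⟨ssum w wj - x, refl_ZA w wj i ⟨x, hx, rfl⟩, refl_invol w wj x⟩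

lemma refl_pos (i : Option (Fin k)) :
    (fun x => ssum w wj - x) '' posRegion w wj i = negRegion w wj i := by
  rw [posRegion, negRegion]
  by_cases h1 : sigOf w wj i = 1
  · rw [if_pos h1, if_neg (by rw [h1]; norm_num), if_pos h1]
    exact refl_ZA_eq w wj i
  · by_cases h2 : sigOf w wj i = -1
    · rw [if_neg h1, if_pos h2, if_pos h2]
      exact refl_ZB_eq w wj i
    · rw [if_neg h1, if_neg h2, if_neg h2, if_neg h1, Set.image_empty]

lemma refl_zon :
    (fun x => ssum w wj - x) '' zonotope w wj = zonotope w wj := by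
  classical
  have hsub : (fun x => ssum w wj - x) '' zonotope w wj ⊆ zonotope w wj := by
    rintro _ ⟨y, ⟨lam, hlam, rfl⟩, rfl⟩
    refine ⟨fun r => 1 - lam r, fun r => by
      simp only [Set.mem_Icc]
      constructor <;> linarith [(hlam r).1, (hlam r).2], ?_⟩
    have hs : ssum w wj = ∑ r : Option (Fin k), vecs w wj r := rfl
    rw [hs]
    have hcongr : ∀ r ∈ (Finset.univ : Finset (Option (Fin k))),
        (1 - lam r) • vecs w wj r = vecs w wj r - lam r • vecs w wj r := by
      intro r _; rw [sub_smul, one_smul]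
    rw [Finset.sum_congr rfl hcongr, Finset.sum_sub_distrib]
  apply Set.Subset.antisymm hsub
  intro x hx
  exact ⟨ssum w wj - x, hsub ⟨x, hx, rfl⟩, refl_invol w wj x⟩

noncomputable def reflH : (Fin k → ℝ) ≃ₜ (Fin k → ℝ) :=
  (Homeomorph.neg _).trans (Homeomorph.addLeft (ssum w wj))

lemma reflH_apply (x : Fin k → ℝ) : reflH w wj x = ssum w wj - x := by
  simp [reflH, sub_eq_add_neg]

lemma reflH_coe : ⇑(reflH w wj) = fun x => ssum w wj - x := by
  funext x; exact reflH_apply w wj x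

lemma refl_inj : Function.Injective (fun x : Fin k → ℝ => ssum w wj - x) := by
  intro a b hab
  have h2 := congrArg (fun z => ssum w wj - z) hab
  simpa [refl_invol] using h2

end ZonAux

/-- **The tiling lemma.** The positive regions (`Z_B^i` for `σ_i = −1` together
with `Z_A^i` for `σ_i = +1`) are pairwise disjoint and the union of their
topological closures is the zonotope `Zon(w¹, …, w^k, w^j)`; the same two
assertions hold for the negative regions (`Z_A^i` for `σ_i = −1` together with
`Z_B^i` for `σ_i = +1`). -/
theorem zonotope_tiling (k : ℕ) (hk : 1 ≤ k)
    (w : Fin k → (Fin k → ℝ)) (wj : Fin k → ℝ)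
    (hdet : (Matrix.of fun a l => w l a).det ≠ 0) :
    ((∀ i t : Option (Fin k), i ≠ t → posRegion w wj i ∩ posRegion w wj t = ∅) ∧
      (⋃ i : Option (Fin k), closure (posRegion w wj i)) = zonotope w wj) ∧
    ((∀ i t : Option (Fin k), i ≠ t → negRegion w wj i ∩ negRegion w wj t = ∅) ∧
      (⋃ i : Option (Fin k), closure (negRegion w wj i)) = zonotope w wj) := by
  have hdet' : (ZonAux.M w).det ≠ 0 := hdet
  refine ⟨⟨fun i t hne => ZonAux.pos_disjoint w wj hdet' i t hne,
      ZonAux.pos_union w wj hk hdet'⟩, ?_, ?_⟩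
  · intro i t hne
    rw [← ZonAux.refl_pos w wj i, ← ZonAux.refl_pos w wj t,
      ← Set.image_inter (ZonAux.refl_inj w wj),
      ZonAux.pos_disjoint w wj hdet' i t hne, Set.image_empty]
  · have hneg : ∀ i : Option (Fin k),
        negRegion w wj i = ZonAux.reflH w wj '' posRegion w wj i := by
      intro i
      rw [ZonAux.reflH_coe, ZonAux.refl_pos w wj i]
    calc (⋃ i : Option (Fin k), closure (negRegion w wj i))
        = ⋃ i : Option (Fin k), ZonAux.reflH w wj '' closure (posRegion w wj i) := by
          refine Set.iUnion_congr fun i => ?_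
          rw [hneg i, Homeomorph.image_closure]
      _ = ZonAux.reflH w wj '' ⋃ i : Option (Fin k), closure (posRegion w wj i) := by
          rw [Set.image_iUnion]
      _ = ZonAux.reflH w wj '' zonotope w wj := by rw [ZonAux.pos_union w wj hk hdet']
      _ = zonotope w wj := by rw [ZonAux.reflH_coe, ZonAux.refl_zon w wj]
end

section
/- Let n ≥ 2 and let k be an integer with 1 ≤ k ≤ n−1. For each vertex v of 𝒫_{k,n}, writing A = {i : v_i = 1} and B = {i : v_i = 0}, define P_v(x) = (∏_{i∈A} x_i) · (∏_{i∈B} (1−x_i)) · (k − ∑_{i∈A} x_i). Then for every x ∈ 𝒫_{k,n}, the vector identity ∑_v P_v(x)·(v − x) = 0 holds in ℝ^n, where the sum is over all vertices v of 𝒫_{k,n}. The same identity holds when the factor (k − ∑_{i∈A} x_i) in P_v is replaced by ∑_{i∈B} x_i. -/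
/-!
Write `π_S(A) = ∏_{i∈A} x i · ∏_{i∈S∖A} (1 - x i)`. Since `k - ∑_{i∈A} x i = ∑_{i∉A} x i`,
the two identities coincide. Fix a coordinate `j` and split the `k`-sets `A` according to whether
`j ∈ A`; both parts carry the factor `x j (1 - x j)`, and they cancel because of the exchange rule
`π_S(B) · x i = π_S(B ∪ {i}) · (1 - x i)` for `i ∈ S ∖ B`. Summed over all pairs, it turns
`∑_{|B|=k-1} π_S(B) ∑_{i∈S∖B} x i` into `∑_{|A|=k} π_S(A) ∑_{i∈A} (1 - x i)`, and with
`S = univ ∖ {j}` the last inner sum is `k - ∑_{i∈A} x i = x j + ∑_{i∈S∖A} x i`.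
-/

open Finset

namespace Finset

variable {ι M : Type*} [DecidableEq ι] [AddCommMonoid M]

theorem sum_powersetCard_succ_insert {j : ι} {S : Finset ι} (hj : j ∉ S) (k : ℕ)
    (f : Finset ι → M) :
    ∑ A ∈ (insert j S).powersetCard (k + 1), f A =
      ∑ A ∈ S.powersetCard (k + 1), f A + ∑ B ∈ S.powersetCard k, f (insert j B) := by
  have hjB : ∀ B ∈ S.powersetCard k, j ∉ B := fun B hB h => hj ((mem_powersetCard.1 hB).1 h)
  rw [powersetCard_succ_insert hj, sum_union, sum_image]
  · intro B hB C hC hBC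
    rw [← erase_insert (hjB B hB), hBC, erase_insert (hjB C hC)]
  · refine disjoint_left.2 fun A hA hA' => ?_
    obtain ⟨B, -, rfl⟩ := mem_image.1 hA'
    exact hj ((mem_powersetCard.1 hA).1 (mem_insert_self j B))

theorem sum_powersetCard_sum_sdiff_insert (S : Finset ι) (k : ℕ) (f : Finset ι → ι → M) :
    ∑ B ∈ S.powersetCard k, ∑ i ∈ S \ B, f (insert i B) i =
      ∑ A ∈ S.powersetCard (k + 1), ∑ i ∈ A, f A i := by
  rw [sum_sigma', sum_sigma']
  refine sum_nbij' (fun p => ⟨insert p.2 p.1, p.2⟩) (fun p => ⟨p.1.erase p.2, p.2⟩)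
    ?_ ?_ ?_ ?_ (fun _ _ => rfl)
  · rintro ⟨B, i⟩ hp
    simp only [mem_sigma, mem_powersetCard, mem_sdiff] at hp ⊢
    obtain ⟨⟨hBS, rfl⟩, hiS, hiB⟩ := hp
    exact ⟨⟨insert_subset hiS hBS, card_insert_of_notMem hiB⟩, mem_insert_self i B⟩
  · rintro ⟨A, i⟩ hp
    simp only [mem_sigma, mem_powersetCard, mem_sdiff] at hp ⊢
    obtain ⟨⟨hAS, hAk⟩, hiA⟩ := hp
    exact ⟨⟨(erase_subset i A).trans hAS, by rw [card_erase_of_mem hiA, hAk]; rfl⟩, hAS hiA,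
      notMem_erase i A⟩
  · rintro ⟨B, i⟩ hp
    simp only [mem_sigma, mem_sdiff] at hp
    simp [erase_insert hp.2.2]
  · rintro ⟨A, i⟩ hp
    simp only [mem_sigma] at hp
    simp [insert_erase hp.2]

end Finset

section PoissonWeight

variable {ι : Type*} [DecidableEq ι] (x : ι → ℝ)

def poissonWeight (S A : Finset ι) : ℝ := (∏ i ∈ A, x i) * ∏ i ∈ S \ A, (1 - x i)

variable {x}

theorem poissonWeight_mul_of_mem_sdiff {S B : Finset ι} {i : ι} (hi : i ∈ S \ B) :
    poissonWeight x S B * x i = poissonWeight x S (insert i B) * (1 - x i) := by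
  obtain ⟨-, hiB⟩ := mem_sdiff.1 hi
  rw [poissonWeight, poissonWeight, prod_insert hiB, sdiff_insert, ← mul_prod_erase _ _ hi]
  ring

theorem poissonWeight_insert_insert {S B : Finset ι} {j : ι} (hjS : j ∉ S) (hjB : j ∉ B) :
    poissonWeight x (insert j S) (insert j B) = x j * poissonWeight x S B := by
  rw [poissonWeight, poissonWeight, prod_insert hjB, insert_sdiff_insert,
    sdiff_insert_of_notMem hjS, mul_assoc]

theorem poissonWeight_insert_of_notMem {S A : Finset ι} {j : ι} (hjS : j ∉ S) (hjA : j ∉ A) :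
    poissonWeight x (insert j S) A = (1 - x j) * poissonWeight x S A := by
  rw [poissonWeight, poissonWeight, insert_sdiff_of_notMem _ hjA,
    prod_insert (fun h => hjS (mem_sdiff.1 h).1)]
  ring

theorem sum_powersetCard_poissonWeight_mul_sum_sdiff (S : Finset ι) (k : ℕ) :
    ∑ B ∈ S.powersetCard k, poissonWeight x S B * ∑ i ∈ S \ B, x i =
      ∑ A ∈ S.powersetCard (k + 1), poissonWeight x S A * ∑ i ∈ A, (1 - x i) := by
  simp only [mul_sum]
  rw [← sum_powersetCard_sum_sdiff_insert]
  exact sum_congr rfl fun B _ => sum_congr rfl fun i hi => poissonWeight_mul_of_mem_sdiff hi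

theorem sum_powersetCard_insert_poissonWeight_mul_indicator_sub_eq_zero {S : Finset ι} {j : ι}
    (hj : j ∉ S) {k : ℕ} (hx : ∑ i ∈ insert j S, x i = k + 1) :
    ∑ A ∈ (insert j S).powersetCard (k + 1),
      (poissonWeight x (insert j S) A * ∑ i ∈ insert j S \ A, x i) *
        ((if j ∈ A then 1 else 0) - x j) = 0 := by
  have hjS : ∀ A ⊆ S, j ∉ A := fun A hA h => hj (hA h)
  rw [sum_insert hj] at hx
  have hdouble : ∑ B ∈ S.powersetCard k, poissonWeight x S B * ∑ i ∈ S \ B, x i =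
      ∑ A ∈ S.powersetCard (k + 1), poissonWeight x S A * (x j + ∑ i ∈ S \ A, x i) := by
    rw [sum_powersetCard_poissonWeight_mul_sum_sdiff]
    refine sum_congr rfl fun A hA => ?_
    obtain ⟨hAS, hAk⟩ := mem_powersetCard.1 hA
    rw [sum_sdiff_eq_sub hAS, sum_sub_distrib, sum_const, hAk, nsmul_eq_mul, mul_one]
    congr 1
    push_cast
    linarith
  calc _ = ∑ A ∈ S.powersetCard (k + 1),
          -(x j * (1 - x j)) * (poissonWeight x S A * (x j + ∑ i ∈ S \ A, x i)) +
        ∑ B ∈ S.powersetCard k, x j * (1 - x j) * (poissonWeight x S B * ∑ i ∈ S \ B, x i) := by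
        rw [sum_powersetCard_succ_insert hj]
        congr 1 <;> refine sum_congr rfl fun A hA => ?_ <;>
          have hjA := hjS A (mem_powersetCard.1 hA).1
        · rw [poissonWeight_insert_of_notMem hj hjA, insert_sdiff_of_notMem _ hjA,
            sum_insert fun h => hj (mem_sdiff.1 h).1, if_neg hjA]
          ring
        · rw [poissonWeight_insert_insert hj hjA, insert_sdiff_insert,
            sdiff_insert_of_notMem hj, if_pos (mem_insert_self j A)]
          ring
    _ = 0 := by
        rw [← mul_sum, ← mul_sum, hdouble]
        ring

theorem sum_powersetCard_poissonWeight_smul_indicator_sub_eq_zero [Fintype ι] {k : ℕ}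
    (hx : ∑ i, x i = k + 1) :
    ∑ A ∈ univ.powersetCard (k + 1), (poissonWeight x univ A * ∑ i ∈ univ \ A, x i) •
      ((fun i => if i ∈ A then (1 : ℝ) else 0) - x) = 0 := by
  funext j
  simp only [Finset.sum_apply, Pi.smul_apply, Pi.sub_apply, smul_eq_mul, Pi.zero_apply]
  rw [← insert_erase (mem_univ j)] at hx ⊢
  exact sum_powersetCard_insert_poissonWeight_mul_indicator_sub_eq_zero (notMem_erase j univ) hx

end PoissonWeight

theorem sampford_identities_general (n k : ℕ) (hk1 : 1 ≤ k)
    (x : Fin n → ℝ)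
    (hxsum : ∑ i, x i = (k : ℝ)) :
    (∑ A ∈ Finset.powersetCard k (Finset.univ : Finset (Fin n)),
        ((∏ i ∈ A, x i) * (∏ i ∈ Aᶜ, (1 - x i)) * ((k : ℝ) - ∑ i ∈ A, x i)) •
          ((fun i => if i ∈ A then (1 : ℝ) else 0) - x) = (0 : Fin n → ℝ)) ∧
    (∑ A ∈ Finset.powersetCard k (Finset.univ : Finset (Fin n)),
        ((∏ i ∈ A, x i) * (∏ i ∈ Aᶜ, (1 - x i)) * (∑ i ∈ Aᶜ, x i)) •
          ((fun i => if i ∈ A then (1 : ℝ) else 0) - x) = (0 : Fin n → ℝ)) := by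
  obtain ⟨m, rfl⟩ := Nat.exists_eq_add_of_le' hk1
  have hcompl : ∀ A : Finset (Fin n), ((m + 1 : ℕ) : ℝ) - ∑ i ∈ A, x i = ∑ i ∈ Aᶜ, x i := by
    intro A
    rw [← hxsum, ← sum_add_sum_compl A x, add_sub_cancel_left]
  have hsampford := sum_powersetCard_poissonWeight_smul_indicator_sub_eq_zero
    (k := m) (by exact_mod_cast hxsum)
  simp only [poissonWeight, ← compl_eq_univ_sdiff] at hsampford
  simp only [hcompl]
  exact ⟨hsampford, hsampford⟩

/-- **The Sampford-sampling identities for the k-subset polytope.** Let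
`1 ≤ k ≤ n − 1` with `n ≥ 2`. Identify each vertex of
`𝒫_{k,n} = {x ∈ [0,1]ⁿ : ∑ i, x i = k}` with the set `A` of its `k` coordinates
equal to `1` (its indicator vector being `i ↦ if i ∈ A then 1 else 0`), and set
`P_A(x) = (∏_{i∈A} x i) (∏_{i∉A} (1 − x i)) (k − ∑_{i∈A} x i)`. Then for every
`x ∈ 𝒫_{k,n}`, `∑_A P_A(x) · (v_A − x) = 0` in `ℝⁿ`, where the sum ranges over all
vertices; and the same identity holds when the factor `k − ∑_{i∈A} x i` is
replaced by `∑_{i∉A} x i`. -/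
theorem sampford_identities (n k : ℕ) (hn : 2 ≤ n) (hk1 : 1 ≤ k) (hk2 : k ≤ n - 1)
    (x : Fin n → ℝ) (hx01 : ∀ i, x i ∈ Set.Icc (0 : ℝ) 1)
    (hxsum : ∑ i, x i = (k : ℝ)) :
    (∑ A ∈ Finset.powersetCard k (Finset.univ : Finset (Fin n)),
        ((∏ i ∈ A, x i) * (∏ i ∈ Aᶜ, (1 - x i)) * ((k : ℝ) - ∑ i ∈ A, x i)) •
          ((fun i => if i ∈ A then (1 : ℝ) else 0) - x) = (0 : Fin n → ℝ)) ∧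
    (∑ A ∈ Finset.powersetCard k (Finset.univ : Finset (Fin n)),
        ((∏ i ∈ A, x i) * (∏ i ∈ Aᶜ, (1 - x i)) * (∑ i ∈ Aᶜ, x i)) •
          ((fun i => if i ∈ A then (1 : ℝ) else 0) - x) = (0 : Fin n → ℝ)) :=
  sampford_identities_general n k hk1 x hxsum
end

section
/- Let n and k be integers with 1 < k < n−1, and let v ∈ {0,1}^n be a vertex of 𝒫_{k,n} (a 0/1 vector with exactly k ones). Let Q be a Bernstein polynomial in n variables such that Q(x) = 0 for every x ∈ 𝒫_{k,n} for which there exists an index i with (v_i = 1 and x_i = 0) or (v_i = 0 and x_i = 1). Then Q is divisible, in the polynomial ring ℝ[x_1,…,x_n], by ∏_{i : v_i = 1} x_i · ∏_{i : v_i = 0} (1 − x_i). -/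
open Finset

/-- `P` is a Bernstein polynomial in `n` variables: a finite sum, with strictly
positive real coefficients, of Bernstein monomials `∏ i, Xᵢ^{aᵢ} (1 − Xᵢ)^{bᵢ}`. -/
def IsBernstein {n : ℕ} (P : MvPolynomial (Fin n) ℝ) : Prop :=
  ∃ (m : ℕ) (c : Fin m → ℝ) (a b : Fin m → Fin n → ℕ),
    (∀ s, 0 < c s) ∧
    P = ∑ s, MvPolynomial.C (c s) *
      ∏ i, MvPolynomial.X i ^ a s i * (1 - MvPolynomial.X i) ^ b s i

/-- **Forced divisibility for strong factories on the k-subset polytope.** Let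
`1 < k < n − 1` and let `v` be a vertex of `𝒫_{k,n} = {x ∈ [0,1]ⁿ : ∑ᵢ xᵢ = k}`,
identified with the set `A` of its `k` coordinates equal to `1`. If a Bernstein
polynomial `Q` vanishes at every `x ∈ 𝒫_{k,n}` having some coordinate `i` with
(`v i = 1` and `x i = 0`) or (`v i = 0` and `x i = 1`), then `Q` is divisible in
`ℝ[x₁,…,xₙ]` by `∏_{i : v i = 1} Xᵢ · ∏_{i : v i = 0} (1 − Xᵢ)`. -/
theorem bernstein_divisibility (n k : ℕ) (hk1 : 1 < k) (hk2 : k < n - 1)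
    (A : Finset (Fin n)) (hA : A.card = k)
    (Q : MvPolynomial (Fin n) ℝ) (hQB : IsBernstein Q)
    (hvanish : ∀ x : Fin n → ℝ, (∀ i, x i ∈ Set.Icc (0 : ℝ) 1) →
      (∑ i, x i = (k : ℝ)) →
      (∃ i, (i ∈ A ∧ x i = 0) ∨ (i ∉ A ∧ x i = 1)) →
      MvPolynomial.eval x Q = 0) :
    ((∏ i ∈ A, MvPolynomial.X i) *
        ∏ i ∈ Aᶜ, (1 - MvPolynomial.X i : MvPolynomial (Fin n) ℝ)) ∣ Q := by
  obtain ⟨m, c, a, b, hc, rfl⟩ := hQB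
  have hnk : k + 2 ≤ n := by omega
  have hnr : (k : ℝ) + 2 ≤ n := by exact_mod_cast hnk
  have hkr : (2 : ℝ) ≤ k := by exact_mod_cast hk1
  have hnpos : (0 : ℝ) < (n : ℝ) - 1 := by linarith
  have hcastn : ((n - 1 : ℕ) : ℝ) = (n : ℝ) - 1 := by
    rw [Nat.cast_sub (by omega)]; norm_num
  -- each Bernstein term vanishes at any vanishing point
  have vanish_term : ∀ (x : Fin n → ℝ), (∀ i, x i ∈ Set.Icc (0:ℝ) 1) →
      (∑ i, x i = (k : ℝ)) →
      (∃ i, (i ∈ A ∧ x i = 0) ∨ (i ∉ A ∧ x i = 1)) →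
      ∀ s : Fin m, (∏ i, x i ^ a s i * (1 - x i) ^ b s i) = 0 := by
    intro x hx hs hex s
    have h0 := hvanish _ hx hs hex
    simp only [map_sum, map_mul, MvPolynomial.eval_prod, MvPolynomial.eval_C, map_pow,
      MvPolynomial.eval_X, map_sub, map_one] at h0
    have hnn : ∀ t ∈ (univ : Finset (Fin m)),
        0 ≤ c t * ∏ i, x i ^ a t i * (1 - x i) ^ b t i := by
      intro t _
      refine mul_nonneg (hc t).le (Finset.prod_nonneg fun i _ => ?_)
      exact mul_nonneg (pow_nonneg (hx i).1 _) (pow_nonneg (by linarith [(hx i).2]) _)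
    have h1 := (Finset.sum_eq_zero_iff_of_nonneg hnn).1 h0 s (mem_univ s)
    exact (mul_eq_zero.1 h1).resolve_left (hc s).ne'
  have key : ∀ s : Fin m, (∀ i ∈ A, 1 ≤ a s i) ∧ (∀ i ∈ Aᶜ, 1 ≤ b s i) := by
    intro s
    constructor
    · intro i0 hi0
      by_contra h
      have ha0 : a s i0 = 0 := by omega
      set t : ℝ := (k : ℝ) / ((n : ℝ) - 1) with ht
      have ht0 : 0 < t := div_pos (by linarith) hnpos
      have ht1 : t < 1 := (div_lt_one hnpos).2 (by linarith)
      set x : Fin n → ℝ := fun i => if i = i0 then 0 else t with hxdef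
      have hxval : ∀ i, x i = if i = i0 then 0 else t := fun i => rfl
      have hx : ∀ i, x i ∈ Set.Icc (0:ℝ) 1 := by
        intro i
        by_cases hi : i = i0 <;> simp [hxdef, hi] <;> constructor <;> linarith
      have hsum : ∑ i, x i = (k : ℝ) := by
        rw [← Finset.add_sum_erase _ _ (mem_univ i0)]
        have : ∀ j ∈ univ.erase i0, x j = t := by
          intro j hj
          simp [hxdef, (Finset.mem_erase.1 hj).1]
        rw [Finset.sum_congr rfl this, Finset.sum_const, Finset.card_erase_of_mem (mem_univ i0)]
        simp only [hxdef, if_pos rfl, Finset.card_univ, Fintype.card_fin, nsmul_eq_mul, hcastn]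
        rw [ht]
        field_simp
        ring
      have hz := vanish_term x hx hsum ⟨i0, Or.inl ⟨hi0, by simp [hxdef]⟩⟩ s
      rw [Finset.prod_eq_zero_iff] at hz
      obtain ⟨j, -, hj⟩ := hz
      rcases mul_eq_zero.1 hj with hj | hj
      · obtain ⟨hj0, hj1⟩ := pow_eq_zero_iff'.1 hj
        by_cases hji : j = i0
        · exact hj1 (hji ▸ ha0)
        · rw [hxval j, if_neg hji] at hj0; linarith
      · obtain ⟨hj0, -⟩ := pow_eq_zero_iff'.1 hj
        by_cases hji : j = i0
        · rw [hxval j, if_pos hji] at hj0; norm_num at hj0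
        · rw [hxval j, if_neg hji] at hj0; linarith
    · intro i0 hi0
      rw [Finset.mem_compl] at hi0
      by_contra h
      have hb0 : b s i0 = 0 := by omega
      set t : ℝ := ((k : ℝ) - 1) / ((n : ℝ) - 1) with ht
      have ht0 : 0 < t := div_pos (by linarith) hnpos
      have ht1 : t < 1 := (div_lt_one hnpos).2 (by linarith)
      set x : Fin n → ℝ := fun i => if i = i0 then 1 else t with hxdef
      have hxval : ∀ i, x i = if i = i0 then 1 else t := fun i => rfl
      have hx : ∀ i, x i ∈ Set.Icc (0:ℝ) 1 := by
        intro i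
        by_cases hi : i = i0 <;> simp [hxdef, hi] <;> constructor <;> linarith
      have hsum : ∑ i, x i = (k : ℝ) := by
        rw [← Finset.add_sum_erase _ _ (mem_univ i0)]
        have : ∀ j ∈ univ.erase i0, x j = t := by
          intro j hj
          simp [hxdef, (Finset.mem_erase.1 hj).1]
        rw [Finset.sum_congr rfl this, Finset.sum_const, Finset.card_erase_of_mem (mem_univ i0)]
        simp only [hxdef, if_pos rfl, Finset.card_univ, Fintype.card_fin, nsmul_eq_mul, hcastn]
        rw [ht]
        field_simp
        ring
      have hz := vanish_term x hx hsum ⟨i0, Or.inr ⟨hi0, by simp [hxdef]⟩⟩ s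
      rw [Finset.prod_eq_zero_iff] at hz
      obtain ⟨j, -, hj⟩ := hz
      rcases mul_eq_zero.1 hj with hj | hj
      · obtain ⟨hj0, -⟩ := pow_eq_zero_iff'.1 hj
        by_cases hji : j = i0
        · rw [hxval j, if_pos hji] at hj0; norm_num at hj0
        · rw [hxval j, if_neg hji] at hj0; linarith
      · obtain ⟨hj0, hj1⟩ := pow_eq_zero_iff'.1 hj
        by_cases hji : j = i0
        · exact hj1 (hji ▸ hb0)
        · rw [hxval j, if_neg hji] at hj0; linarith
  refine Finset.dvd_sum fun s _ => Dvd.dvd.mul_left ?_ _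
  obtain ⟨h1, h2⟩ := key s
  rw [← Finset.prod_mul_prod_compl A
      (fun i => MvPolynomial.X i ^ a s i * (1 - MvPolynomial.X i) ^ b s i)]
  exact mul_dvd_mul
    (Finset.prod_dvd_prod_of_dvd _ _ fun i hi =>
      Dvd.dvd.mul_right (dvd_pow_self _ (by have := h1 i hi; omega)) _)
    (Finset.prod_dvd_prod_of_dvd _ _ fun i hi =>
      Dvd.dvd.mul_left (dvd_pow_self _ (by have := h2 i hi; omega)) _)
end

section
/- Let 𝒫 ⊆ [0,1]^n be a polytope, let ℋ_0(𝒫) = {p − q : p, q ∈ affineSpan(𝒫)} be the direction space of its affine span, and suppose ℋ_0(𝒫) ≠ {0} and that ω := min_{u∈ℋ_0(𝒫), ‖u‖=1} (max_{p∈𝒫} ⟨u,p⟩ − min_{p∈𝒫} ⟨u,p⟩) > 0. Let Q be a Bernstein polynomial in n variables of total degree at most d such that Q(x) ≤ ε for all x ∈ 𝒫. Then for every u ∈ ℋ_0(𝒫) with ‖u‖ = 1 and every x ∈ 𝒫, the directional derivative satisfies |∂_u Q(x)| ≤ 2 d² ε / ω. -/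
/-!
Along the chord from `x` to any `y ∈ 𝒫`, `Q` restricts to a univariate polynomial of degree at
most `d` with values in `[0, ε]` (Bernstein monomials are nonnegative on the cube), so Markov's
inequality at an endpoint of `[-1, 1]` bounds the derivative of `Q` at `x` in the direction
`y - x` by `d² ε`. Let `G ∈ ℋ₀(𝒫)` represent this derivative on `ℋ₀(𝒫)`. In the direction of `G`
the polytope has width at least `ω`, so some `y ∈ 𝒫` has `|⟪G / ‖G‖, y - x⟫| ≥ ω / 2`; hence
`‖G‖ ≤ 2 d² ε / ω`, and `|∂ᵤ Q(x)| = |⟪G, u⟫| ≤ ‖G‖`.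
-/

open Finset

open Polynomial Set
open scoped InnerProductSpace

theorem IsBernstein.eval_nonneg {n : ℕ} {Q : MvPolynomial (Fin n) ℝ} (hQ : IsBernstein Q)
    {z : Fin n → ℝ} (hz : ∀ i, z i ∈ Icc (0 : ℝ) 1) : 0 ≤ MvPolynomial.eval z Q := by
  obtain ⟨m, c, a, b, hc, rfl⟩ := hQ
  simp only [map_sum, map_mul, map_prod, map_pow, map_sub, map_one, MvPolynomial.eval_C,
    MvPolynomial.eval_X]
  exact Finset.sum_nonneg fun s _ => mul_nonneg (hc s).le <| Finset.prod_nonneg fun i _ =>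
    mul_nonneg (pow_nonneg (hz i).1 _) (pow_nonneg (sub_nonneg.2 (hz i).2) _)

theorem Polynomial.abs_derivative_eval_one_le_of_forall_abs_le {p : ℝ[X]} {n : ℕ}
    (hp : p.natDegree ≤ n) {M : ℝ} (hM : ∀ t ∈ Icc (-1 : ℝ) 1, |p.eval t| ≤ M) :
    |p.derivative.eval 1| ≤ n ^ 2 * M := by
  have hM0 : 0 ≤ M := (abs_nonneg _).trans (hM 0 ⟨by norm_num, by norm_num⟩)
  rcases hM0.eq_or_lt with rfl | hMpos
  · have : p = 0 := p.eq_zero_of_infinite_isRoot <|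
      (Icc_infinite (by norm_num : (-1 : ℝ) < 1)).mono fun t ht => abs_nonpos_iff.1 (hM t ht)
    simp [this]
  -- After scaling by `M⁻¹`, this is the extremality of `T n` among polynomials bounded by `1`.
  have one_sided : ∀ q : ℝ[X], q.natDegree ≤ n →
      (∀ t ∈ Icc (-1 : ℝ) 1, |q.eval t| ≤ M) → q.derivative.eval 1 ≤ n ^ 2 * M := by
    intro q hq hqM
    have h := Chebyshev.eval_iterate_derivative_le_of_forall_abs_le_one (k := 1) le_rfl
      (P := C M⁻¹ * q) (natDegree_le_iff_degree_le.1 ((natDegree_C_mul_le _ _).trans hq))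
      fun t ht => by
        rw [eval_mul, eval_C, abs_mul, abs_of_pos (inv_pos.2 hMpos), inv_mul_le_iff₀ hMpos,
          mul_one]
        exact hqM t ht
    simp only [Function.iterate_one, derivative_C_mul, eval_mul, eval_C,
      Chebyshev.derivative_T_eval_one, Int.cast_natCast] at h
    rwa [inv_mul_le_iff₀ hMpos, mul_comm] at h
  rw [abs_le, ← neg_le, ← eval_neg, ← derivative_neg]
  exact ⟨one_sided (-p) (by rwa [natDegree_neg]) (by simpa using hM), one_sided p hp hM⟩

namespace MvPolynomial

variable {ι : Type*}

noncomputable def lineRestriction (Q : MvPolynomial ι ℝ) (a v : EuclideanSpace ℝ ι) :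
    ℝ[X] :=
  aeval (fun i => Polynomial.C (v i) * Polynomial.X + Polynomial.C (a i)) Q

theorem natDegree_aeval_le_totalDegree {σ R : Type*} [CommSemiring R] (f : σ → R[X])
    (hf : ∀ i, (f i).natDegree ≤ 1) (Q : MvPolynomial σ R) :
    (aeval f Q).natDegree ≤ Q.totalDegree := by
  rw [aeval_def, eval₂_eq]
  refine natDegree_sum_le_of_forall_le _ _ fun m hm => ?_
  rw [Polynomial.algebraMap_eq]
  refine (natDegree_C_mul_le _ _).trans <| (natDegree_prod_le _ _).trans ?_
  calc ∑ i ∈ m.support, (f i ^ m i).natDegree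
      ≤ ∑ i ∈ m.support, m i := Finset.sum_le_sum fun i _ => by
        simpa using natDegree_pow_le_of_le (m i) (hf i)
    _ ≤ Q.totalDegree := le_totalDegree hm

theorem natDegree_lineRestriction_le (Q : MvPolynomial ι ℝ) (a v : EuclideanSpace ℝ ι) :
    (lineRestriction Q a v).natDegree ≤ Q.totalDegree :=
  natDegree_aeval_le_totalDegree _ (fun _ => natDegree_linear_le) Q

theorem eval_lineRestriction (Q : MvPolynomial ι ℝ) (a v : EuclideanSpace ℝ ι) (t : ℝ) :
    (lineRestriction Q a v).eval t = eval (fun i => (a + t • v) i) Q := by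
  rw [← Polynomial.coe_aeval_eq_eval, lineRestriction, comp_aeval_apply, aeval_eq_eval]
  congr 2
  funext i
  simp only [Polynomial.coe_aeval_eq_eval, Polynomial.eval_add, Polynomial.eval_mul,
    Polynomial.eval_C, Polynomial.eval_X, PiLp.add_apply, PiLp.smul_apply, smul_eq_mul]
  ring

theorem derivative_lineRestriction_eval [Fintype ι] (Q : MvPolynomial ι ℝ)
    (a v : EuclideanSpace ℝ ι) (t : ℝ) :
    (lineRestriction Q a v).derivative.eval t =
      fderiv ℝ (fun y : EuclideanSpace ℝ ι => eval (fun i => y i) Q) (a + t • v) v := by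
  have hF : DifferentiableAt ℝ (fun y : EuclideanSpace ℝ ι => eval (fun i => y i) Q)
      (a + t • v) :=
    (AnalyticOnNhd.eval_continuousLinearMap' (𝕜 := ℝ) (EuclideanSpace.proj (ι := ι)) Q _
      (mem_univ _)).differentiableAt
  have hline : HasDerivAt (fun s : ℝ => a + s • v) v t := by
    simpa using ((hasDerivAt_id t).smul_const v).const_add a
  refine ((lineRestriction Q a v).hasDerivAt t).unique ?_
  simpa only [Function.comp_def, eval_lineRestriction] using
    hF.hasFDerivAt.comp_hasDerivAt t hline

end MvPolynomial

theorem abs_fderiv_eval_sub_le {ι : Type*} [Fintype ι] {P : Set (EuclideanSpace ℝ ι)}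
    (hP : Convex ℝ P) {Q : MvPolynomial ι ℝ} {d : ℕ} (hdeg : Q.totalDegree ≤ d) {ε : ℝ}
    (hQ : ∀ z ∈ P, MvPolynomial.eval (fun i => z i) Q ∈ Icc 0 ε)
    {x y : EuclideanSpace ℝ ι} (hx : x ∈ P) (hy : y ∈ P) :
    |fderiv ℝ (fun z : EuclideanSpace ℝ ι => MvPolynomial.eval (fun i => z i) Q) x (y - x)| ≤
      d ^ 2 * ε := by
  set a : EuclideanSpace ℝ ι := (1 / 2 : ℝ) • (x + y)
  set v : EuclideanSpace ℝ ι := (1 / 2 : ℝ) • (x - y)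
  have hseg : ∀ t ∈ Icc (-1 : ℝ) 1, a + t • v ∈ P := fun t ht => by
    convert hP hx hy (show (0 : ℝ) ≤ (1 + t) / 2 by linarith [ht.1])
      (show (0 : ℝ) ≤ (1 - t) / 2 by linarith [ht.2]) (by ring) using 1
    module
  -- Shifting by `ε / 2` centres the values `[0, ε]` of `Q` on the chord in `[-ε / 2, ε / 2]`.
  have hmarkov := abs_derivative_eval_one_le_of_forall_abs_le
    (p := Q.lineRestriction a v - C (ε / 2)) (n := d) (M := ε / 2)
    (natDegree_sub_C.trans_le ((Q.natDegree_lineRestriction_le a v).trans hdeg)) fun t ht => by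
      obtain ⟨h0, hε⟩ := hQ _ (hseg t ht)
      rw [eval_sub, eval_C, MvPolynomial.eval_lineRestriction, abs_le]
      constructor <;> linarith
  rw [derivative_sub, derivative_C, sub_zero, MvPolynomial.derivative_lineRestriction_eval,
    one_smul, show a + v = x by module] at hmarkov
  rw [show y - x = (-2 : ℝ) • v by module, map_smul, smul_eq_mul, abs_mul, abs_neg, abs_two]
  linarith

section Width

variable {E : Type*} [NormedAddCommGroup E] [InnerProductSpace ℝ E]

noncomputable def directionalWidth (P : Set E) (e : E) : ℝ :=
  sSup ((fun p => ⟪e, p⟫_ℝ) '' P) - sInf ((fun p => ⟪e, p⟫_ℝ) '' P)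

theorem exists_half_directionalWidth_le_abs_inner_sub {P : Set E} (hP : IsCompact P) {x : E}
    (hx : x ∈ P) (e : E) : ∃ y ∈ P, directionalWidth P e / 2 ≤ |⟪e, y - x⟫_ℝ| := by
  have hcont : ContinuousOn (fun p => ⟪e, p⟫_ℝ) P :=
    (continuous_const.inner continuous_id).continuousOn
  obtain ⟨ymax, hymax, hsup⟩ := hP.exists_sSup_image_eq ⟨x, hx⟩ hcont
  obtain ⟨ymin, hymin, hinf⟩ := hP.exists_sInf_image_eq ⟨x, hx⟩ hcont
  have hbdd := hP.image_of_continuousOn hcont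
  have hx_le : ⟪e, x⟫_ℝ ≤ ⟪e, ymax⟫_ℝ :=
    hsup ▸ le_csSup hbdd.bddAbove (mem_image_of_mem _ hx)
  have le_hx : ⟪e, ymin⟫_ℝ ≤ ⟪e, x⟫_ℝ :=
    hinf ▸ csInf_le hbdd.bddBelow (mem_image_of_mem _ hx)
  rw [directionalWidth, hsup, hinf]
  by_cases hfar : ⟪e, ymax⟫_ℝ - ⟪e, ymin⟫_ℝ ≤ 2 * (⟪e, ymax⟫_ℝ - ⟪e, x⟫_ℝ)
  · exact ⟨ymax, hymax, by rw [inner_sub_right, abs_of_nonneg (by linarith)]; linarith⟩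
  · exact ⟨ymin, hymin, by rw [inner_sub_right, abs_of_nonpos (by linarith)]; linarith⟩

theorem abs_apply_le_of_forall_abs_apply_sub_le [FiniteDimensional ℝ E] {P : Set E}
    (hP : IsCompact P) {x : E} (hx : x ∈ P) (L : E →L[ℝ] ℝ) {K : ℝ}
    (hK : ∀ y ∈ P, |L (y - x)| ≤ K) {ω : ℝ} (hω : 0 < ω)
    (hwidth : ∀ e ∈ (affineSpan ℝ P).direction, ‖e‖ = 1 → ω ≤ directionalWidth P e)
    {u : E} (hu : u ∈ (affineSpan ℝ P).direction) : |L u| ≤ 2 * K / ω * ‖u‖ := by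
  set W := (affineSpan ℝ P).direction
  -- The Riesz representative of `L` on `W`, i.e. the gradient of `L` along `W`.
  set G : W := (InnerProductSpace.toDual ℝ W).symm (L ∘L W.subtypeL)
  have hG : ∀ v ∈ W, L v = ⟪(G : E), v⟫_ℝ := fun v hv =>
    (InnerProductSpace.toDual_symm_apply (𝕜 := ℝ) (x := (⟨v, hv⟩ : W))
      (y := L ∘L W.subtypeL)).symm
  have hGnorm : ‖(G : E)‖ * ω ≤ 2 * K := by
    by_cases hG0 : (G : E) = 0
    · simpa [hG0] using hK x hx
    set e := ‖(G : E)‖⁻¹ • (G : E)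
    have he1 : ‖e‖ = 1 := by
      rw [norm_smul, norm_inv, norm_norm, inv_mul_cancel₀ (norm_ne_zero_iff.2 hG0)]
    obtain ⟨y, hy, hfar⟩ := exists_half_directionalWidth_le_abs_inner_sub hP hx e
    have hyx : y - x ∈ W :=
      AffineSubspace.vsub_mem_direction (subset_affineSpan ℝ P hy) (subset_affineSpan ℝ P hx)
    rw [real_inner_smul_left, ← hG _ hyx, abs_mul, abs_inv, abs_norm] at hfar
    calc ‖(G : E)‖ * ω ≤ ‖(G : E)‖ * (2 * (‖(G : E)‖⁻¹ * |L (y - x)|)) := by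
          gcongr
          linarith [hwidth e (W.smul_mem _ G.2) he1]
      _ = 2 * |L (y - x)| := by field_simp
      _ ≤ 2 * K := by linarith [hK y hy]
  calc |L u| = |⟪(G : E), u⟫_ℝ| := by rw [hG u hu]
    _ ≤ ‖(G : E)‖ * ‖u‖ := abs_real_inner_le_norm _ _
    _ ≤ 2 * K / ω * ‖u‖ := by
      gcongr
      rwa [le_div_iff₀ hω]

end Width

theorem bernstein_directional_derivative_bound_general (n : ℕ)
    (V : Finset (EuclideanSpace ℝ (Fin n)))
    (P : Set (EuclideanSpace ℝ (Fin n)))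
    (hP : P = convexHull ℝ (V : Set (EuclideanSpace ℝ (Fin n))))
    (hcube : ∀ x ∈ P, ∀ i, x i ∈ Set.Icc (0 : ℝ) 1)
    (ω : ℝ) (hωpos : 0 < ω)
    (hω : IsLeast {r : ℝ | ∃ u : EuclideanSpace ℝ (Fin n),
        u ∈ (affineSpan ℝ P).direction ∧ ‖u‖ = 1 ∧
        r = sSup ((fun p => (inner ℝ u p : ℝ)) '' P) -
          sInf ((fun p => (inner ℝ u p : ℝ)) '' P)} ω)
    (d : ℕ) (ε : ℝ) (Q : MvPolynomial (Fin n) ℝ) (hQB : IsBernstein Q)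
    (hdeg : Q.totalDegree ≤ d)
    (hQε : ∀ x ∈ P, MvPolynomial.eval (fun i => x i) Q ≤ ε)
    (u : EuclideanSpace ℝ (Fin n)) (hu : u ∈ (affineSpan ℝ P).direction)
    (hu1 : ‖u‖ = 1)
    (x : EuclideanSpace ℝ (Fin n)) (hx : x ∈ P) :
    |fderiv ℝ (fun y : EuclideanSpace ℝ (Fin n) =>
        MvPolynomial.eval (fun i => y i) Q) x u| ≤ 2 * d ^ 2 * ε / ω := by
  have hQ : ∀ y ∈ P, MvPolynomial.eval (fun i => y i) Q ∈ Icc 0 ε := fun y hy =>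
    ⟨hQB.eval_nonneg (hcube y hy), hQε y hy⟩
  have hchord : ∀ y ∈ P, |fderiv ℝ (fun y : EuclideanSpace ℝ (Fin n) =>
      MvPolynomial.eval (fun i => y i) Q) x (y - x)| ≤ d ^ 2 * ε := fun y hy =>
    abs_fderiv_eval_sub_le (hP ▸ convex_convexHull ℝ _) hdeg hQ hx hy
  have hcompact : IsCompact P := hP ▸ V.finite_toSet.isCompact_convexHull (𝕜 := ℝ)
  have := abs_apply_le_of_forall_abs_apply_sub_le hcompact hx _ hchord hωpos
    (fun e he he1 => hω.2 ⟨e, he, he1, rfl⟩) hu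
  rwa [hu1, mul_one, ← mul_assoc] at this

/-- **A Markov-brothers-type bound for Bernstein polynomials on a polytope**
(after Wilhelmsen). Let `𝒫 = conv(V) ⊆ [0,1]ⁿ` be a polytope whose affine span has
nontrivial direction space `ℋ₀(𝒫)`, and let `ω > 0` be the minimum width of `𝒫`
over unit directions `u ∈ ℋ₀(𝒫)`, where the width in direction `u` is
`sup_{p∈𝒫} ⟨u,p⟩ − inf_{p∈𝒫} ⟨u,p⟩`. If `Q` is a Bernstein polynomial of total
degree at most `d` with `Q(x) ≤ ε` on `𝒫`, then for every unit `u ∈ ℋ₀(𝒫)` and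
every `x ∈ 𝒫`, the directional derivative satisfies `|∂ᵤQ(x)| ≤ 2 d² ε / ω`. -/
theorem bernstein_directional_derivative_bound (n : ℕ)
    (V : Finset (EuclideanSpace ℝ (Fin n))) (hV : V.Nonempty)
    (P : Set (EuclideanSpace ℝ (Fin n)))
    (hP : P = convexHull ℝ (V : Set (EuclideanSpace ℝ (Fin n))))
    (hcube : ∀ x ∈ P, ∀ i, x i ∈ Set.Icc (0 : ℝ) 1)
    (hdir : (affineSpan ℝ P).direction ≠ ⊥)
    (ω : ℝ) (hωpos : 0 < ω)
    (hω : IsLeast {r : ℝ | ∃ u : EuclideanSpace ℝ (Fin n),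
        u ∈ (affineSpan ℝ P).direction ∧ ‖u‖ = 1 ∧
        r = sSup ((fun p => (inner ℝ u p : ℝ)) '' P) -
          sInf ((fun p => (inner ℝ u p : ℝ)) '' P)} ω)
    (d : ℕ) (ε : ℝ) (Q : MvPolynomial (Fin n) ℝ) (hQB : IsBernstein Q)
    (hdeg : Q.totalDegree ≤ d)
    (hQε : ∀ x ∈ P, MvPolynomial.eval (fun i => x i) Q ≤ ε)
    (u : EuclideanSpace ℝ (Fin n)) (hu : u ∈ (affineSpan ℝ P).direction)
    (hu1 : ‖u‖ = 1)
    (x : EuclideanSpace ℝ (Fin n)) (hx : x ∈ P) :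
    |fderiv ℝ (fun y : EuclideanSpace ℝ (Fin n) =>
        MvPolynomial.eval (fun i => y i) Q) x u| ≤ 2 * d ^ 2 * ε / ω :=
  bernstein_directional_derivative_bound_general n V P hP hcube ω hωpos hω d ε Q hQB hdeg hQε u hu
    hu1 x hx
end
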